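/- arXiv:1902.04796 — 10 statements merged into one kernel-verified Lean document; each statement's English description precedes it below -/
import Mathlib

section
/- Under the stated hypotheses, the self-energy matrix Σ := A − G⁻¹ is sparse: Σ_{ij} = 0 whenever i > p or j > p. Equivalently, A − G⁻¹ = [[Σ_p, 0],[0, 0]] for some symmetric p×p matrix Σ_p. -/
open MeasureTheory Matrix Real

/-!
Fix a column `j ≥ p`. Along the coordinate `x_j` the potential `U` is constant and the weight is
the Gaussian `exp (-(A j j / 2) x_j² - …)` with `A j j > 0`, so integrating by parts in `x_j` gives
Stein's identity `∫ x_i (A x)_j ρ = δ_ij ∫ ρ`, i.e. `(G A) i j = δ_ij`. Since `G` is positive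
definite, column `j` of `A` is column `j` of `G⁻¹`; the rows follow because `A - G⁻¹` is symmetric.
-/

lemma integrable_pow_mul_exp_neg_quadratic {c : ℝ} (hc : 0 < c) (s e : ℝ) (k : ℕ) :
    Integrable fun t : ℝ => t ^ k * exp (-(c / 2) * t ^ 2 - s * t - e) := by
  have hgauss : Integrable fun t : ℝ => t ^ k * exp (-(c / 4) * t ^ 2) := by
    simpa [Real.rpow_natCast] using
      integrable_rpow_mul_exp_neg_mul_sq (b := c / 4) (by positivity) (s := k)
        (by linarith [k.cast_nonneg (α := ℝ)])
  -- Half of the Gaussian weight dominates the linear term: `-(c/4) t² - s t ≤ s² / c`.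
  have hbound : ∀ t : ℝ, ‖exp (-(c / 4) * t ^ 2 - s * t - e)‖ ≤ exp (s ^ 2 / c - e) := by
    intro t
    rw [norm_of_nonneg (exp_pos _).le, exp_le_exp, sub_le_sub_iff_right, le_div_iff₀ hc]
    nlinarith [sq_nonneg (c * t / 2 + s)]
  refine (hgauss.mul_bdd (by fun_prop) (Filter.Eventually.of_forall hbound)).congr
    (Filter.Eventually.of_forall fun t => ?_)
  simp only [mul_assoc, ← exp_add]
  congr 2
  ring

open Polynomial in
lemma integrable_eval_mul_exp_neg_quadratic {c : ℝ} (hc : 0 < c) (s e : ℝ) (P : ℝ[X]) :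
    Integrable fun t : ℝ => P.eval t * exp (-(c / 2) * t ^ 2 - s * t - e) := by
  induction P using Polynomial.induction_on' with
  | add P Q hP hQ =>
    refine (hP.add hQ).congr (Filter.Eventually.of_forall fun t => ?_)
    simp only [eval_add, add_mul, Pi.add_apply]
  | monomial k a =>
    simpa [mul_assoc] using (integrable_pow_mul_exp_neg_quadratic hc s e k).const_mul a

open Polynomial in
/-- The integrand is the derivative of `(a + b t) * exp (-(c / 2) * t ^ 2 - s * t - e)`. -/
lemma integral_deriv_affine_mul_exp_neg_quadratic {c : ℝ} (hc : 0 < c) (s e a b : ℝ) :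
    ∫ t : ℝ, (b - (a + b * t) * (c * t + s)) * exp (-(c / 2) * t ^ 2 - s * t - e) = 0 := by
  refine integral_eq_zero_of_hasDerivAt_of_integrable
    (f := fun t => (a + b * t) * exp (-(c / 2) * t ^ 2 - s * t - e)) (fun t => ?_) ?_ ?_
  · have hq : HasDerivAt (fun t : ℝ => -(c / 2) * t ^ 2 - s * t - e) (-(c * t + s)) t :=
      ((((hasDerivAt_pow 2 t).const_mul (-(c / 2))).sub
        ((hasDerivAt_id t).const_mul s)).sub_const e).congr_deriv (by norm_num; ring)
    exact ((((hasDerivAt_id t).const_mul b).const_add a).mul hq.exp).congr_deriv (by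
      simp only [mul_one, id_eq]
      ring)
  · have := integrable_eval_mul_exp_neg_quadratic hc s e (C b - (C a + C b * X) * (C c * X + C s))
    simp only [eval_add, eval_C, eval_mul, eval_X, eval_sub] at this
    exact this
  · have := integrable_eval_mul_exp_neg_quadratic hc s e (C a + C b * X)
    simp only [eval_add, eval_C, eval_mul, eval_X] at this
    exact this

lemma integral_eq_zero_of_forall_integral_update_eq_zero {n : ℕ} {E : Type*}
    [NormedAddCommGroup E] [NormedSpace ℝ E] {f : (Fin n → ℝ) → E} (hf : Integrable f)
    (j : Fin n) (h : ∀ x, ∫ t : ℝ, f (Function.update x j t) = 0) :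
    ∫ x, f x = 0 := by
  obtain ⟨m, rfl⟩ := Nat.exists_eq_add_one_of_ne_zero j.pos.ne'
  let e := MeasurableEquiv.piFinSuccAbove (fun _ : Fin (m + 1) => ℝ) j
  have he := (volume_preserving_piFinSuccAbove (fun _ : Fin (m + 1) => ℝ) j).symm e
  have hfe : Integrable (fun z => f (e.symm z)) (volume.prod volume) :=
    (he.integrable_comp_emb e.symm.measurableEmbedding).mpr hf
  rw [← he.integral_comp' f, Measure.volume_eq_prod, integral_prod_symm _ hfe]
  refine integral_eq_zero_of_ae (Filter.Eventually.of_forall fun y => ?_)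
  have hy := h (Fin.insertNth j 0 y)
  simp only [Fin.update_insertNth] at hy
  exact hy

lemma update_eq_update_zero_add_single {ι M : Type*} [DecidableEq ι] [AddZeroClass M]
    (x : ι → M) (j : ι) (t : M) :
    Function.update x j t = Function.update x j 0 + Pi.single j t := by
  ext k
  by_cases hk : k = j
  · subst hk; simp
  · simp [hk]

section Line

variable {ι R : Type*} [Fintype ι] [DecidableEq ι] [CommRing R]

lemma mulVec_add_single_apply (A : Matrix ι ι R) (u : ι → R) (j k : ι) (t : R) :
    (A *ᵥ (u + Pi.single j t)) k = (A *ᵥ u) k + A k j * t := by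
  simp [mulVec_add, mul_comm]

lemma dotProduct_mulVec_add_single {A : Matrix ι ι R} (hA : A.IsSymm) (u : ι → R) (j : ι)
    (t : R) :
    (u + Pi.single j t) ⬝ᵥ A *ᵥ (u + Pi.single j t) =
      u ⬝ᵥ A *ᵥ u + 2 * (A *ᵥ u) j * t + A j j * t ^ 2 := by
  have hsymm : u ⬝ᵥ A *ᵥ Pi.single j t = t * (A *ᵥ u) j := by
    rw [dotProduct_mulVec, ← mulVec_transpose, hA.eq, dotProduct_comm, single_dotProduct]
  rw [add_dotProduct, single_dotProduct, mulVec_add_single_apply, mulVec_add, dotProduct_add,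
    hsymm]
  ring

end Line

section SecondMoment

variable {ι : Type*} [Fintype ι]

noncomputable def secondMomentMatrix (ρ : (ι → ℝ) → ℝ) : Matrix ι ι ℝ :=
  Matrix.of fun i k => ∫ x, x i * x k * ρ x

lemma mul_mulVec_apply_mul_eq_sum (A : Matrix ι ι ℝ) (ρ : (ι → ℝ) → ℝ) (x : ι → ℝ) (i j : ι) :
    x i * (A *ᵥ x) j * ρ x = ∑ k, A j k * (x i * x k * ρ x) := by
  simp only [mulVec, dotProduct, Finset.mul_sum, Finset.sum_mul]
  exact Finset.sum_congr rfl fun k _ => by ring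

lemma integrable_mul_mulVec_apply_mul {ρ : (ι → ℝ) → ℝ}
    (hmom : ∀ i k, Integrable fun x => x i * x k * ρ x) (A : Matrix ι ι ℝ) (i j : ι) :
    Integrable fun x => x i * (A *ᵥ x) j * ρ x := by
  simp_rw [mul_mulVec_apply_mul_eq_sum]
  exact integrable_finsetSum _ fun k _ => (hmom i k).const_mul _

lemma integral_mul_mulVec_apply_mul {ρ : (ι → ℝ) → ℝ}
    (hmom : ∀ i k, Integrable fun x => x i * x k * ρ x) (A : Matrix ι ι ℝ) (i j : ι) :
    ∫ x, x i * (A *ᵥ x) j * ρ x = (secondMomentMatrix ρ * Aᵀ) i j := by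
  simp_rw [mul_mulVec_apply_mul_eq_sum, integral_finsetSum _ fun k _ => (hmom i k).const_mul _,
    integral_const_mul, mul_apply, secondMomentMatrix, transpose_apply, of_apply, mul_comm]

lemma sq_dotProduct_mul_eq_sum (ρ : (ι → ℝ) → ℝ) (v x : ι → ℝ) :
    (v ⬝ᵥ x) ^ 2 * ρ x = ∑ i, ∑ k, v i * v k * (x i * x k * ρ x) := by
  rw [sq, dotProduct, Finset.sum_mul_sum, Finset.sum_mul]
  exact Finset.sum_congr rfl fun i _ => by
    rw [Finset.sum_mul]
    exact Finset.sum_congr rfl fun k _ => by ring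

lemma integrable_sq_dotProduct_mul {ρ : (ι → ℝ) → ℝ}
    (hmom : ∀ i k, Integrable fun x => x i * x k * ρ x) (v : ι → ℝ) :
    Integrable fun x => (v ⬝ᵥ x) ^ 2 * ρ x := by
  simp_rw [sq_dotProduct_mul_eq_sum]
  exact integrable_finsetSum _ fun i _ =>
    integrable_finsetSum _ fun k _ => (hmom i k).const_mul _

lemma integral_sq_dotProduct_mul {ρ : (ι → ℝ) → ℝ}
    (hmom : ∀ i k, Integrable fun x => x i * x k * ρ x) (v : ι → ℝ) :
    ∫ x, (v ⬝ᵥ x) ^ 2 * ρ x = v ⬝ᵥ secondMomentMatrix ρ *ᵥ v := by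
  simp_rw [sq_dotProduct_mul_eq_sum]
  rw [integral_finsetSum _ fun i _ => integrable_finsetSum _ fun k _ => (hmom i k).const_mul _]
  simp_rw [integral_finsetSum _ fun k _ => (hmom _ k).const_mul _, integral_const_mul]
  simp only [dotProduct, mulVec, secondMomentMatrix, of_apply, Finset.mul_sum]
  exact Finset.sum_congr rfl fun i _ => Finset.sum_congr rfl fun k _ => by ring

lemma posDef_secondMomentMatrix {ρ : (ι → ℝ) → ℝ} (hρ : ∀ x, 0 < ρ x)
    (hmom : ∀ i k, Integrable fun x => x i * x k * ρ x) : (secondMomentMatrix ρ).PosDef := by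
  refine .of_dotProduct_mulVec_pos ?_ fun v hv => ?_
  · ext i k
    simp only [conjTranspose_apply, star_trivial, secondMomentMatrix, of_apply]
    congr 1 with x
    ring
  rw [star_trivial, ← integral_sq_dotProduct_mul hmom]
  refine (integral_nonneg fun x => mul_nonneg (sq_nonneg _) (hρ x).le).lt_of_ne fun h0 => hv ?_
  have hae := (integral_eq_zero_iff_of_nonneg (fun x => mul_nonneg (sq_nonneg _) (hρ x).le)
    (integrable_sq_dotProduct_mul hmom v)).mp h0.symm
  have hvx : (fun x => v ⬝ᵥ x) = 0 :=
    (Continuous.ae_eq_iff_eq volume (by fun_prop) continuous_zero).mp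
      (hae.mono fun x hx => by simpa [(hρ x).ne'] using hx)
  simpa using congrFun hvx v

end SecondMoment

noncomputable def gibbsDensity {ι : Type*} [Fintype ι] (A : Matrix ι ι ℝ) (U : (ι → ℝ) → ℝ)
    (x : ι → ℝ) : ℝ :=
  exp (-(1 / 2) * (x ⬝ᵥ A *ᵥ x) - U x)

lemma integral_mul_mulVec_apply_mul_gibbsDensity {n : ℕ} {A : Matrix (Fin n) (Fin n) ℝ}
    (hA : A.IsSymm) {U : (Fin n → ℝ) → ℝ} {j : Fin n} (hAjj : 0 < A j j)
    (hU : ∀ x t, U (Function.update x j t) = U x) (hZint : Integrable (gibbsDensity A U))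
    (i : Fin n) (hint : Integrable fun x => x i * (A *ᵥ x) j * gibbsDensity A U x) :
    ∫ x, x i * (A *ᵥ x) j * gibbsDensity A U x =
      if i = j then ∫ x, gibbsDensity A U x else 0 := by
  have hline : ∫ x, ((if i = j then 1 else 0) * gibbsDensity A U x -
      x i * (A *ᵥ x) j * gibbsDensity A U x) = 0 := by
    refine integral_eq_zero_of_forall_integral_update_eq_zero ((hZint.const_mul _).sub hint) j
      fun x => ?_
    obtain ⟨u, hu⟩ : ∃ u, Function.update x j 0 = u := ⟨_, rfl⟩
    have hρ : ∀ t, gibbsDensity A U (Function.update x j t) =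
        exp (-(A j j / 2) * t ^ 2 - (A *ᵥ u) j * t - (1 / 2 * (u ⬝ᵥ A *ᵥ u) + U x)) := by
      intro t
      rw [gibbsDensity, hU, update_eq_update_zero_add_single, hu, dotProduct_mulVec_add_single hA]
      congr 1
      ring
    have hmv : ∀ t, (A *ᵥ Function.update x j t) j = A j j * t + (A *ᵥ u) j := by
      intro t
      rw [update_eq_update_zero_add_single, hu, mulVec_add_single_apply]
      ring
    have hcoord : ∀ t, Function.update x j t i =
        (if i = j then 0 else x i) + (if i = j then 1 else 0) * t := by
      intro t
      by_cases h : i = j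
      · subst h; simp
      · simp [h]
    simp_rw [← sub_mul, hρ, hmv, hcoord]
    exact integral_deriv_affine_mul_exp_neg_quadratic hAjj _ _ _ _
  rw [integral_sub (hZint.const_mul _) hint, integral_const_mul, sub_eq_zero] at hline
  rw [← hline]
  split_ifs <;> simp

lemma secondMomentMatrix_gibbsDensity_mul_apply {n : ℕ} {A : Matrix (Fin n) (Fin n) ℝ}
    (hA : A.IsSymm) {U : (Fin n → ℝ) → ℝ} {j : Fin n} (hAjj : 0 < A j j)
    (hU : ∀ x t, U (Function.update x j t) = U x) (hZint : Integrable (gibbsDensity A U))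
    (hmom : ∀ i k, Integrable fun x => x i * x k * gibbsDensity A U x) (i : Fin n) :
    (secondMomentMatrix (gibbsDensity A U) * A) i j =
      if i = j then ∫ x, gibbsDensity A U x else 0 := by
  rw [← integral_mul_mulVec_apply_mul_gibbsDensity hA hAjj hU hZint i
    (integrable_mul_mulVec_apply_mul hmom A i j), integral_mul_mulVec_apply_mul hmom, hA.eq]

lemma apply_eq_nonsing_inv_apply_of_mul_apply_eq_one {n α : Type*} [Fintype n]
    [DecidableEq n] [CommRing α] {G A : Matrix n n α} (hG : IsUnit G) {j : n}
    (h : ∀ k, (G * A) k j = (1 : Matrix n n α) k j) (i : n) : A i j = G⁻¹ i j := by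
  calc A i j = (G⁻¹ * (G * A)) i j := by
        rw [nonsing_inv_mul_cancel_left G A ((isUnit_iff_isUnit_det G).mp hG)]
    _ = (G⁻¹ * (1 : Matrix n n α)) i j := by rw [mul_apply, mul_apply]; simp only [h]
    _ = G⁻¹ i j := by rw [Matrix.mul_one]

theorem classical_self_energy_sparsity_general
    (d p : ℕ)
    (A : Matrix (Fin d) (Fin d) ℝ) (hA : A.IsSymm)
    (hA22 : ∀ v : Fin d → ℝ, (∀ i : Fin d, (i : ℕ) < p → v i = 0) → v ≠ 0 →
      0 < v ⬝ᵥ A.mulVec v)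
    (U : (Fin d → ℝ) → ℝ)
    (hU : ∀ x y : Fin d → ℝ, (∀ i : Fin d, (i : ℕ) < p → x i = y i) → U x = U y)
    (hZint : Integrable (fun x : Fin d → ℝ =>
      Real.exp (-(1/2) * (x ⬝ᵥ A.mulVec x) - U x)))
    (hmom : ∀ i j : Fin d, Integrable (fun x : Fin d → ℝ =>
      x i * x j * Real.exp (-(1/2) * (x ⬝ᵥ A.mulVec x) - U x)))
    (Z : ℝ)
    (hZdef : Z = ∫ x : Fin d → ℝ, Real.exp (-(1/2) * (x ⬝ᵥ A.mulVec x) - U x))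
    (G : Matrix (Fin d) (Fin d) ℝ)
    (hGdef : ∀ i j : Fin d, G i j = (1 / Z) * ∫ x : Fin d → ℝ,
      x i * x j * Real.exp (-(1/2) * (x ⬝ᵥ A.mulVec x) - U x)) :
    ∀ i j : Fin d, (p ≤ (i : ℕ) ∨ p ≤ (j : ℕ)) → (A - G⁻¹) i j = 0 := by
  have hZ : 0 < Z := hZdef ▸ integral_exp_pos hZint
  have hZρ : ∫ x, gibbsDensity A U x = Z := hZdef.symm
  have hG : G = Z⁻¹ • secondMomentMatrix (gibbsDensity A U) := by
    ext i k
    simp [hGdef, secondMomentMatrix, gibbsDensity]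
  have hGpd : G.PosDef :=
    hG ▸ (posDef_secondMomentMatrix (fun x => exp_pos _) hmom).smul (inv_pos.mpr hZ)
  have hcol : ∀ i j : Fin d, p ≤ (j : ℕ) → A i j = G⁻¹ i j := by
    intro i j hj
    have hAjj : 0 < A j j := by
      simpa using hA22 (Pi.single j 1)
        (fun k hk => Pi.single_eq_of_ne (Fin.ne_of_val_ne (by omega)) _) (by simp)
    have hUj : ∀ x t, U (Function.update x j t) = U x := fun x t =>
      hU _ _ fun k hk => Function.update_of_ne (Fin.ne_of_val_ne (by omega)) _ _
    refine apply_eq_nonsing_inv_apply_of_mul_apply_eq_one hGpd.isUnit (fun k => ?_) i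
    rw [hG, Matrix.smul_mul, Matrix.smul_apply,
      secondMomentMatrix_gibbsDensity_mul_apply hA hAjj hUj hZint hmom, one_apply, hZρ]
    split_ifs <;> simp [hZ.ne']
  rintro i j (hi | hj)
  · have hsymm : (A - G⁻¹)ᵀ = A - G⁻¹ := by
      rw [transpose_sub, hA.eq, transpose_nonsing_inv,
        ← conjTranspose_eq_transpose_of_trivial, hGpd.isHermitian.eq]
    rw [← hsymm, transpose_apply]
    exact sub_eq_zero.mpr (hcol j i hi)
  · exact sub_eq_zero.mpr (hcol i j hj)

/-- **Sparsity of the classical self-energy (Proposition 1.1).**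
For a Gibbs measure with Hamiltonian `½ xᵀAx + U(x)` where `U` depends only on the
first `p` coordinates and the lower-right block of `A` is positive definite, the
self-energy `Σ = A − G⁻¹` vanishes outside the upper-left `p × p` block. -/
theorem classical_self_energy_sparsity
    (d p : ℕ) (hd : 0 < d) (hp : p ≤ d)
    (A : Matrix (Fin d) (Fin d) ℝ) (hA : A.IsSymm)
    (hA22 : ∀ v : Fin d → ℝ, (∀ i : Fin d, (i : ℕ) < p → v i = 0) → v ≠ 0 →
      0 < v ⬝ᵥ A.mulVec v)
    (U : (Fin d → ℝ) → ℝ) (hUmeas : Measurable U)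
    (hU : ∀ x y : Fin d → ℝ, (∀ i : Fin d, (i : ℕ) < p → x i = y i) → U x = U y)
    (hZint : Integrable (fun x : Fin d → ℝ =>
      Real.exp (-(1/2) * (x ⬝ᵥ A.mulVec x) - U x)))
    (hmom : ∀ i j : Fin d, Integrable (fun x : Fin d → ℝ =>
      x i * x j * Real.exp (-(1/2) * (x ⬝ᵥ A.mulVec x) - U x)))
    (Z : ℝ)
    (hZdef : Z = ∫ x : Fin d → ℝ, Real.exp (-(1/2) * (x ⬝ᵥ A.mulVec x) - U x))
    (G : Matrix (Fin d) (Fin d) ℝ)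
    (hGdef : ∀ i j : Fin d, G i j = (1 / Z) * ∫ x : Fin d → ℝ,
      x i * x j * Real.exp (-(1/2) * (x ⬝ᵥ A.mulVec x) - U x)) :
    ∀ i j : Fin d, (p ≤ (i : ℕ) ∨ p ≤ (j : ℕ)) → (A - G⁻¹) i j = 0 :=
  classical_self_energy_sparsity_general d p A hA hA22 U hU hZint hmom Z hZdef G hGdef
end

section
/- Under the stated hypotheses, the upper-right p×(d−p) block of the matrix product G·A vanishes: (GA)_{12} = 0. -/
/-!
Write `w(x) = exp (-½ xᵀAx - U x)`. For `j ≥ p` the potential `U` is constant along the lines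
`x + t eⱼ`, so there `w` is a Gaussian in `t` and, `A` being symmetric, `∂ⱼ w = -(Ax)ⱼ w`.
Since `(GA)ᵢⱼ = Z⁻¹ ∫ xᵢ (Ax)ⱼ w`, integrating by parts along `eⱼ` moves the derivative onto
`xᵢ`, which does not depend on `xⱼ` when `i < p ≤ j`.
-/

open MeasureTheory Matrix Real

section

variable {ι : Type*} [Fintype ι]

noncomputable def gibbsWeight (A : Matrix ι ι ℝ) (U : (ι → ℝ) → ℝ) (x : ι → ℝ) : ℝ :=
  exp (-(1 / 2) * (x ⬝ᵥ A *ᵥ x) - U x)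

lemma Matrix.IsSymm.dotProduct_mulVec_add_smul {A : Matrix ι ι ℝ} (hA : A.IsSymm)
    (x v : ι → ℝ) (t : ℝ) :
    (x + t • v) ⬝ᵥ A *ᵥ (x + t • v)
      = x ⬝ᵥ A *ᵥ x + 2 * t * (v ⬝ᵥ A *ᵥ x) + t ^ 2 * (v ⬝ᵥ A *ᵥ v) := by
  have hsymm : x ⬝ᵥ A *ᵥ v = v ⬝ᵥ A *ᵥ x := by
    rw [dotProduct_mulVec, ← hA.eq, vecMul_transpose, dotProduct_comm, hA.eq]
  simp only [add_dotProduct, dotProduct_add, mulVec_add, mulVec_smul, smul_dotProduct,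
    dotProduct_smul, smul_eq_mul, hsymm]
  ring

lemma Matrix.IsSymm.hasLineDerivAt_dotProduct_mulVec {A : Matrix ι ι ℝ} (hA : A.IsSymm)
    (x v : ι → ℝ) :
    HasLineDerivAt ℝ (fun y => y ⬝ᵥ A *ᵥ y) (2 * (v ⬝ᵥ A *ᵥ x)) x v := by
  simp only [HasLineDerivAt, hA.dotProduct_mulVec_add_smul]
  exact ((((hasDerivAt_id (0 : ℝ)).const_mul 2).mul_const _).const_add _).add
    ((hasDerivAt_pow 2 (0 : ℝ)).mul_const _) |>.congr_deriv (by simp)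

lemma hasLineDerivAt_gibbsWeight {A : Matrix ι ι ℝ} (hA : A.IsSymm) {U : (ι → ℝ) → ℝ}
    {x v : ι → ℝ} (hU : ∀ t : ℝ, U (x + t • v) = U x) :
    HasLineDerivAt ℝ (gibbsWeight A U) (-(v ⬝ᵥ A *ᵥ x) * gibbsWeight A U x) x v := by
  have hexp := (((hA.hasLineDerivAt_dotProduct_mulVec x v).const_mul (-(1 / 2))).sub_const
    (U x)).exp
  unfold HasLineDerivAt gibbsWeight
  simp only [hU]
  refine hexp.congr_deriv ?_
  simp only [zero_smul, add_zero]
  ring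

theorem integral_apply_mul_dotProduct_mulVec_mul_gibbsWeight_eq_zero {A : Matrix ι ι ℝ}
    (hA : A.IsSymm) {U : (ι → ℝ) → ℝ} {v : ι → ℝ} (hU : ∀ x (t : ℝ), U (x + t • v) = U x)
    {i : ι} (hvi : v i = 0)
    (hxw : Integrable (fun x => x i * gibbsWeight A U x))
    (hxAxw : Integrable (fun x => x i * (v ⬝ᵥ A *ᵥ x) * gibbsWeight A U x)) :
    ∫ x, x i * (v ⬝ᵥ A *ᵥ x) * gibbsWeight A U x = 0 := by
  have hcoord (x : ι → ℝ) : HasLineDerivAt ℝ (fun y : ι → ℝ => y i) 0 x v := by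
    simpa [HasLineDerivAt, hvi] using hasDerivAt_const (0 : ℝ) (x i)
  have hibp := integral_bilinear_hasLineDerivAt_right_eq_neg_left_of_integrable
    (μ := volume) (B := ContinuousLinearMap.mul ℝ ℝ) (f' := fun _ => 0)
    (g' := fun x => -(v ⬝ᵥ A *ᵥ x) * gibbsWeight A U x)
    (by simp) (by simpa [mul_assoc] using hxAxw.neg) hxw (fun x _ => hcoord x)
    (fun x _ => hasLineDerivAt_gibbsWeight hA (hU x))
  simpa [mul_assoc, integral_neg] using hibp

lemma integrable_mul_of_integrable_sq_mul {α : Type*} [MeasurableSpace α] {μ : Measure α}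
    {f g : α → ℝ} (hf : AEStronglyMeasurable f μ) (hg0 : 0 ≤ g) (hg : Integrable g μ)
    (hf2g : Integrable (fun x => f x ^ 2 * g x) μ) : Integrable (fun x => f x * g x) μ := by
  refine (hf2g.add hg).mono' (hf.mul hg.aestronglyMeasurable) (ae_of_all _ fun x => ?_)
  have habs : |f x| ≤ f x ^ 2 + 1 := by nlinarith [sq_abs (f x), sq_nonneg (|f x| - 1)]
  rw [norm_mul, Real.norm_eq_abs, Real.norm_of_nonneg (hg0 x)]
  show |f x| * g x ≤ f x ^ 2 * g x + g x
  nlinarith [mul_le_mul_of_nonneg_right habs (hg0 x)]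

variable {μ : Measure (ι → ℝ)} {ρ : (ι → ℝ) → ℝ}

lemma apply_mul_vecMul_apply_mul_eq_sum (A : Matrix ι ι ℝ) (x : ι → ℝ) (i j : ι) :
    x i * (x ᵥ* A) j * ρ x = ∑ k, x i * x k * ρ x * A k j := by
  rw [vecMul, dotProduct, Finset.mul_sum, Finset.sum_mul]
  exact Finset.sum_congr rfl fun k _ => by ring

lemma integrable_apply_mul_vecMul_apply_mul (A : Matrix ι ι ℝ)
    (hmom : ∀ i k, Integrable (fun x => x i * x k * ρ x) μ) (i j : ι) :
    Integrable (fun x => x i * (x ᵥ* A) j * ρ x) μ := by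
  simp only [apply_mul_vecMul_apply_mul_eq_sum]
  exact integrable_finsetSum _ fun k _ => (hmom i k).mul_const _

lemma mul_apply_eq_integral_apply_mul_vecMul_apply_mul {G A : Matrix ι ι ℝ} {c : ℝ}
    (hmom : ∀ i k, Integrable (fun x => x i * x k * ρ x) μ)
    (hG : ∀ i k, G i k = c * ∫ x, x i * x k * ρ x ∂μ) (i j : ι) :
    (G * A) i j = c * ∫ x, x i * (x ᵥ* A) j * ρ x ∂μ := by
  simp only [apply_mul_vecMul_apply_mul_eq_sum]
  rw [integral_finsetSum _ fun k _ => (hmom i k).mul_const _, Finset.mul_sum, mul_apply]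
  refine Finset.sum_congr rfl fun k _ => ?_
  rw [hG, integral_mul_const, mul_assoc]

end

theorem GA_upper_right_block_vanishes_general
    (d p : ℕ)
    (A : Matrix (Fin d) (Fin d) ℝ) (hA : A.IsSymm)
    (U : (Fin d → ℝ) → ℝ)
    (hU : ∀ x y : Fin d → ℝ, (∀ i : Fin d, (i : ℕ) < p → x i = y i) → U x = U y)
    (hZint : Integrable (fun x : Fin d → ℝ =>
      Real.exp (-(1/2) * (x ⬝ᵥ A.mulVec x) - U x)))
    (hmom : ∀ i j : Fin d, Integrable (fun x : Fin d → ℝ =>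
      x i * x j * Real.exp (-(1/2) * (x ⬝ᵥ A.mulVec x) - U x)))
    (Z : ℝ)
    (G : Matrix (Fin d) (Fin d) ℝ)
    (hGdef : ∀ i j : Fin d, G i j = (1 / Z) * ∫ x : Fin d → ℝ,
      x i * x j * Real.exp (-(1/2) * (x ⬝ᵥ A.mulVec x) - U x)) :
    ∀ i j : Fin d, (i : ℕ) < p → p ≤ (j : ℕ) → (G * A) i j = 0 := by
  intro i j hi hj
  have hUj (x : Fin d → ℝ) (t : ℝ) : U (x + t • Pi.single j 1) = U x :=
    hU _ _ fun k hk => by simp [Pi.single_eq_of_ne (Fin.ne_of_val_ne (by omega) : k ≠ j)]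
  have hji : (Pi.single j 1 : Fin d → ℝ) i = 0 :=
    Pi.single_eq_of_ne (Fin.ne_of_val_ne (by omega) : i ≠ j) _
  have hvecMul (x : Fin d → ℝ) : (x ᵥ* A) j = Pi.single j 1 ⬝ᵥ A *ᵥ x := by
    rw [single_one_dotProduct, ← vecMul_transpose, hA.eq]
  have hxi : Integrable (fun x => x i * gibbsWeight A U x) :=
    integrable_mul_of_integrable_sq_mul (continuous_apply i).aestronglyMeasurable
      (fun _ => (exp_pos _).le) hZint (by simp only [sq]; exact hmom i i)
  have hxiAx := integrable_apply_mul_vecMul_apply_mul (ρ := gibbsWeight A U) A hmom i j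
  simp only [hvecMul] at hxiAx
  rw [mul_apply_eq_integral_apply_mul_vecMul_apply_mul (ρ := gibbsWeight A U) hmom hGdef]
  simp only [hvecMul]
  rw [integral_apply_mul_dotProduct_mulVec_mul_gibbsWeight_eq_zero hA hUj hji hxi hxiAx,
    mul_zero]

/-- **Vanishing of the upper-right block of `G·A`.**
For the Gibbs second-moment matrix `G` of the classical impurity model, the
upper-right `p × (d−p)` block of the product `G·A` vanishes. -/
theorem GA_upper_right_block_vanishes
    (d p : ℕ) (hd : 0 < d) (hp : p ≤ d)
    (A : Matrix (Fin d) (Fin d) ℝ) (hA : A.IsSymm)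
    (hA22 : ∀ v : Fin d → ℝ, (∀ i : Fin d, (i : ℕ) < p → v i = 0) → v ≠ 0 →
      0 < v ⬝ᵥ A.mulVec v)
    (U : (Fin d → ℝ) → ℝ) (hUmeas : Measurable U)
    (hU : ∀ x y : Fin d → ℝ, (∀ i : Fin d, (i : ℕ) < p → x i = y i) → U x = U y)
    (hZint : Integrable (fun x : Fin d → ℝ =>
      Real.exp (-(1/2) * (x ⬝ᵥ A.mulVec x) - U x)))
    (hmom : ∀ i j : Fin d, Integrable (fun x : Fin d → ℝ =>
      x i * x j * Real.exp (-(1/2) * (x ⬝ᵥ A.mulVec x) - U x)))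
    (Z : ℝ)
    (hZdef : Z = ∫ x : Fin d → ℝ, Real.exp (-(1/2) * (x ⬝ᵥ A.mulVec x) - U x))
    (G : Matrix (Fin d) (Fin d) ℝ)
    (hGdef : ∀ i j : Fin d, G i j = (1 / Z) * ∫ x : Fin d → ℝ,
      x i * x j * Real.exp (-(1/2) * (x ⬝ᵥ A.mulVec x) - U x)) :
    ∀ i j : Fin d, (i : ℕ) < p → p ≤ (j : ℕ) → (G * A) i j = 0 :=
  GA_upper_right_block_vanishes_general d p A hA U hU hZint hmom Z G hGdef
end

section
/- For every j > p and every admissible z ∈ ℂ, the Green's function satisfies the column identity z·G_{ij}(z) = Σ_{k=1}^d G_{ik}(z) h_{kj} + δ_{ij} for all i = 1,…,d; i.e., the j-th column of G(z)(z·I_d − h) − I_d vanishes. -/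
set_option maxHeartbeats 1000000

open scoped InnerProductSpace
open ContinuousLinearMap

/-- **Column identity for the zero-temperature Green's function (fermionic case).**
For an impurity Hamiltonian with fragment `{1,…,p}` and any column index `j`
outside the fragment, `z·G_{ij}(z) = Σ_k G_{ik}(z) h_{kj} + δ_{ij}`. -/
theorem green_function_column_identity
    (d p : ℕ) (V : Type*) [NormedAddCommGroup V] [InnerProductSpace ℂ V]
    [FiniteDimensional ℂ V]
    (a : Fin d → (V →L[ℂ] V))
    (hcar1 : ∀ i j : Fin d, a i * a j + a j * a i = 0)
    (hcar2 : ∀ i j : Fin d,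
      a i * adjoint (a j) + adjoint (a j) * a i = if i = j then 1 else 0)
    (h : Matrix (Fin d) (Fin d) ℂ) (hh : h.IsHermitian)
    (Uop : V →L[ℂ] V) (hUsa : IsSelfAdjoint Uop)
    (hUcomm : ∀ j : Fin d, p ≤ (j : ℕ) →
      Uop * a j = a j * Uop ∧ Uop * adjoint (a j) = adjoint (a j) * Uop)
    (H : V →L[ℂ] V)
    (hHdef : H = (∑ i, ∑ j, h i j • (adjoint (a i) * a j)) + Uop)
    (Ψ : V) (hΨ : ‖Ψ‖ = 1) (E : ℝ) (hE : H Ψ = (E : ℂ) • Ψ)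
    (z : ℂ)
    (hz1 : IsUnit (z • (1 : V →L[ℂ] V) - (H - (E : ℂ) • 1)))
    (hz2 : IsUnit (z • (1 : V →L[ℂ] V) + (H - (E : ℂ) • 1)))
    (G : Matrix (Fin d) (Fin d) ℂ)
    (hGdef : ∀ i j : Fin d, G i j =
      ⟪Ψ, ((a i * Ring.inverse (z • (1 : V →L[ℂ] V) - (H - (E : ℂ) • 1)) *
          adjoint (a j)) Ψ)⟫_ℂ +
      ⟪Ψ, ((adjoint (a j) * Ring.inverse (z • (1 : V →L[ℂ] V) + (H - (E : ℂ) • 1)) *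
          a i) Ψ)⟫_ℂ)
    (j : Fin d) (hj : p ≤ (j : ℕ)) (i : Fin d) :
    z * G i j = (∑ k, G i k * h k j) + (if i = j then 1 else 0) := by
  have hstar : ∀ k : Fin d, adjoint (a k) = star (a k) := fun k => (star_eq_adjoint (a k)).symm
  set K : V →L[ℂ] V := H - (E : ℂ) • 1 with hK
  set Z : V →L[ℂ] V := z • 1 with hZ
  set Rp : V →L[ℂ] V := Ring.inverse (Z - K) with hRp
  set Rm : V →L[ℂ] V := Ring.inverse (Z + K) with hRm
  have hRp1 : Rp * (Z - K) = 1 := Ring.inverse_mul_cancel _ hz1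
  have hRm1 : (Z + K) * Rm = 1 := Ring.mul_inverse_cancel _ hz2
  -- K Ψ = 0
  have hKΨ : K Ψ = 0 := by
    rw [hK, ContinuousLinearMap.sub_apply, hE, ContinuousLinearMap.smul_apply,
      ContinuousLinearMap.one_apply, sub_self]
  -- anticommutation of creation operators
  have hanti : ∀ i k : Fin d, star (a k) * star (a i) + star (a i) * star (a k) = 0 := by
    intro i k
    have := congrArg star (hcar1 i k)
    simpa [star_add, star_mul] using this
  -- CAR with star
  have hcar2' : ∀ i k : Fin d,
      a i * star (a k) + star (a k) * a i = if i = k then 1 else 0 := by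
    intro i k; rw [← hstar k]; exact hcar2 i k
  -- H is self-adjoint
  have hHsa : IsSelfAdjoint H := by
    rw [hHdef]
    refine IsSelfAdjoint.add ?_ hUsa
    have : ∀ i k : Fin d, star (h i k • (adjoint (a i) * a k)) =
        h k i • (adjoint (a k) * a i) := by
      intro i k
      rw [star_smul, star_mul, hstar i, star_star, ← hstar k, hh.apply k i]
    rw [IsSelfAdjoint, star_sum]
    simp_rw [star_sum, this]
    exact Finset.sum_comm
  have hKsa : IsSelfAdjoint K := by
    rw [hK]
    refine hHsa.sub ?_
    rw [IsSelfAdjoint, star_smul, star_one]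
    simp
  -- commutator identity
  have hcomm : K * star (a j) - star (a j) * K = ∑ k, h k j • star (a k) := by
    have hE1 : ((E:ℂ) • (1:V →L[ℂ] V)) * star (a j) - star (a j) * ((E:ℂ) • 1) = 0 := by
      simp [smul_mul_assoc, mul_smul_comm]
    have hU1 : Uop * star (a j) - star (a j) * Uop = 0 := by
      rw [← hstar j, (hUcomm j hj).2, sub_self]
    have key : ∀ i' k : Fin d,
        star (a i') * a k * star (a j) - star (a j) * (star (a i') * a k) =
          if k = j then star (a i') else 0 := by
      intro i' k
      have expand : star (a i') * a k * star (a j) - star (a j) * (star (a i') * a k)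
          = star (a i') * (a k * star (a j) + star (a j) * a k)
            - (star (a j) * star (a i') + star (a i') * star (a j)) * a k := by
        noncomm_ring
      rw [expand, hcar2' k j, hanti i' j, zero_mul, sub_zero]
      split <;> simp
    have hH0 : (∑ i', ∑ k, h i' k • (adjoint (a i') * a k)) * star (a j)
        - star (a j) * (∑ i', ∑ k, h i' k • (adjoint (a i') * a k))
        = ∑ k, h k j • star (a k) := by
      simp_rw [hstar]
      rw [Finset.sum_mul, Finset.mul_sum, ← Finset.sum_sub_distrib]
      have : ∀ i' : Fin d,
          ((∑ k, h i' k • (star (a i') * a k)) * star (a j)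
            - star (a j) * ∑ k, h i' k • (star (a i') * a k))
          = h i' j • star (a i') := by
        intro i'
        rw [Finset.sum_mul, Finset.mul_sum, ← Finset.sum_sub_distrib]
        have : ∀ k : Fin d, (h i' k • (star (a i') * a k)) * star (a j)
            - star (a j) * (h i' k • (star (a i') * a k))
            = h i' k • (if k = j then star (a i') else 0) := by
          intro k
          rw [← key i' k, smul_mul_assoc, mul_smul_comm, smul_sub]
        simp_rw [this]
        rw [Finset.sum_eq_single j]
        · simp
        · intro b _ hb; simp [hb]
        · intro hj'; exact absurd (Finset.mem_univ j) hj'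
      simp_rw [this]
    calc K * star (a j) - star (a j) * K
        = ((∑ i', ∑ k, h i' k • (adjoint (a i') * a k)) * star (a j)
            - star (a j) * (∑ i', ∑ k, h i' k • (adjoint (a i') * a k)))
          + (Uop * star (a j) - star (a j) * Uop)
          - (((E:ℂ) • (1:V →L[ℂ] V)) * star (a j) - star (a j) * ((E:ℂ) • 1)) := by
          rw [hK, hHdef]; noncomm_ring
      _ = ∑ k, h k j • star (a k) := by rw [hH0, hU1, hE1]; simp
  -- inner product vanishing lemmas
  have claim1 : ∀ T : V →L[ℂ] V, ⟪Ψ, (T * K) Ψ⟫_ℂ = 0 := by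
    intro T
    rw [ContinuousLinearMap.mul_apply, hKΨ, map_zero, inner_zero_right]
  have claim2 : ∀ T : V →L[ℂ] V, ⟪Ψ, (K * T) Ψ⟫_ℂ = 0 := by
    intro T
    rw [ContinuousLinearMap.mul_apply, ← ContinuousLinearMap.adjoint_inner_left,
      ← star_eq_adjoint, hKsa.star_eq, hKΨ, inner_zero_left]
  have hZmul : ∀ T S : V →L[ℂ] V, ⟪Ψ, (T * (Z * S)) Ψ⟫_ℂ = z * ⟪Ψ, (T * S) Ψ⟫_ℂ := by
    intro T S
    rw [hZ, smul_mul_assoc, one_mul, mul_smul_comm, ContinuousLinearMap.smul_apply,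
      inner_smul_right]
  have hZmul' : ∀ T S : V →L[ℂ] V, ⟪Ψ, (T * (Z * Rm) * S) Ψ⟫_ℂ = z * ⟪Ψ, (T * Rm * S) Ψ⟫_ℂ := by
    intro T S
    rw [hZ, smul_mul_assoc, one_mul, mul_smul_comm, smul_mul_assoc,
      ContinuousLinearMap.smul_apply, inner_smul_right]
  -- first resolvent identity
  have op1 : a i * Rp * (Z * star (a j)) =
      a i * Rp * (K * star (a j)) + a i * star (a j) := by
    have e : a i * Rp * (Z * star (a j)) - a i * Rp * (K * star (a j))
        = a i * (Rp * (Z - K)) * star (a j) := by noncomm_ring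
    have e2 := eq_add_of_sub_eq (e.trans (by rw [hRp1, mul_one]))
    rw [e2, add_comm]
  have op2 : star (a j) * (Z * Rm) * a i =
      star (a j) * a i - star (a j) * (K * Rm) * a i := by
    have e : star (a j) * (Z * Rm) * a i + star (a j) * (K * Rm) * a i
        = star (a j) * ((Z + K) * Rm) * a i := by noncomm_ring
    exact eq_sub_of_add_eq (e.trans (by rw [hRm1, mul_one]))
  -- rewrite G entries with star
  have hG : ∀ k : Fin d, G i k =
      ⟪Ψ, ((a i * Rp * star (a k)) : V →L[ℂ] V) Ψ⟫_ℂ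
      + ⟪Ψ, ((star (a k) * Rm * a i) : V →L[ℂ] V) Ψ⟫_ℂ := by
    intro k
    rw [hGdef i k, hstar k]
  -- the sum side
  have hsum : (∑ k, G i k * h k j)
      = ⟪Ψ, ((a i * Rp * (K * star (a j) - star (a j) * K)) : V →L[ℂ] V) Ψ⟫_ℂ
      + ⟪Ψ, (((K * star (a j) - star (a j) * K) * Rm * a i) : V →L[ℂ] V) Ψ⟫_ℂ := by
    calc (∑ k, G i k * h k j)
        = ∑ k, (h k j * ⟪Ψ, ((a i * Rp * star (a k)) : V →L[ℂ] V) Ψ⟫_ℂ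
            + h k j * ⟪Ψ, ((star (a k) * Rm * a i) : V →L[ℂ] V) Ψ⟫_ℂ) := by
          refine Finset.sum_congr rfl fun k _ => ?_
          rw [hG k]; ring
      _ = ⟪Ψ, ((a i * Rp * (∑ k, h k j • star (a k))) : V →L[ℂ] V) Ψ⟫_ℂ
          + ⟪Ψ, (((∑ k, h k j • star (a k)) * Rm * a i) : V →L[ℂ] V) Ψ⟫_ℂ := by
          rw [Finset.sum_add_distrib]
          congr 1
          · rw [Finset.mul_sum]
            simp [mul_smul_comm, ContinuousLinearMap.sum_apply, inner_sum,
              ContinuousLinearMap.smul_apply, inner_smul_right]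
          · rw [Finset.sum_mul, Finset.sum_mul]
            simp [smul_mul_assoc, ContinuousLinearMap.sum_apply, inner_sum,
              ContinuousLinearMap.smul_apply, inner_smul_right]
      _ = ⟪Ψ, ((a i * Rp * (K * star (a j) - star (a j) * K)) : V →L[ℂ] V) Ψ⟫_ℂ
          + ⟪Ψ, (((K * star (a j) - star (a j) * K) * Rm * a i) : V →L[ℂ] V) Ψ⟫_ℂ := by
          rw [← hcomm]
  -- vanishing pieces in hsum
  have v1 : ⟪Ψ, ((a i * Rp * (K * star (a j) - star (a j) * K)) : V →L[ℂ] V) Ψ⟫_ℂ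
      = ⟪Ψ, ((a i * Rp * (K * star (a j))) : V →L[ℂ] V) Ψ⟫_ℂ := by
    have e : a i * Rp * (K * star (a j) - star (a j) * K)
        = a i * Rp * (K * star (a j)) - (a i * Rp * star (a j)) * K := by noncomm_ring
    rw [e, ContinuousLinearMap.sub_apply, inner_sub_right, claim1, sub_zero]
  have v2 : ⟪Ψ, (((K * star (a j) - star (a j) * K) * Rm * a i) : V →L[ℂ] V) Ψ⟫_ℂ
      = -⟪Ψ, ((star (a j) * (K * Rm) * a i) : V →L[ℂ] V) Ψ⟫_ℂ := by
    have e : (K * star (a j) - star (a j) * K) * Rm * a i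
        = K * (star (a j) * Rm * a i) - star (a j) * (K * Rm) * a i := by noncomm_ring
    rw [e, ContinuousLinearMap.sub_apply, inner_sub_right, claim2, zero_sub]
  -- final combination
  have hdelta : ⟪Ψ, ((a i * star (a j)) : V →L[ℂ] V) Ψ⟫_ℂ
      + ⟪Ψ, ((star (a j) * a i) : V →L[ℂ] V) Ψ⟫_ℂ = if i = j then 1 else 0 := by
    rw [← inner_add_right, ← ContinuousLinearMap.add_apply, hcar2' i j]
    split
    · rw [ContinuousLinearMap.one_apply, inner_self_eq_norm_sq_to_K, hΨ]; norm_num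
    · rw [ContinuousLinearMap.zero_apply, inner_zero_right]
  rw [hG j, mul_add]
  rw [← hZmul (a i * Rp) (star (a j)), ← hZmul' (star (a j)) (a i), op1, op2]
  rw [hsum, v1, v2]
  rw [ContinuousLinearMap.add_apply, inner_add_right,
    ContinuousLinearMap.sub_apply, inner_sub_right]
  linear_combination hdelta
end

section
/- For every i > p and every admissible z ∈ ℂ, the Green's function satisfies the row identity z·G_{ij}(z) = Σ_{k=1}^d h_{ik} G_{kj}(z) + δ_{ij} for all j = 1,…,d; i.e., the i-th row of (z·I_d − h)G(z) − I_d vanishes. -/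
open scoped InnerProductSpace
open ContinuousLinearMap

set_option maxHeartbeats 1000000

/-- **Row identity for the zero-temperature Green's function (fermionic case).**
For an impurity Hamiltonian with fragment `{1,…,p}` and any row index `i`
outside the fragment, `z·G_{ij}(z) = Σ_k h_{ik} G_{kj}(z) + δ_{ij}`. -/
theorem green_function_row_identity
    (d p : ℕ) (V : Type*) [NormedAddCommGroup V] [InnerProductSpace ℂ V]
    [FiniteDimensional ℂ V]
    (a : Fin d → (V →L[ℂ] V))
    (hcar1 : ∀ i j : Fin d, a i * a j + a j * a i = 0)
    (hcar2 : ∀ i j : Fin d,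
      a i * adjoint (a j) + adjoint (a j) * a i = if i = j then 1 else 0)
    (h : Matrix (Fin d) (Fin d) ℂ) (hh : h.IsHermitian)
    (Uop : V →L[ℂ] V) (hUsa : IsSelfAdjoint Uop)
    (hUcomm : ∀ j : Fin d, p ≤ (j : ℕ) →
      Uop * a j = a j * Uop ∧ Uop * adjoint (a j) = adjoint (a j) * Uop)
    (H : V →L[ℂ] V)
    (hHdef : H = (∑ i, ∑ j, h i j • (adjoint (a i) * a j)) + Uop)
    (Ψ : V) (hΨ : ‖Ψ‖ = 1) (E : ℝ) (hE : H Ψ = (E : ℂ) • Ψ)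
    (z : ℂ)
    (hz1 : IsUnit (z • (1 : V →L[ℂ] V) - (H - (E : ℂ) • 1)))
    (hz2 : IsUnit (z • (1 : V →L[ℂ] V) + (H - (E : ℂ) • 1)))
    (G : Matrix (Fin d) (Fin d) ℂ)
    (hGdef : ∀ i j : Fin d, G i j =
      ⟪Ψ, ((a i * Ring.inverse (z • (1 : V →L[ℂ] V) - (H - (E : ℂ) • 1)) *
          adjoint (a j)) Ψ)⟫_ℂ +
      ⟪Ψ, ((adjoint (a j) * Ring.inverse (z • (1 : V →L[ℂ] V) + (H - (E : ℂ) • 1)) *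
          a i) Ψ)⟫_ℂ)
    (i : Fin d) (hi : p ≤ (i : ℕ)) (j : Fin d) :
    z * G i j = (∑ k, h i k * G k j) + (if i = j then 1 else 0) := by
  classical
  set K : V →L[ℂ] V := H - (E : ℂ) • 1 with hKdef
  set A : V →L[ℂ] V := z • (1 : V →L[ℂ] V) - K with hAdef
  set B : V →L[ℂ] V := z • (1 : V →L[ℂ] V) + K with hBdef
  set C : V →L[ℂ] V := ∑ k, h i k • a k with hCdef
  set Ra : V →L[ℂ] V := Ring.inverse A with hRa
  set Rb : V →L[ℂ] V := Ring.inverse B with hRb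
  -- CAR commutation step
  have step : ∀ l m : Fin d, a i * (adjoint (a l) * a m)
      = (adjoint (a l) * a m) * a i + (if i = l then (1 : V →L[ℂ] V) else 0) * a m := by
    intro l m
    have e2 : a i * adjoint (a l)
        = (if i = l then (1 : V →L[ℂ] V) else 0) - adjoint (a l) * a i :=
      eq_sub_of_add_eq (hcar2 i l)
    have e1 : a i * a m = -(a m * a i) := eq_neg_of_add_eq_zero_left (hcar1 i m)
    calc a i * (adjoint (a l) * a m)
        = (a i * adjoint (a l)) * a m := (mul_assoc _ _ _).symm
      _ = ((if i = l then (1 : V →L[ℂ] V) else 0) - adjoint (a l) * a i) * a m := by rw [e2]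
      _ = (if i = l then (1 : V →L[ℂ] V) else 0) * a m - adjoint (a l) * (a i * a m) := by
          rw [sub_mul, mul_assoc]
      _ = (if i = l then (1 : V →L[ℂ] V) else 0) * a m - adjoint (a l) * (-(a m * a i)) := by
          rw [e1]
      _ = (adjoint (a l) * a m) * a i + (if i = l then (1 : V →L[ℂ] V) else 0) * a m := by
          noncomm_ring
  -- commutator with H
  have hadj_mul : ∀ X Y : V →L[ℂ] V, adjoint (X * Y) = adjoint Y * adjoint X := by
    intro X Y
    rw [← star_eq_adjoint, star_mul, star_eq_adjoint, star_eq_adjoint]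
  have hcommH : a i * H = H * a i + C := by
    have hS : a i * (∑ l, ∑ m, h l m • (adjoint (a l) * a m))
        = (∑ l, ∑ m, h l m • (adjoint (a l) * a m)) * a i + C := by
      have inner_eq : ∀ l : Fin d, a i * (∑ m, h l m • (adjoint (a l) * a m))
          = (∑ m, h l m • (adjoint (a l) * a m)) * a i + (if i = l then C else 0) := by
        intro l
        by_cases hil : i = l
        · subst hil
          rw [if_pos rfl, hCdef, Finset.mul_sum, Finset.sum_mul, ← Finset.sum_add_distrib]
          refine Finset.sum_congr rfl fun m _ => ?_
          rw [mul_smul_comm, step i m, if_pos rfl, smul_add, smul_mul_assoc, one_mul]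
        · rw [if_neg hil, add_zero, Finset.mul_sum, Finset.sum_mul]
          refine Finset.sum_congr rfl fun m _ => ?_
          rw [mul_smul_comm, step l m, if_neg hil, zero_mul, add_zero, smul_mul_assoc]
      calc a i * ∑ l, ∑ m, h l m • (adjoint (a l) * a m)
          = ∑ l, (a i * ∑ m, h l m • (adjoint (a l) * a m)) := Finset.mul_sum _ _ _
        _ = ∑ l, ((∑ m, h l m • (adjoint (a l) * a m)) * a i + (if i = l then C else 0)) :=
            Finset.sum_congr rfl fun l _ => inner_eq l
        _ = (∑ l, (∑ m, h l m • (adjoint (a l) * a m)) * a i)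
              + ∑ l, (if i = l then C else 0) := Finset.sum_add_distrib
        _ = (∑ l, ∑ m, h l m • (adjoint (a l) * a m)) * a i + C := by
            rw [Finset.sum_ite_eq, ← Finset.sum_mul]
            simp
    rw [hHdef, mul_add, add_mul, ← (hUcomm i hi).1, hS]
    abel
  have hcommK : a i * K = K * a i + C := by
    rw [hKdef, mul_sub, sub_mul, hcommH]
    rw [mul_smul_comm, smul_mul_assoc, mul_one, one_mul]
    abel
  -- self-adjointness of H and K
  have hHsa : adjoint H = H := by
    rw [hHdef, map_add, hUsa.adjoint_eq]
    congr 1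
    rw [map_sum]
    rw [Finset.sum_comm]
    refine Finset.sum_congr rfl fun l _ => ?_
    rw [map_sum]
    refine Finset.sum_congr rfl fun m _ => ?_
    rw [map_smulₛₗ, hadj_mul, adjoint_adjoint]
    congr 1
    have := congrArg (fun M => M m l) hh
    simpa [Matrix.conjTranspose_apply] using this
  have hKsa : adjoint K = K := by
    rw [hKdef, map_sub, hHsa, map_smulₛₗ]
    rw [show (1 : V →L[ℂ] V) = ContinuousLinearMap.id ℂ V from rfl, adjoint_id]
    simp [Complex.conj_ofReal]
  have hKΨ : K Ψ = 0 := by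
    rw [hKdef]
    simp [ContinuousLinearMap.sub_apply, hE]
  have hKleft : ∀ T : V →L[ℂ] V, ⟪Ψ, ((K * T) Ψ)⟫_ℂ = 0 := by
    intro T
    have : (K * T) Ψ = K (T Ψ) := rfl
    rw [this, ← hKsa, adjoint_inner_right, hKΨ, inner_zero_left]
  have hKright : ∀ T : V →L[ℂ] V, ⟪Ψ, ((T * K) Ψ)⟫_ℂ = 0 := by
    intro T
    have : (T * K) Ψ = T (K Ψ) := rfl
    rw [this, hKΨ, map_zero, inner_zero_right]
  have hARa : A * Ra = 1 := Ring.mul_inverse_cancel _ hz1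
  have hRaA : Ra * A = 1 := Ring.inverse_mul_cancel _ hz1
  have hBRb : B * Rb = 1 := Ring.mul_inverse_cancel _ hz2
  have hRbB : Rb * B = 1 := Ring.inverse_mul_cancel _ hz2
  -- key identity 1
  have key1 : z * ⟪Ψ, ((a i * Ra * adjoint (a j)) Ψ)⟫_ℂ
      = ⟪Ψ, ((a i * adjoint (a j)) Ψ)⟫_ℂ
        + ∑ k, h i k * ⟪Ψ, ((a k * Ra * adjoint (a j)) Ψ)⟫_ℂ := by
    have hop : z • (a i * Ra * adjoint (a j))
        = a i * adjoint (a j) + K * (a i * Ra * adjoint (a j))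
          + ∑ k, h i k • (a k * Ra * adjoint (a j)) := by
      have hz1' : z • Ra = 1 + K * Ra := by
        have h0 : A + K = z • (1 : V →L[ℂ] V) := by rw [hAdef]; abel
        have : (z • (1 : V →L[ℂ] V)) * Ra = 1 + K * Ra := by rw [← h0, add_mul, hARa]
        rwa [smul_mul_assoc, one_mul] at this
      calc z • (a i * Ra * adjoint (a j))
          = a i * (z • Ra) * adjoint (a j) := by
            rw [mul_smul_comm, smul_mul_assoc]
        _ = a i * (1 + K * Ra) * adjoint (a j) := by rw [hz1']
        _ = a i * adjoint (a j) + (a i * K) * (Ra * adjoint (a j)) := by noncomm_ring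
        _ = a i * adjoint (a j) + (K * a i + C) * (Ra * adjoint (a j)) := by rw [hcommK]
        _ = a i * adjoint (a j) + K * (a i * Ra * adjoint (a j))
              + C * (Ra * adjoint (a j)) := by noncomm_ring
        _ = a i * adjoint (a j) + K * (a i * Ra * adjoint (a j))
              + ∑ k, h i k • (a k * Ra * adjoint (a j)) := by
            congr 1
            rw [hCdef, Finset.sum_mul]
            refine Finset.sum_congr rfl fun k _ => ?_
            rw [smul_mul_assoc, mul_assoc]
    calc z * ⟪Ψ, ((a i * Ra * adjoint (a j)) Ψ)⟫_ℂ
        = ⟪Ψ, ((z • (a i * Ra * adjoint (a j))) Ψ)⟫_ℂ := by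
          rw [ContinuousLinearMap.smul_apply, inner_smul_right]
      _ = ⟪Ψ, ((a i * adjoint (a j)) Ψ)⟫_ℂ + ⟪Ψ, ((K * (a i * Ra * adjoint (a j))) Ψ)⟫_ℂ
            + ⟪Ψ, ((∑ k, h i k • (a k * Ra * adjoint (a j))) Ψ)⟫_ℂ := by
          rw [hop]; simp only [ContinuousLinearMap.add_apply, inner_add_right]
      _ = ⟪Ψ, ((a i * adjoint (a j)) Ψ)⟫_ℂ
            + ∑ k, h i k * ⟪Ψ, ((a k * Ra * adjoint (a j)) Ψ)⟫_ℂ := by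
          rw [hKleft, add_zero]
          congr 1
          rw [ContinuousLinearMap.sum_apply, inner_sum]
          exact Finset.sum_congr rfl fun k _ => by
            rw [ContinuousLinearMap.smul_apply, inner_smul_right]
  -- key identity 2
  have key2 : z * ⟪Ψ, ((adjoint (a j) * Rb * a i) Ψ)⟫_ℂ
      = ⟪Ψ, ((adjoint (a j) * a i) Ψ)⟫_ℂ
        + ∑ k, h i k * ⟪Ψ, ((adjoint (a j) * Rb * a k) Ψ)⟫_ℂ := by
    have hop : z • (adjoint (a j) * Rb * a i)
        = adjoint (a j) * a i - (adjoint (a j) * Rb * a i) * K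
          + ∑ k, h i k • (adjoint (a j) * Rb * a k) := by
      have hz2' : z • Rb = 1 - Rb * K := by
        have h0 : B - K = z • (1 : V →L[ℂ] V) := by rw [hBdef]; abel
        have : Rb * (z • (1 : V →L[ℂ] V)) = 1 - Rb * K := by rw [← h0, mul_sub, hRbB]
        rwa [mul_smul_comm, mul_one] at this
      have hKa : K * a i = a i * K - C := by rw [eq_sub_iff_add_eq, ← hcommK]
      calc z • (adjoint (a j) * Rb * a i)
          = adjoint (a j) * (z • Rb) * a i := by
            rw [mul_smul_comm, smul_mul_assoc]
        _ = adjoint (a j) * (1 - Rb * K) * a i := by rw [hz2']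
        _ = adjoint (a j) * a i - (adjoint (a j) * Rb) * (K * a i) := by noncomm_ring
        _ = adjoint (a j) * a i - (adjoint (a j) * Rb) * (a i * K - C) := by rw [hKa]
        _ = adjoint (a j) * a i - (adjoint (a j) * Rb * a i) * K
              + (adjoint (a j) * Rb) * C := by noncomm_ring
        _ = adjoint (a j) * a i - (adjoint (a j) * Rb * a i) * K
              + ∑ k, h i k • (adjoint (a j) * Rb * a k) := by
            congr 1
            rw [hCdef, Finset.mul_sum]
            refine Finset.sum_congr rfl fun k _ => ?_
            rw [mul_smul_comm, mul_assoc]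
    calc z * ⟪Ψ, ((adjoint (a j) * Rb * a i) Ψ)⟫_ℂ
        = ⟪Ψ, ((z • (adjoint (a j) * Rb * a i)) Ψ)⟫_ℂ := by
          rw [ContinuousLinearMap.smul_apply, inner_smul_right]
      _ = ⟪Ψ, ((adjoint (a j) * a i) Ψ)⟫_ℂ - ⟪Ψ, (((adjoint (a j) * Rb * a i) * K) Ψ)⟫_ℂ
            + ⟪Ψ, ((∑ k, h i k • (adjoint (a j) * Rb * a k)) Ψ)⟫_ℂ := by
          rw [hop]
          simp only [ContinuousLinearMap.add_apply, ContinuousLinearMap.sub_apply,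
            inner_add_right, inner_sub_right]
      _ = ⟪Ψ, ((adjoint (a j) * a i) Ψ)⟫_ℂ
            + ∑ k, h i k * ⟪Ψ, ((adjoint (a j) * Rb * a k) Ψ)⟫_ℂ := by
          rw [hKright, sub_zero]
          congr 1
          rw [ContinuousLinearMap.sum_apply, inner_sum]
          exact Finset.sum_congr rfl fun k _ => by
            rw [ContinuousLinearMap.smul_apply, inner_smul_right]
  -- delta term
  have hdelta : ⟪Ψ, ((a i * adjoint (a j)) Ψ)⟫_ℂ + ⟪Ψ, ((adjoint (a j) * a i) Ψ)⟫_ℂ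
      = if i = j then 1 else 0 := by
    have : ⟪Ψ, (((a i * adjoint (a j)) + (adjoint (a j) * a i)) Ψ)⟫_ℂ
        = ⟪Ψ, (((if i = j then (1 : V →L[ℂ] V) else 0)) Ψ)⟫_ℂ := by rw [hcar2 i j]
    rw [ContinuousLinearMap.add_apply, inner_add_right] at this
    rw [this]
    by_cases hij : i = j
    · simp only [if_pos hij, ContinuousLinearMap.one_apply]
      rw [inner_self_eq_norm_sq_to_K, hΨ]
      norm_num
    · simp [if_neg hij]
  -- combine
  rw [hGdef i j, mul_add, key1, key2]
  have : (∑ k, h i k * G k j)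
      = (∑ k, h i k * ⟪Ψ, ((a k * Ra * adjoint (a j)) Ψ)⟫_ℂ)
        + ∑ k, h i k * ⟪Ψ, ((adjoint (a j) * Rb * a k) Ψ)⟫_ℂ := by
    rw [← Finset.sum_add_distrib]
    refine Finset.sum_congr rfl fun k _ => ?_
    rw [hGdef k j, mul_add]
  rw [this, ← hdelta]
  ring
end

section
/- For every admissible z ∈ ℂ at which the d×d matrix G(z) is invertible, the zero-temperature self-energy Σ(z) := z·I_d − h − G(z)⁻¹ satisfies Σ_{ij}(z) = 0 whenever i > p or j > p; that is, Σ(z) has nonzero entries only in its upper-left p×p block. -/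
open scoped InnerProductSpace
open ContinuousLinearMap

set_option maxHeartbeats 1600000 in
/-- **Sparsity of the zero-temperature self-energy (Theorem 1.2, fermionic case).**
For an impurity Hamiltonian with fragment `{1,…,p}`, the self-energy
`Σ(z) = z·I − h − G(z)⁻¹` vanishes outside the upper-left `p × p` block. -/
theorem zero_temperature_self_energy_sparsity
    (d p : ℕ) (V : Type*) [NormedAddCommGroup V] [InnerProductSpace ℂ V]
    [FiniteDimensional ℂ V]
    (a : Fin d → (V →L[ℂ] V))
    (hcar1 : ∀ i j : Fin d, a i * a j + a j * a i = 0)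
    (hcar2 : ∀ i j : Fin d,
      a i * adjoint (a j) + adjoint (a j) * a i = if i = j then 1 else 0)
    (h : Matrix (Fin d) (Fin d) ℂ) (hh : h.IsHermitian)
    (Uop : V →L[ℂ] V) (hUsa : IsSelfAdjoint Uop)
    (hUcomm : ∀ j : Fin d, p ≤ (j : ℕ) →
      Uop * a j = a j * Uop ∧ Uop * adjoint (a j) = adjoint (a j) * Uop)
    (H : V →L[ℂ] V)
    (hHdef : H = (∑ i, ∑ j, h i j • (adjoint (a i) * a j)) + Uop)
    (Ψ : V) (hΨ : ‖Ψ‖ = 1) (E : ℝ) (hE : H Ψ = (E : ℂ) • Ψ)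
    (z : ℂ)
    (hz1 : IsUnit (z • (1 : V →L[ℂ] V) - (H - (E : ℂ) • 1)))
    (hz2 : IsUnit (z • (1 : V →L[ℂ] V) + (H - (E : ℂ) • 1)))
    (G : Matrix (Fin d) (Fin d) ℂ)
    (hGdef : ∀ i j : Fin d, G i j =
      ⟪Ψ, ((a i * Ring.inverse (z • (1 : V →L[ℂ] V) - (H - (E : ℂ) • 1)) *
          adjoint (a j)) Ψ)⟫_ℂ +
      ⟪Ψ, ((adjoint (a j) * Ring.inverse (z • (1 : V →L[ℂ] V) + (H - (E : ℂ) • 1)) *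
          a i) Ψ)⟫_ℂ)
    (hGinv : IsUnit G.det) :
    ∀ i j : Fin d, (p ≤ (i : ℕ) ∨ p ≤ (j : ℕ)) →
      (z • (1 : Matrix (Fin d) (Fin d) ℂ) - h - G⁻¹) i j = 0 := by
  classical
  -- work with `star` instead of `adjoint`
  simp only [← ContinuousLinearMap.star_eq_adjoint] at hcar2 hUcomm hHdef hGdef
  -- abbreviations
  set K : V →L[ℂ] V := H - (E : ℂ) • 1 with hKdef
  set A : V →L[ℂ] V := z • (1 : V →L[ℂ] V) - K with hAdef
  set B : V →L[ℂ] V := z • (1 : V →L[ℂ] V) + K with hBdef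
  set R : V →L[ℂ] V := Ring.inverse A with hRdef
  set S : V →L[ℂ] V := Ring.inverse B with hSdef
  simp only [mul_assoc] at hGdef
  have hAR : A * R = 1 := Ring.mul_inverse_cancel A hz1
  have hRA : R * A = 1 := Ring.inverse_mul_cancel A hz1
  have hBS : B * S = 1 := Ring.mul_inverse_cancel B hz2
  have hSB : S * B = 1 := Ring.inverse_mul_cancel B hz2
  have hzA1 : z • (1 : V →L[ℂ] V) = A + K := by rw [hAdef, sub_add_cancel]
  have hzB1 : z • (1 : V →L[ℂ] V) = B - K := by rw [hBdef, add_sub_cancel_right]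
  -- hermiticity of h, entrywise
  have hconj : ∀ i j : Fin d, star (h i j) = h j i := by
    intro i j
    conv_rhs => rw [← hh]
    rw [Matrix.conjTranspose_apply]
  -- H is self-adjoint
  have Hsa : star H = H := by
    rw [hHdef, star_add, hUsa.star_eq]
    congr 1
    have e : ∀ i : Fin d, star (∑ j, h i j • (star (a i) * a j))
        = ∑ j, h j i • (star (a j) * a i) := by
      intro i
      rw [star_sum]
      refine Finset.sum_congr rfl fun j _ => ?_
      rw [star_smul, star_mul, star_star, hconj i j]
    rw [star_sum, Finset.sum_congr rfl fun i _ => e i, Finset.sum_comm]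
  -- K kills Ψ and is self-adjoint
  have hKΨ : K Ψ = 0 := by
    rw [hKdef, ContinuousLinearMap.sub_apply, hE, ContinuousLinearMap.smul_apply,
      ContinuousLinearMap.one_apply, sub_self]
  have Ksa : star K = K := by
    rw [hKdef, star_sub, Hsa, star_smul, star_one]
    congr 2
    exact Complex.conj_ofReal E
  -- vanishing inner products
  have ip0 : ∀ T : V →L[ℂ] V, ⟪Ψ, ((K * T) Ψ)⟫_ℂ = 0 := by
    intro T
    have h1 : (K * T) Ψ = K (T Ψ) := rfl
    have h2 : ⟪Ψ, K (T Ψ)⟫_ℂ = ⟪K Ψ, T Ψ⟫_ℂ := by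
      conv_lhs => rw [← Ksa, ContinuousLinearMap.star_eq_adjoint]
      exact ContinuousLinearMap.adjoint_inner_right _ _ _
    rw [h1, h2, hKΨ, inner_zero_left]
  have ipK' : ∀ T : V →L[ℂ] V, ⟪Ψ, ((T * K) Ψ)⟫_ℂ = 0 := by
    intro T
    have h1 : (T * K) Ψ = T (K Ψ) := rfl
    rw [h1, hKΨ, map_zero, inner_zero_right]
  -- CAR commutator building block
  have car_term : ∀ i k l : Fin d, a i * (star (a k) * a l)
      = star (a k) * a l * a i + (if i = k then (1 : V →L[ℂ] V) else 0) * a l := by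
    intro i k l
    have e2 : a i * star (a k)
        = (if i = k then (1 : V →L[ℂ] V) else 0) - star (a k) * a i :=
      eq_sub_of_add_eq (hcar2 i k)
    have e1 : a i * a l = -(a l * a i) := eq_neg_of_add_eq_zero_left (hcar1 i l)
    calc a i * (star (a k) * a l) = (a i * star (a k)) * a l := by rw [mul_assoc]
    _ = ((if i = k then (1 : V →L[ℂ] V) else 0) - star (a k) * a i) * a l := by rw [e2]
    _ = (if i = k then (1 : V →L[ℂ] V) else 0) * a l - star (a k) * (a i * a l) := by
        rw [sub_mul, mul_assoc]
    _ = (if i = k then (1 : V →L[ℂ] V) else 0) * a l + star (a k) * (a l * a i) := by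
        rw [e1, mul_neg, sub_neg_eq_add]
    _ = star (a k) * a l * a i + (if i = k then (1 : V →L[ℂ] V) else 0) * a l := by
        rw [← mul_assoc, add_comm]
  -- commutator of a i with H
  have c1 : ∀ i : Fin d, p ≤ (i : ℕ) → a i * H = H * a i + ∑ l, h i l • a l := by
    intro i hi
    rw [hHdef, mul_add, add_mul, (hUcomm i hi).1]
    have main : a i * (∑ k, ∑ l, h k l • (star (a k) * a l))
        = (∑ k, ∑ l, h k l • (star (a k) * a l)) * a i + ∑ l, h i l • a l := by
      rw [Finset.mul_sum, Finset.sum_mul]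
      have step : ∀ k : Fin d, a i * (∑ l, h k l • (star (a k) * a l))
          = (∑ l, h k l • (star (a k) * a l)) * a i
            + (if i = k then ∑ l, h k l • a l else 0) := by
        intro k
        rw [Finset.mul_sum, Finset.sum_mul]
        have term : ∀ l : Fin d, a i * (h k l • (star (a k) * a l))
            = (h k l • (star (a k) * a l)) * a i + (if i = k then h k l • a l else 0) := by
          intro l
          rw [mul_smul_comm, smul_mul_assoc, car_term i k l, smul_add]
          congr 1
          split_ifs with hik
          · rw [one_mul]
          · rw [zero_mul, smul_zero]
        rw [Finset.sum_congr rfl fun l _ => term l, Finset.sum_add_distrib]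
        congr 1
        split_ifs with hik <;> simp
      rw [Finset.sum_congr rfl fun k _ => step k, Finset.sum_add_distrib]
      congr 1
      rw [Finset.sum_ite_eq]
      simp
    rw [main]
    abel
  -- commutator of star (a j) with H
  have c2 : ∀ j : Fin d, p ≤ (j : ℕ) →
      star (a j) * H = H * star (a j) - ∑ k, h k j • star (a k) := by
    intro j hj
    have hc := congrArg star (c1 j hj)
    rw [star_mul, Hsa, star_add, star_mul, Hsa, star_sum] at hc
    simp only [star_smul, hconj] at hc
    rw [hc]
    abel
  -- commutators with K
  have EcommL : ∀ T : V →L[ℂ] V, T * ((E : ℂ) • 1) = (E : ℂ) • T := by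
    intro T; rw [mul_smul_comm, mul_one]
  have EcommR : ∀ T : V →L[ℂ] V, ((E : ℂ) • 1) * T = (E : ℂ) • T := by
    intro T; rw [smul_mul_assoc, one_mul]
  have cK1 : ∀ i : Fin d, p ≤ (i : ℕ) → a i * K = K * a i + ∑ l, h i l • a l := by
    intro i hi
    rw [hKdef, mul_sub, sub_mul, c1 i hi, EcommL, EcommR]
    abel
  have cK2 : ∀ j : Fin d, p ≤ (j : ℕ) →
      star (a j) * K = K * star (a j) - ∑ k, h k j • star (a k) := by
    intro j hj
    rw [hKdef, mul_sub, sub_mul, c2 j hj, EcommL, EcommR]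
    abel
  have cK1' : ∀ i : Fin d, p ≤ (i : ℕ) → K * a i = a i * K - ∑ l, h i l • a l := by
    intro i hi; rw [cK1 i hi]; abel
  have cK2' : ∀ j : Fin d, p ≤ (j : ℕ) →
      K * star (a j) = star (a j) * K + ∑ k, h k j • star (a k) := by
    intro j hj; rw [cK2 j hj]; abel
  -- operator identities, row versions (p ≤ i)
  have op1 : ∀ i j : Fin d, p ≤ (i : ℕ) →
      z • (a i * (R * star (a j)))
        = a i * star (a j) + K * (a i * (R * star (a j)))
          + ∑ l, h i l • (a l * (R * star (a j))) := by
    intro i j hi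
    calc z • (a i * (R * star (a j)))
        = a i * ((z • (1 : V →L[ℂ] V)) * (R * star (a j))) := by
          rw [smul_mul_assoc, one_mul, mul_smul_comm]
    _ = a i * (A * (R * star (a j))) + a i * (K * (R * star (a j))) := by
          rw [hzA1, add_mul, mul_add]
    _ = a i * star (a j) + (a i * K) * (R * star (a j)) := by
          rw [← mul_assoc A R, hAR, one_mul, mul_assoc]
    _ = a i * star (a j) + (K * a i) * (R * star (a j))
          + (∑ l, h i l • a l) * (R * star (a j)) := by
          rw [cK1 i hi, add_mul, add_assoc]
    _ = a i * star (a j) + K * (a i * (R * star (a j)))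
          + ∑ l, h i l • (a l * (R * star (a j))) := by
          rw [mul_assoc, Finset.sum_mul]
          simp only [smul_mul_assoc]
  have op2 : ∀ i j : Fin d, p ≤ (i : ℕ) →
      z • (star (a j) * (S * a i))
        = star (a j) * a i - (star (a j) * (S * a i)) * K
          + ∑ l, h i l • (star (a j) * (S * a l)) := by
    intro i j hi
    calc z • (star (a j) * (S * a i))
        = star (a j) * (S * ((z • (1 : V →L[ℂ] V)) * a i)) := by
          rw [smul_mul_assoc, one_mul, mul_smul_comm, mul_smul_comm]
    _ = star (a j) * (S * (B * a i)) - star (a j) * (S * (K * a i)) := by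
          rw [hzB1, sub_mul, mul_sub, mul_sub]
    _ = star (a j) * a i - star (a j) * (S * (a i * K - ∑ l, h i l • a l)) := by
          rw [← mul_assoc S B, hSB, one_mul, cK1' i hi]
    _ = star (a j) * a i - (star (a j) * (S * (a i * K))
          - star (a j) * (S * (∑ l, h i l • a l))) := by
          rw [mul_sub, mul_sub]
    _ = star (a j) * a i - (star (a j) * (S * a i)) * K
          + ∑ l, h i l • (star (a j) * (S * a l)) := by
          rw [← mul_assoc S (a i) K, ← mul_assoc (star (a j)) (S * a i) K, Finset.mul_sum,
            Finset.mul_sum]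
          simp only [mul_smul_comm]
          abel
  -- operator identities, column versions (p ≤ j)
  have op1' : ∀ i j : Fin d, p ≤ (j : ℕ) →
      z • (a i * (R * star (a j)))
        = a i * star (a j) + (a i * (R * star (a j))) * K
          + ∑ k, h k j • (a i * (R * star (a k))) := by
    intro i j hj
    calc z • (a i * (R * star (a j)))
        = a i * (R * ((z • (1 : V →L[ℂ] V)) * star (a j))) := by
          rw [smul_mul_assoc, one_mul, mul_smul_comm, mul_smul_comm]
    _ = a i * (R * (A * star (a j))) + a i * (R * (K * star (a j))) := by
          rw [hzA1, add_mul, mul_add, mul_add]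
    _ = a i * star (a j) + a i * (R * (star (a j) * K
          + ∑ k, h k j • star (a k))) := by
          rw [← mul_assoc R A, hRA, one_mul, cK2' j hj]
    _ = a i * star (a j) + (a i * (R * star (a j))) * K
          + ∑ k, h k j • (a i * (R * star (a k))) := by
          rw [mul_add, mul_add, ← mul_assoc R (star (a j)) K,
            ← mul_assoc (a i) (R * star (a j)) K, Finset.mul_sum, Finset.mul_sum]
          simp only [mul_smul_comm]
          abel
  have op2' : ∀ i j : Fin d, p ≤ (j : ℕ) →
      z • (star (a j) * (S * a i))
        = star (a j) * a i - K * (star (a j) * (S * a i))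
          + ∑ k, h k j • (star (a k) * (S * a i)) := by
    intro i j hj
    calc z • (star (a j) * (S * a i))
        = (star (a j) * (z • (1 : V →L[ℂ] V))) * (S * a i) := by
          rw [mul_smul_comm, mul_one, smul_mul_assoc]
    _ = (star (a j) * B) * (S * a i) - (star (a j) * K) * (S * a i) := by
          rw [hzB1, mul_sub, sub_mul]
    _ = star (a j) * a i - ((K * star (a j)) * (S * a i)
          - (∑ k, h k j • star (a k)) * (S * a i)) := by
          rw [mul_assoc, ← mul_assoc B S, hBS, one_mul, cK2 j hj, sub_mul]
    _ = star (a j) * a i - K * (star (a j) * (S * a i))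
          + ∑ k, h k j • (star (a k) * (S * a i)) := by
          rw [mul_assoc K (star (a j)) (S * a i), Finset.sum_mul]
          simp only [smul_mul_assoc]
          abel
  -- scalar: ⟪Ψ,Ψ⟫ = 1 combined with CAR
  have delta : ∀ i j : Fin d,
      ⟪Ψ, ((a i * star (a j)) Ψ)⟫_ℂ + ⟪Ψ, ((star (a j) * a i) Ψ)⟫_ℂ
        = if i = j then 1 else 0 := by
    intro i j
    rw [← inner_add_right, ← ContinuousLinearMap.add_apply, hcar2 i j]
    split_ifs
    · rw [ContinuousLinearMap.one_apply, inner_self_eq_norm_sq_to_K, hΨ]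
      norm_num
    · rw [ContinuousLinearMap.zero_apply, inner_zero_right]
  -- row equation
  have rowEq : ∀ i j : Fin d, p ≤ (i : ℕ) →
      z * G i j = (if i = j then 1 else 0) + ∑ l, h i l * G l j := by
    intro i j hi
    have t1 : z * ⟪Ψ, ((a i * (R * star (a j))) Ψ)⟫_ℂ
        = ⟪Ψ, ((a i * star (a j)) Ψ)⟫_ℂ
          + ∑ l, h i l * ⟪Ψ, ((a l * (R * star (a j))) Ψ)⟫_ℂ := by
      rw [← inner_smul_right, ← ContinuousLinearMap.smul_apply, op1 i j hi]
      simp only [ContinuousLinearMap.add_apply, inner_add_right,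
        ContinuousLinearMap.sum_apply, inner_sum, ContinuousLinearMap.smul_apply,
        inner_smul_right, ip0]
      ring
    have t2 : z * ⟪Ψ, ((star (a j) * (S * a i)) Ψ)⟫_ℂ
        = ⟪Ψ, ((star (a j) * a i) Ψ)⟫_ℂ
          + ∑ l, h i l * ⟪Ψ, ((star (a j) * (S * a l)) Ψ)⟫_ℂ := by
      rw [← inner_smul_right, ← ContinuousLinearMap.smul_apply, op2 i j hi]
      simp only [ContinuousLinearMap.add_apply, ContinuousLinearMap.sub_apply,
        inner_add_right, inner_sub_right, ContinuousLinearMap.sum_apply, inner_sum,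
        ContinuousLinearMap.smul_apply, inner_smul_right, ipK']
      ring
    have hsum : ∑ l, h i l * G l j
        = (∑ l, h i l * ⟪Ψ, ((a l * (R * star (a j))) Ψ)⟫_ℂ)
          + ∑ l, h i l * ⟪Ψ, ((star (a j) * (S * a l)) Ψ)⟫_ℂ := by
      rw [← Finset.sum_add_distrib]
      exact Finset.sum_congr rfl fun l _ => by rw [hGdef l j, mul_add]
    rw [hGdef i j, mul_add, t1, t2, hsum, ← delta i j]
    ring
  -- column equation
  have colEq : ∀ i j : Fin d, p ≤ (j : ℕ) →
      z * G i j = (if i = j then 1 else 0) + ∑ k, G i k * h k j := by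
    intro i j hj
    have t1 : z * ⟪Ψ, ((a i * (R * star (a j))) Ψ)⟫_ℂ
        = ⟪Ψ, ((a i * star (a j)) Ψ)⟫_ℂ
          + ∑ k, h k j * ⟪Ψ, ((a i * (R * star (a k))) Ψ)⟫_ℂ := by
      rw [← inner_smul_right, ← ContinuousLinearMap.smul_apply, op1' i j hj]
      simp only [ContinuousLinearMap.add_apply, inner_add_right,
        ContinuousLinearMap.sum_apply, inner_sum, ContinuousLinearMap.smul_apply,
        inner_smul_right, ipK']
      ring
    have t2 : z * ⟪Ψ, ((star (a j) * (S * a i)) Ψ)⟫_ℂ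
        = ⟪Ψ, ((star (a j) * a i) Ψ)⟫_ℂ
          + ∑ k, h k j * ⟪Ψ, ((star (a k) * (S * a i)) Ψ)⟫_ℂ := by
      rw [← inner_smul_right, ← ContinuousLinearMap.smul_apply, op2' i j hj]
      simp only [ContinuousLinearMap.add_apply, ContinuousLinearMap.sub_apply,
        inner_add_right, inner_sub_right, ContinuousLinearMap.sum_apply, inner_sum,
        ContinuousLinearMap.smul_apply, inner_smul_right, ip0]
      ring
    have hsum : ∑ k, G i k * h k j
        = (∑ k, h k j * ⟪Ψ, ((a i * (R * star (a k))) Ψ)⟫_ℂ)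
          + ∑ k, h k j * ⟪Ψ, ((star (a k) * (S * a i)) Ψ)⟫_ℂ := by
      rw [← Finset.sum_add_distrib]
      exact Finset.sum_congr rfl fun k _ => by
        rw [hGdef i k, mul_comm, mul_add]
    rw [hGdef i j, mul_add, t1, t2, hsum, ← delta i j]
    ring
  -- matrix-level consequences
  have hrow : ∀ i j : Fin d, p ≤ (i : ℕ) →
      ((z • (1 : Matrix (Fin d) (Fin d) ℂ) - h) * G) i j
        = (1 : Matrix (Fin d) (Fin d) ℂ) i j := by
    intro i j hi
    rw [Matrix.mul_apply]
    simp only [Matrix.sub_apply, Matrix.smul_apply, Matrix.one_apply, smul_eq_mul,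
      sub_mul, mul_ite, mul_one, mul_zero, ite_mul, zero_mul]
    rw [Finset.sum_sub_distrib, Finset.sum_ite_eq]
    simp only [Finset.mem_univ, if_true]
    rw [rowEq i j hi]
    ring
  have hcol : ∀ i j : Fin d, p ≤ (j : ℕ) →
      (G * (z • (1 : Matrix (Fin d) (Fin d) ℂ) - h)) i j
        = (1 : Matrix (Fin d) (Fin d) ℂ) i j := by
    intro i j hj
    rw [Matrix.mul_apply]
    simp only [Matrix.sub_apply, Matrix.smul_apply, Matrix.one_apply, smul_eq_mul,
      mul_sub, mul_ite, mul_one, mul_zero]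
    rw [Finset.sum_sub_distrib, Finset.sum_ite_eq']
    simp only [Finset.mem_univ, if_true]
    rw [mul_comm (G i j) z, colEq i j hj]
    ring
  have hMrow : ∀ i j : Fin d, p ≤ (i : ℕ) →
      (z • (1 : Matrix (Fin d) (Fin d) ℂ) - h) i j = G⁻¹ i j := by
    intro i j hi
    have e : (z • (1 : Matrix (Fin d) (Fin d) ℂ) - h) * (G * G⁻¹)
        = z • (1 : Matrix (Fin d) (Fin d) ℂ) - h := by
      rw [Matrix.mul_nonsing_inv G hGinv, Matrix.mul_one]
    calc (z • (1 : Matrix (Fin d) (Fin d) ℂ) - h) i j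
        = (((z • (1 : Matrix (Fin d) (Fin d) ℂ) - h) * G) * G⁻¹) i j := by
          rw [Matrix.mul_assoc, e]
    _ = ∑ k, ((z • (1 : Matrix (Fin d) (Fin d) ℂ) - h) * G) i k * G⁻¹ k j :=
          Matrix.mul_apply
    _ = ∑ k, (1 : Matrix (Fin d) (Fin d) ℂ) i k * G⁻¹ k j :=
          Finset.sum_congr rfl fun k _ => by rw [hrow i k hi]
    _ = G⁻¹ i j := by rw [← Matrix.mul_apply, Matrix.one_mul]
  have hMcol : ∀ i j : Fin d, p ≤ (j : ℕ) →
      (z • (1 : Matrix (Fin d) (Fin d) ℂ) - h) i j = G⁻¹ i j := by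
    intro i j hj
    have e : (G⁻¹ * G) * (z • (1 : Matrix (Fin d) (Fin d) ℂ) - h)
        = z • (1 : Matrix (Fin d) (Fin d) ℂ) - h := by
      rw [Matrix.nonsing_inv_mul G hGinv, Matrix.one_mul]
    calc (z • (1 : Matrix (Fin d) (Fin d) ℂ) - h) i j
        = (G⁻¹ * (G * (z • (1 : Matrix (Fin d) (Fin d) ℂ) - h))) i j := by
          rw [← Matrix.mul_assoc, e]
    _ = ∑ k, G⁻¹ i k * (G * (z • (1 : Matrix (Fin d) (Fin d) ℂ) - h)) k j :=
          Matrix.mul_apply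
    _ = ∑ k, G⁻¹ i k * (1 : Matrix (Fin d) (Fin d) ℂ) k j :=
          Finset.sum_congr rfl fun k _ => by rw [hcol k j hj]
    _ = G⁻¹ i j := by rw [← Matrix.mul_apply, Matrix.mul_one]
  -- conclusion
  intro i j hij
  rcases hij with hi | hj
  · rw [Matrix.sub_apply, hMrow i j hi, sub_self]
  · rw [Matrix.sub_apply, hMcol i j hj, sub_self]
end

section
/- Suppose in addition that Û commutes with a_j and a_j† for ALL j = 1,…,d (the non-interacting case, p = 0). Then for every admissible z, G(z)(z·I_d − h) = I_d and (z·I_d − h)G(z) = I_d; in particular z·I_d − h is invertible and G(z) = (z·I_d − h)⁻¹. -/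
set_option maxHeartbeats 1000000
set_option synthInstance.maxHeartbeats 400000


open scoped InnerProductSpace
open ContinuousLinearMap

/-- **The non-interacting Green's function (Remark 1.3).**
If `Û` commutes with all annihilation and creation operators, then
`G(z)(z·I − h) = I = (z·I − h)G(z)`; in particular `z·I − h` is invertible
and `G(z) = (z·I − h)⁻¹`. -/
theorem non_interacting_green_function
    (d : ℕ) (V : Type*) [NormedAddCommGroup V] [InnerProductSpace ℂ V]
    [FiniteDimensional ℂ V]
    (a : Fin d → (V →L[ℂ] V))
    (hcar1 : ∀ i j : Fin d, a i * a j + a j * a i = 0)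
    (hcar2 : ∀ i j : Fin d,
      a i * adjoint (a j) + adjoint (a j) * a i = if i = j then 1 else 0)
    (h : Matrix (Fin d) (Fin d) ℂ) (hh : h.IsHermitian)
    (Uop : V →L[ℂ] V) (hUsa : IsSelfAdjoint Uop)
    (hUcomm : ∀ j : Fin d,
      Uop * a j = a j * Uop ∧ Uop * adjoint (a j) = adjoint (a j) * Uop)
    (H : V →L[ℂ] V)
    (hHdef : H = (∑ i, ∑ j, h i j • (adjoint (a i) * a j)) + Uop)
    (Ψ : V) (hΨ : ‖Ψ‖ = 1) (E : ℝ) (hE : H Ψ = (E : ℂ) • Ψ)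
    (z : ℂ)
    (hz1 : IsUnit (z • (1 : V →L[ℂ] V) - (H - (E : ℂ) • 1)))
    (hz2 : IsUnit (z • (1 : V →L[ℂ] V) + (H - (E : ℂ) • 1)))
    (G : Matrix (Fin d) (Fin d) ℂ)
    (hGdef : ∀ i j : Fin d, G i j =
      ⟪Ψ, ((a i * Ring.inverse (z • (1 : V →L[ℂ] V) - (H - (E : ℂ) • 1)) *
          adjoint (a j)) Ψ)⟫_ℂ +
      ⟪Ψ, ((adjoint (a j) * Ring.inverse (z • (1 : V →L[ℂ] V) + (H - (E : ℂ) • 1)) *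
          a i) Ψ)⟫_ℂ)
 :
    G * (z • (1 : Matrix (Fin d) (Fin d) ℂ) - h) = 1 ∧
    (z • (1 : Matrix (Fin d) (Fin d) ℂ) - h) * G = 1 ∧
    IsUnit (z • (1 : Matrix (Fin d) (Fin d) ℂ) - h).det ∧
    G = (z • (1 : Matrix (Fin d) (Fin d) ℂ) - h)⁻¹ := by
  classical
  set A : V →L[ℂ] V := H - (E : ℂ) • 1 with hA
  set M : Matrix (Fin d) (Fin d) ℂ := z • (1 : Matrix (Fin d) (Fin d) ℂ) - h with hM
  -- basic CAR consequences
  have hcc : ∀ i j : Fin d,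
      adjoint (a i) * adjoint (a j) + adjoint (a j) * adjoint (a i) = 0 := by
    intro i j
    have := congrArg star (hcar1 j i)
    simpa [star_add, star_mul, ContinuousLinearMap.star_eq_adjoint] using this
  have term1 : ∀ i k j : Fin d,
      (adjoint (a i) * a k) * adjoint (a j) - adjoint (a j) * (adjoint (a i) * a k)
        = if k = j then adjoint (a i) else 0 := by
    intro i k j
    have h2 : a k * adjoint (a j) = (if k = j then 1 else 0) - adjoint (a j) * a k :=
      eq_sub_of_add_eq (hcar2 k j)
    have h3 : adjoint (a j) * adjoint (a i) = -(adjoint (a i) * adjoint (a j)) :=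
      eq_neg_of_add_eq_zero_right (hcc i j)
    rw [mul_assoc, h2, ← mul_assoc, h3, mul_sub, mul_ite, mul_one, mul_zero, neg_mul,
      sub_neg_eq_add, mul_assoc, sub_add_cancel]
  have term2 : ∀ i k l : Fin d,
      (adjoint (a i) * a k) * a l - a l * (adjoint (a i) * a k)
        = -(if l = i then a k else 0) := by
    intro i k l
    have h2 : a l * adjoint (a i) = (if l = i then 1 else 0) - adjoint (a i) * a l :=
      eq_sub_of_add_eq (hcar2 l i)
    have h3 : a k * a l = -(a l * a k) :=
      eq_neg_of_add_eq_zero_left (hcar1 k l)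
    rw [mul_assoc, h3, mul_neg, ← mul_assoc, ← mul_assoc, h2, sub_mul, ite_mul, one_mul,
      zero_mul, mul_assoc]
    abel
  -- commutators with H
  have hHc : ∀ j, H * adjoint (a j) - adjoint (a j) * H = ∑ i, h i j • adjoint (a i) := by
    intro j
    rw [hHdef, add_mul, mul_add, (hUcomm j).2, add_sub_add_right_eq_sub,
      Finset.sum_mul, Finset.mul_sum, ← Finset.sum_sub_distrib]
    refine Finset.sum_congr rfl fun i _ => ?_
    rw [Finset.sum_mul, Finset.mul_sum, ← Finset.sum_sub_distrib]
    calc ∑ k, ((h i k • (adjoint (a i) * a k)) * adjoint (a j)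
            - adjoint (a j) * (h i k • (adjoint (a i) * a k)))
        = ∑ k, h i k • (if k = j then adjoint (a i) else 0) := by
          refine Finset.sum_congr rfl fun k _ => ?_
          rw [smul_mul_assoc, mul_smul_comm, ← smul_sub, term1]
      _ = h i j • adjoint (a i) := by
          simp [smul_ite]
  have hHa : ∀ l, H * a l - a l * H = -∑ k, h l k • a k := by
    intro l
    rw [hHdef, add_mul, mul_add, (hUcomm l).1, add_sub_add_right_eq_sub,
      Finset.sum_mul, Finset.mul_sum, ← Finset.sum_sub_distrib]
    calc ∑ i, ((∑ k, h i k • (adjoint (a i) * a k)) * a l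
            - a l * ∑ k, h i k • (adjoint (a i) * a k))
        = ∑ i, ∑ k, h i k • -(if l = i then a k else 0) := by
          refine Finset.sum_congr rfl fun i _ => ?_
          rw [Finset.sum_mul, Finset.mul_sum, ← Finset.sum_sub_distrib]
          refine Finset.sum_congr rfl fun k _ => ?_
          rw [smul_mul_assoc, mul_smul_comm, ← smul_sub, term2]
      _ = -∑ k, h l k • a k := by
          simp [smul_ite, Finset.sum_ite_eq]
  -- vector-level identities
  have hAΨ : A Ψ = 0 := by
    rw [hA, ContinuousLinearMap.sub_apply, ContinuousLinearMap.smul_apply,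
      ContinuousLinearMap.one_apply, hE, sub_self]
  have keyc : ∀ j, A (adjoint (a j) Ψ) = ∑ i, h i j • (adjoint (a i) Ψ) := by
    intro j
    have e := congrArg (fun T : V →L[ℂ] V => T Ψ) (hHc j)
    simp only [ContinuousLinearMap.sub_apply, ContinuousLinearMap.mul_apply,
      ContinuousLinearMap.sum_apply, ContinuousLinearMap.smul_apply] at e
    have e2 : A (adjoint (a j) Ψ) = H (adjoint (a j) Ψ) - adjoint (a j) (H Ψ) := by
      rw [hA, ContinuousLinearMap.sub_apply, ContinuousLinearMap.smul_apply,
        ContinuousLinearMap.one_apply, hE, map_smul]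
    rw [e2, e]
  have keya : ∀ l, A (a l Ψ) = -∑ k, h l k • (a k Ψ) := by
    intro l
    have e := congrArg (fun T : V →L[ℂ] V => T Ψ) (hHa l)
    simp only [ContinuousLinearMap.sub_apply, ContinuousLinearMap.mul_apply,
      ContinuousLinearMap.neg_apply, ContinuousLinearMap.sum_apply,
      ContinuousLinearMap.smul_apply] at e
    have e2 : A (a l Ψ) = H (a l Ψ) - a l (H Ψ) := by
      rw [hA, ContinuousLinearMap.sub_apply, ContinuousLinearMap.smul_apply,
        ContinuousLinearMap.one_apply, hE, map_smul]
    rw [e2, e]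
  -- self-adjointness of A
  have hHsa : IsSelfAdjoint H := by
    rw [hHdef]
    refine IsSelfAdjoint.add ?_ hUsa
    rw [IsSelfAdjoint]
    calc star (∑ i, ∑ j, h i j • (adjoint (a i) * a j))
        = ∑ i, ∑ j, h j i • (adjoint (a j) * a i) := by
          rw [star_sum]
          refine Finset.sum_congr rfl fun i _ => ?_
          rw [star_sum]
          refine Finset.sum_congr rfl fun j _ => ?_
          rw [star_smul, star_mul, ContinuousLinearMap.star_eq_adjoint,
            ContinuousLinearMap.star_eq_adjoint, adjoint_adjoint, hh.apply j i]
      _ = ∑ i, ∑ j, h i j • (adjoint (a i) * a j) := Finset.sum_comm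
  have hAsa : IsSelfAdjoint A := by
    rw [hA]
    refine hHsa.sub ?_
    rw [IsSelfAdjoint, star_smul, star_one]
    simp [Complex.conj_ofReal]
  -- inverses
  set R : V →L[ℂ] V := Ring.inverse (z • (1 : V →L[ℂ] V) - A) with hR
  set S : V →L[ℂ] V := Ring.inverse (z • (1 : V →L[ℂ] V) + A) with hS
  have hRl : R * (z • (1 : V →L[ℂ] V) - A) = 1 := Ring.inverse_mul_cancel _ hz1
  have hSr : (z • (1 : V →L[ℂ] V) + A) * S = 1 := Ring.mul_inverse_cancel _ hz2
  have fact1 : ∀ l, (z • (1 : V →L[ℂ] V) - A) (adjoint (a l) Ψ)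
      = ∑ j, M j l • (adjoint (a j) Ψ) := by
    intro l
    have e : ∀ j, M j l • (adjoint (a j) Ψ)
        = (if j = l then z else 0) • (adjoint (a j) Ψ) - h j l • (adjoint (a j) Ψ) := by
      intro j
      rw [hM, Matrix.sub_apply, Matrix.smul_apply, Matrix.one_apply, sub_smul,
        smul_eq_mul, mul_ite, mul_one, mul_zero]
    simp only [e]
    rw [Finset.sum_sub_distrib]
    simp only [ite_smul, zero_smul, Finset.sum_ite_eq', Finset.mem_univ, if_true]
    rw [ContinuousLinearMap.sub_apply, ContinuousLinearMap.smul_apply,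
      ContinuousLinearMap.one_apply, keyc l]
  have fact2 : ∀ l, ((starRingEnd ℂ z) • (1 : V →L[ℂ] V) + A) (a l Ψ)
      = ∑ j, (starRingEnd ℂ (M j l)) • (a j Ψ) := by
    intro l
    have e : ∀ j, (starRingEnd ℂ (M j l)) • (a j Ψ)
        = (if j = l then (starRingEnd ℂ z) else 0) • (a j Ψ) - h l j • (a j Ψ) := by
      intro j
      rw [hM, Matrix.sub_apply, Matrix.smul_apply, Matrix.one_apply, map_sub, sub_smul]
      congr 2
      · rcases eq_or_ne j l with rfl | hne
        · simp
        · simp [hne]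
      · rw [show (starRingEnd ℂ) (h j l) = h l j from hh.apply l j]
    simp only [e]
    rw [Finset.sum_sub_distrib]
    simp only [ite_smul, zero_smul, Finset.sum_ite_eq', Finset.mem_univ, if_true]
    rw [ContinuousLinearMap.add_apply, ContinuousLinearMap.smul_apply,
      ContinuousLinearMap.one_apply, keya l, sub_eq_add_neg]
  have hadj2 : adjoint (z • (1 : V →L[ℂ] V) + A)
      = (starRingEnd ℂ z) • (1 : V →L[ℂ] V) + A := by
    rw [← ContinuousLinearMap.star_eq_adjoint, star_add, star_smul, star_one, hAsa.star_eq]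
    rfl
  -- the entry computation
  have entry : ∀ i l : Fin d, ∑ j, G i j * M j l = if i = l then 1 else 0 := by
    intro i l
    have split : ∀ j, G i j * M j l
        = M j l * ⟪Ψ, a i (R (adjoint (a j) Ψ))⟫_ℂ
          + M j l * ⟪Ψ, adjoint (a j) (S (a i Ψ))⟫_ℂ := by
      intro j
      rw [hGdef i j]
      simp only [ContinuousLinearMap.mul_apply]
      ring
    simp only [split]
    rw [Finset.sum_add_distrib]
    have S1 : ∑ j, M j l * ⟪Ψ, a i (R (adjoint (a j) Ψ))⟫_ℂ
        = ⟪Ψ, a i (adjoint (a l) Ψ)⟫_ℂ := by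
      have e : ∀ j, M j l * ⟪Ψ, a i (R (adjoint (a j) Ψ))⟫_ℂ
          = ⟪Ψ, a i (R (M j l • (adjoint (a j) Ψ)))⟫_ℂ := by
        intro j
        rw [map_smul, map_smul, inner_smul_right]
      simp only [e]
      rw [← inner_sum, ← map_sum (a i), ← map_sum R, ← fact1 l]
      have e2 := congrArg (fun T : V →L[ℂ] V => T (adjoint (a l) Ψ)) hRl
      simp only [ContinuousLinearMap.mul_apply, ContinuousLinearMap.one_apply] at e2
      rw [e2]
    have S2 : ∑ j, M j l * ⟪Ψ, adjoint (a j) (S (a i Ψ))⟫_ℂ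
        = ⟪Ψ, adjoint (a l) (a i Ψ)⟫_ℂ := by
      have e : ∀ j, M j l * ⟪Ψ, adjoint (a j) (S (a i Ψ))⟫_ℂ
          = ⟪(starRingEnd ℂ (M j l)) • (a j Ψ), S (a i Ψ)⟫_ℂ := by
        intro j
        rw [adjoint_inner_right, inner_smul_left]
        simp
      simp only [e]
      rw [← sum_inner, ← fact2 l, ← hadj2, adjoint_inner_left]
      have e2 := congrArg (fun T : V →L[ℂ] V => T (a i Ψ)) hSr
      simp only [ContinuousLinearMap.mul_apply, ContinuousLinearMap.one_apply] at e2
      rw [e2, ← adjoint_inner_right]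
    rw [S1, S2]
    have e3 : ⟪Ψ, a i (adjoint (a l) Ψ)⟫_ℂ + ⟪Ψ, adjoint (a l) (a i Ψ)⟫_ℂ
        = ⟪Ψ, ((a i * adjoint (a l) + adjoint (a l) * a i) Ψ)⟫_ℂ := by
      rw [ContinuousLinearMap.add_apply, inner_add_right]
      rfl
    rw [e3, hcar2 i l]
    rcases eq_or_ne i l with rfl | hne
    · simp [inner_self_eq_norm_sq_to_K, hΨ]
    · simp [hne]
  have hGM : G * M = 1 := by
    ext i l
    rw [Matrix.mul_apply, entry i l, Matrix.one_apply]
  have hMG : M * G = 1 := mul_eq_one_comm.mp hGM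
  exact ⟨hGM, hMG, Matrix.isUnit_det_of_left_inverse hGM, (Matrix.inv_eq_left_inv hGM).symm⟩
end

section
/- For every j > p and every admissible z ∈ ℂ, the hole-particle and hole-hole anomalous Green's functions satisfy [G^{hp}(z)(z·I_d − h) − G^{hh}(z)Δ†]_{ij} = δ_{ij} for all i = 1,…,d. -/
open scoped InnerProductSpace
open ContinuousLinearMap

set_option maxHeartbeats 2000000 in
set_option synthInstance.maxHeartbeats 400000 in
/-- **Anomalous column identity (hole-particle / hole-hole).**
For an anomalous impurity Hamiltonian with fragment `{1,…,p}` and any column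
index `j` outside the fragment,
`[G^{hp}(z)(z·I − h) − G^{hh}(z)Δ†]_{ij} = δ_{ij}` for all `i`. -/
theorem anomalous_hp_hh_column_identity
    (d p : ℕ) (V : Type*) [NormedAddCommGroup V] [InnerProductSpace ℂ V]
    [FiniteDimensional ℂ V]
    (a : Fin d → (V →L[ℂ] V))
    (hcar1 : ∀ i j : Fin d, a i * a j + a j * a i = 0)
    (hcar2 : ∀ i j : Fin d,
      a i * adjoint (a j) + adjoint (a j) * a i = if i = j then 1 else 0)
    (h : Matrix (Fin d) (Fin d) ℂ) (hh : h.IsHermitian)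
    (Δ : Matrix (Fin d) (Fin d) ℂ) (hΔ : Δ.transpose = -Δ)
    (HNA HA : V →L[ℂ] V)
    (hHNA : HNA = ∑ i, ∑ j, h i j • (adjoint (a i) * a j))
    (hHA : HA = (1/2 : ℂ) • ∑ i, ∑ j, Δ i j • (adjoint (a i) * adjoint (a j)))
    (Uop : V →L[ℂ] V) (hUsa : IsSelfAdjoint Uop)
    (hUcomm : ∀ j : Fin d, p ≤ (j : ℕ) →
      Uop * a j = a j * Uop ∧ Uop * adjoint (a j) = adjoint (a j) * Uop)
    (H : V →L[ℂ] V) (hHdef : H = HNA + HA + adjoint HA + Uop)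
    (Φ : V) (hΦ : ‖Φ‖ = 1) (E : ℝ) (hE : H Φ = (E : ℂ) • Φ)
    (z : ℂ)
    (hz1 : IsUnit (z • (1 : V →L[ℂ] V) - (H - (E : ℂ) • 1)))
    (hz2 : IsUnit (z • (1 : V →L[ℂ] V) + (H - (E : ℂ) • 1)))
    (Ghp Gpp Ghh Gph : Matrix (Fin d) (Fin d) ℂ)
    (hGhp : ∀ i j : Fin d, Ghp i j =
      ⟪Φ, ((a i * Ring.inverse (z • (1 : V →L[ℂ] V) - (H - (E : ℂ) • 1)) *
          adjoint (a j)) Φ)⟫_ℂ +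
      ⟪Φ, ((adjoint (a j) * Ring.inverse (z • (1 : V →L[ℂ] V) + (H - (E : ℂ) • 1)) *
          a i) Φ)⟫_ℂ)
    (hGpp : ∀ i j : Fin d, Gpp i j =
      ⟪Φ, ((adjoint (a i) * Ring.inverse (z • (1 : V →L[ℂ] V) - (H - (E : ℂ) • 1)) *
          adjoint (a j)) Φ)⟫_ℂ +
      ⟪Φ, ((adjoint (a j) * Ring.inverse (z • (1 : V →L[ℂ] V) + (H - (E : ℂ) • 1)) *
          adjoint (a i)) Φ)⟫_ℂ)
    (hGhh : ∀ i j : Fin d, Ghh i j =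
      ⟪Φ, ((a i * Ring.inverse (z • (1 : V →L[ℂ] V) - (H - (E : ℂ) • 1)) *
          a j) Φ)⟫_ℂ +
      ⟪Φ, ((a j * Ring.inverse (z • (1 : V →L[ℂ] V) + (H - (E : ℂ) • 1)) *
          a i) Φ)⟫_ℂ)
    (hGph : ∀ i j : Fin d, Gph i j =
      ⟪Φ, ((adjoint (a i) * Ring.inverse (z • (1 : V →L[ℂ] V) - (H - (E : ℂ) • 1)) *
          a j) Φ)⟫_ℂ +
      ⟪Φ, ((a j * Ring.inverse (z • (1 : V →L[ℂ] V) + (H - (E : ℂ) • 1)) *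
          adjoint (a i)) Φ)⟫_ℂ)
    (j : Fin d) (hj : p ≤ (j : ℕ)) (i : Fin d) :
    (Ghp * (z • (1 : Matrix (Fin d) (Fin d) ℂ) - h) - Ghh * Δ.conjTranspose) i j
      = (if i = j then 1 else 0) := by
  classical
  set K : V →L[ℂ] V := H - (E : ℂ) • 1 with hKdef
  have star_a : ∀ k : Fin d, star (a k) = adjoint (a k) := fun k =>
    ContinuousLinearMap.star_eq_adjoint (a k)
  have star_b : ∀ k : Fin d, star (adjoint (a k)) = a k := fun k => by
    rw [← star_a, star_star]
  have car2 : ∀ i' k : Fin d, a i' * adjoint (a k)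
      = (if i' = k then 1 else 0) - adjoint (a k) * a i' :=
    fun i' k => eq_sub_of_add_eq (hcar2 i' k)
  have hcar1b : ∀ i' k : Fin d,
      adjoint (a i') * adjoint (a k) + adjoint (a k) * adjoint (a i') = 0 := by
    intro i' k
    have h0 := congrArg star (hcar1 k i')
    simpa [star_add, star_mul, star_a] using h0
  have car1b : ∀ i' k : Fin d,
      adjoint (a i') * adjoint (a k) = -(adjoint (a k) * adjoint (a i')) :=
    fun i' k => eq_neg_of_add_eq_zero_left (hcar1b i' k)
  -- pointwise commutators
  have t1 : ∀ i' k : Fin d, (adjoint (a i') * a k) * adjoint (a j)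
      - adjoint (a j) * (adjoint (a i') * a k)
      = if k = j then adjoint (a i') else 0 := by
    intro i' k
    rw [mul_assoc, car2 k j, ← mul_assoc (adjoint (a j)), car1b j i']
    split_ifs <;> noncomm_ring
  have t2 : ∀ i' k : Fin d, (adjoint (a i') * adjoint (a k)) * adjoint (a j)
      - adjoint (a j) * (adjoint (a i') * adjoint (a k)) = 0 := by
    intro i' k
    calc (adjoint (a i') * adjoint (a k)) * adjoint (a j)
        - adjoint (a j) * (adjoint (a i') * adjoint (a k))
        = adjoint (a i') * (adjoint (a k) * adjoint (a j))
          - adjoint (a j) * adjoint (a i') * adjoint (a k) := by noncomm_ring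
      _ = 0 := by rw [car1b k j, car1b j i']; noncomm_ring
  have t3 : ∀ i' k : Fin d, (a k * a i') * adjoint (a j)
      - adjoint (a j) * (a k * a i')
      = (if i' = j then a k else 0) - (if k = j then a i' else 0) := by
    intro i' k
    rw [mul_assoc, car2 i' j, mul_sub, ← mul_assoc (a k), car2 k j]
    split_ifs <;> noncomm_ring
  -- commutators with the pieces of H
  have c_NA : HNA * adjoint (a j) - adjoint (a j) * HNA
      = ∑ k, h k j • adjoint (a k) := by
    rw [hHNA, Finset.sum_mul, Finset.mul_sum, ← Finset.sum_sub_distrib]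
    refine Finset.sum_congr rfl fun i' _ => ?_
    rw [Finset.sum_mul, Finset.mul_sum, ← Finset.sum_sub_distrib]
    have e : ∀ k : Fin d, h i' k • (adjoint (a i') * a k) * adjoint (a j)
        - adjoint (a j) * (h i' k • (adjoint (a i') * a k))
        = if k = j then h i' k • adjoint (a i') else 0 := by
      intro k
      rw [smul_mul_assoc, mul_smul_comm, ← smul_sub, t1 i' k]
      split_ifs <;> simp
    simp only [e]
    simp [Finset.sum_ite_eq']
  have c_A : HA * adjoint (a j) - adjoint (a j) * HA = 0 := by
    rw [hHA, smul_mul_assoc, mul_smul_comm, ← smul_sub,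
      Finset.sum_mul, Finset.mul_sum, ← Finset.sum_sub_distrib]
    have e : ∀ i' : Fin d, (∑ k, Δ i' k • (adjoint (a i') * adjoint (a k))) * adjoint (a j)
        - adjoint (a j) * ∑ k, Δ i' k • (adjoint (a i') * adjoint (a k)) = 0 := by
      intro i'
      rw [Finset.sum_mul, Finset.mul_sum, ← Finset.sum_sub_distrib]
      refine Finset.sum_eq_zero fun k _ => ?_
      rw [smul_mul_assoc, mul_smul_comm, ← smul_sub, t2 i' k, smul_zero]
    simp [e]
  have hHAad : adjoint HA = (1/2 : ℂ) • ∑ i', ∑ k, star (Δ i' k) • (a k * a i') := by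
    rw [← ContinuousLinearMap.star_eq_adjoint, hHA, star_smul, star_sum]
    congr 1
    · norm_num
    · refine Finset.sum_congr rfl fun i' _ => ?_
      rw [star_sum]
      refine Finset.sum_congr rfl fun k _ => ?_
      rw [star_smul, star_mul, star_b, star_b]
  have hΔ' : ∀ x y, Δ x y = -(Δ y x) := by
    intro x y
    have h0 := congrFun (congrFun hΔ y) x
    simpa [Matrix.transpose_apply, Matrix.neg_apply] using h0
  have c_Aad : adjoint HA * adjoint (a j) - adjoint (a j) * adjoint HA
      = ∑ k, star (Δ j k) • a k := by
    rw [hHAad, smul_mul_assoc, mul_smul_comm, ← smul_sub,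
      Finset.sum_mul, Finset.mul_sum, ← Finset.sum_sub_distrib]
    have e1 : ∀ i' : Fin d, (∑ k, star (Δ i' k) • (a k * a i')) * adjoint (a j)
        - adjoint (a j) * ∑ k, star (Δ i' k) • (a k * a i')
        = (if i' = j then ∑ k, star (Δ i' k) • a k else 0) - star (Δ i' j) • a i' := by
      intro i'
      rw [Finset.sum_mul, Finset.mul_sum, ← Finset.sum_sub_distrib]
      have e : ∀ k : Fin d, star (Δ i' k) • (a k * a i') * adjoint (a j)
          - adjoint (a j) * (star (Δ i' k) • (a k * a i'))
          = (if i' = j then star (Δ i' k) • a k else 0)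
            - (if k = j then star (Δ i' k) • a i' else 0) := by
        intro k
        rw [smul_mul_assoc, mul_smul_comm, ← smul_sub, t3 i' k]
        split_ifs <;> simp [smul_sub]
      simp only [e]
      rw [Finset.sum_sub_distrib]
      congr 1
      · by_cases hij : i' = j <;> simp [hij]
      · simp [Finset.sum_ite_eq']
    simp only [e1]
    rw [Finset.sum_sub_distrib]
    have e2 : (∑ i', if i' = j then ∑ k, star (Δ i' k) • a k else 0)
        = ∑ k, star (Δ j k) • a k := by simp [Finset.sum_ite_eq']
    have e3 : (∑ i', star (Δ i' j) • a i') = -∑ k, star (Δ j k) • a k := by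
      rw [← Finset.sum_neg_distrib]
      refine Finset.sum_congr rfl fun k _ => ?_
      rw [hΔ' k j]
      simp
    rw [e2, e3, sub_neg_eq_add, ← two_smul ℂ, smul_smul]
    norm_num
  have c_U : Uop * adjoint (a j) - adjoint (a j) * Uop = 0 := by
    rw [(hUcomm j hj).2, sub_self]
  set C : V →L[ℂ] V := (∑ k, h k j • adjoint (a k)) + ∑ k, star (Δ j k) • a k with hCdef
  have hcommK : K * adjoint (a j) - adjoint (a j) * K = C := by
    have hK1 : K * adjoint (a j) - adjoint (a j) * K
        = H * adjoint (a j) - adjoint (a j) * H := by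
      rw [hKdef]
      simp only [sub_mul, mul_sub, smul_mul_assoc, mul_smul_comm, one_mul, mul_one]
      abel
    have expand : (HNA + HA + adjoint HA + Uop) * adjoint (a j)
        - adjoint (a j) * (HNA + HA + adjoint HA + Uop)
        = (HNA * adjoint (a j) - adjoint (a j) * HNA)
          + (HA * adjoint (a j) - adjoint (a j) * HA)
          + (adjoint HA * adjoint (a j) - adjoint (a j) * adjoint HA)
          + (Uop * adjoint (a j) - adjoint (a j) * Uop) := by noncomm_ring
    rw [hK1, hHdef, expand, c_NA, c_A, c_Aad, c_U, hCdef]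
    abel
  -- resolvents
  have hRmK : Ring.inverse (z • (1 : V →L[ℂ] V) - K) * (z • (1 : V →L[ℂ] V) - K) = 1 :=
    Ring.inverse_mul_cancel _ hz1
  have hKRp : (z • (1 : V →L[ℂ] V) + K) * Ring.inverse (z • (1 : V →L[ℂ] V) + K) = 1 :=
    Ring.mul_inverse_cancel _ hz2
  have hKΦ : K Φ = 0 := by
    rw [hKdef]
    simp [ContinuousLinearMap.sub_apply, ContinuousLinearMap.smul_apply,
      ContinuousLinearMap.one_apply, hE]
  have hHNAsa : star HNA = HNA := by
    rw [hHNA, star_sum]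
    have e : ∀ i' : Fin d, star (∑ k, h i' k • (adjoint (a i') * a k))
        = ∑ k, h k i' • (adjoint (a k) * a i') := by
      intro i'
      rw [star_sum]
      refine Finset.sum_congr rfl fun k _ => ?_
      rw [star_smul, star_mul, star_b, star_a, hh.apply k i']
    simp only [e]
    exact Finset.sum_comm
  have hKsa : star K = K := by
    rw [hKdef, hHdef]
    simp only [star_sub, star_add, hHNAsa, hUsa.star_eq,
      ← ContinuousLinearMap.star_eq_adjoint, star_star, star_smul, star_one,
      Complex.star_def, Complex.conj_ofReal]
    abel
  set X : V →L[ℂ] V := z • adjoint (a j) - C with hXdef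
  have hX1op : (z • (1 : V →L[ℂ] V) - K) * adjoint (a j) = X - adjoint (a j) * K := by
    rw [hXdef, ← hcommK]
    simp only [sub_mul, smul_mul_assoc, one_mul]
    abel
  have hRmX : (Ring.inverse (z • (1 : V →L[ℂ] V) - K)) (X Φ) = adjoint (a j) Φ := by
    have happ : X Φ = ((z • (1 : V →L[ℂ] V) - K) * adjoint (a j)) Φ := by
      rw [hX1op]
      simp [ContinuousLinearMap.sub_apply, ContinuousLinearMap.mul_apply, hKΦ]
    rw [happ, ← ContinuousLinearMap.mul_apply, ← mul_assoc, hRmK, one_mul]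
  have hT1 : ((a i * Ring.inverse (z • (1 : V →L[ℂ] V) - K) * X) Φ)
      = ((a i * adjoint (a j)) Φ) := by
    rw [ContinuousLinearMap.mul_apply, ContinuousLinearMap.mul_apply, hRmX,
      ContinuousLinearMap.mul_apply]
  have hX2op : X = adjoint (a j) * (z • (1 : V →L[ℂ] V) + K) - K * adjoint (a j) := by
    rw [hXdef, ← hcommK]
    simp only [mul_add, mul_smul_comm, mul_one]
    abel
  have hXR : X * Ring.inverse (z • (1 : V →L[ℂ] V) + K) * a i
      = adjoint (a j) * a i
        - K * (adjoint (a j) * Ring.inverse (z • (1 : V →L[ℂ] V) + K) * a i) := by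
    calc X * Ring.inverse (z • (1 : V →L[ℂ] V) + K) * a i
        = adjoint (a j) * ((z • (1 : V →L[ℂ] V) + K)
            * Ring.inverse (z • (1 : V →L[ℂ] V) + K)) * a i
          - K * (adjoint (a j) * Ring.inverse (z • (1 : V →L[ℂ] V) + K) * a i) := by
          rw [hX2op]; noncomm_ring
      _ = _ := by rw [hKRp, mul_one]
  have hT2 : ⟪Φ, ((X * Ring.inverse (z • (1 : V →L[ℂ] V) + K) * a i) Φ)⟫_ℂ
      = ⟪Φ, ((adjoint (a j) * a i) Φ)⟫_ℂ := by
    rw [hXR, ContinuousLinearMap.sub_apply, inner_sub_right]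
    have hzero : ⟪Φ, ((K * (adjoint (a j) * Ring.inverse (z • (1 : V →L[ℂ] V) + K) * a i)) Φ)⟫_ℂ
        = 0 := by
      have hadj : adjoint K = K := by rw [← ContinuousLinearMap.star_eq_adjoint, hKsa]
      rw [ContinuousLinearMap.mul_apply, ← ContinuousLinearMap.adjoint_inner_left,
        hadj, hKΦ, inner_zero_left]
    rw [hzero, sub_zero]
  have hsum : ⟪Φ, ((a i * Ring.inverse (z • (1 : V →L[ℂ] V) - K) * X) Φ)⟫_ℂ
      + ⟪Φ, ((X * Ring.inverse (z • (1 : V →L[ℂ] V) + K) * a i) Φ)⟫_ℂ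
      = if i = j then 1 else 0 := by
    rw [hT1, hT2, ← inner_add_right, ← ContinuousLinearMap.add_apply, hcar2 i j]
    split_ifs
    · simp [ContinuousLinearMap.one_apply, inner_self_eq_norm_sq_to_K, hΦ]
    · simp
  -- expansions
  have expand1 : ⟪Φ, ((a i * Ring.inverse (z • (1 : V →L[ℂ] V) - K) * X) Φ)⟫_ℂ
      = z * ⟪Φ, ((a i * Ring.inverse (z • (1 : V →L[ℂ] V) - K) * adjoint (a j)) Φ)⟫_ℂ
        - ∑ k, h k j * ⟪Φ, ((a i * Ring.inverse (z • (1 : V →L[ℂ] V) - K) * adjoint (a k)) Φ)⟫_ℂ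
        - ∑ k, star (Δ j k) * ⟪Φ, ((a i * Ring.inverse (z • (1 : V →L[ℂ] V) - K) * a k) Φ)⟫_ℂ := by
    simp only [hXdef, hCdef, mul_sub, mul_add, Finset.mul_sum, mul_smul_comm,
      ContinuousLinearMap.sub_apply, ContinuousLinearMap.add_apply,
      ContinuousLinearMap.smul_apply, ContinuousLinearMap.sum_apply,
      inner_sub_right, inner_add_right, inner_smul_right, inner_sum]
    ring
  have expand2 : ⟪Φ, ((X * Ring.inverse (z • (1 : V →L[ℂ] V) + K) * a i) Φ)⟫_ℂ
      = z * ⟪Φ, ((adjoint (a j) * Ring.inverse (z • (1 : V →L[ℂ] V) + K) * a i) Φ)⟫_ℂ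
        - ∑ k, h k j * ⟪Φ, ((adjoint (a k) * Ring.inverse (z • (1 : V →L[ℂ] V) + K) * a i) Φ)⟫_ℂ
        - ∑ k, star (Δ j k) * ⟪Φ, ((a k * Ring.inverse (z • (1 : V →L[ℂ] V) + K) * a i) Φ)⟫_ℂ := by
    simp only [hXdef, hCdef, sub_mul, add_mul, Finset.sum_mul, smul_mul_assoc,
      ContinuousLinearMap.sub_apply, ContinuousLinearMap.add_apply,
      ContinuousLinearMap.smul_apply, ContinuousLinearMap.sum_apply,
      inner_sub_right, inner_add_right, inner_smul_right, inner_sum]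
    ring
  have expandM : (Ghp * (z • (1 : Matrix (Fin d) (Fin d) ℂ) - h) - Ghh * Δ.conjTranspose) i j
      = z * Ghp i j - ∑ k, h k j * Ghp i k - ∑ k, star (Δ j k) * Ghh i k := by
    simp only [Matrix.sub_apply, Matrix.mul_apply, Matrix.smul_apply, Matrix.one_apply,
      Matrix.conjTranspose_apply, smul_eq_mul, mul_sub, mul_ite, mul_one, mul_zero,
      Finset.sum_sub_distrib]
    rw [Finset.sum_ite_eq' Finset.univ j (fun k => Ghp i k * z)]
    simp only [Finset.mem_univ, if_true]
    rw [show (∑ x : Fin d, Ghp i x * h x j) = ∑ k, h k j * Ghp i k from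
        Finset.sum_congr rfl fun k _ => mul_comm _ _,
      show (∑ x : Fin d, Ghh i x * star (Δ j x)) = ∑ k, star (Δ j k) * Ghh i k from
        Finset.sum_congr rfl fun k _ => mul_comm _ _]
    ring
  rw [expandM, ← hsum, expand1, expand2]
  simp only [hGhp, hGhh, mul_add, Finset.sum_add_distrib]
  ring
end

section
/- For every j > p and every admissible z ∈ ℂ, the anomalous Green's functions satisfy [−G^{hp}(z)Δ + G^{hh}(z)(z·I_d + hᵀ)]_{ij} = 0 for all i = 1,…,d. -/
open scoped InnerProductSpace
open ContinuousLinearMap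

set_option maxHeartbeats 1600000

/-- **Anomalous column identity (hole-particle / hole-hole).**
For an anomalous impurity Hamiltonian with fragment `{1,…,p}` and any column
index `j` outside the fragment,
`[−G^{hp}(z)Δ + G^{hh}(z)(z·I + hᵀ)]_{ij} = 0` for all `i`. -/
theorem anomalous_hp_hh_second_column_identity
    (d p : ℕ) (V : Type*) [NormedAddCommGroup V] [InnerProductSpace ℂ V]
    [FiniteDimensional ℂ V]
    (a : Fin d → (V →L[ℂ] V))
    (hcar1 : ∀ i j : Fin d, a i * a j + a j * a i = 0)
    (hcar2 : ∀ i j : Fin d,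
      a i * adjoint (a j) + adjoint (a j) * a i = if i = j then 1 else 0)
    (h : Matrix (Fin d) (Fin d) ℂ) (hh : h.IsHermitian)
    (Δ : Matrix (Fin d) (Fin d) ℂ) (hΔ : Δ.transpose = -Δ)
    (HNA HA : V →L[ℂ] V)
    (hHNA : HNA = ∑ i, ∑ j, h i j • (adjoint (a i) * a j))
    (hHA : HA = (1/2 : ℂ) • ∑ i, ∑ j, Δ i j • (adjoint (a i) * adjoint (a j)))
    (Uop : V →L[ℂ] V) (hUsa : IsSelfAdjoint Uop)
    (hUcomm : ∀ j : Fin d, p ≤ (j : ℕ) →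
      Uop * a j = a j * Uop ∧ Uop * adjoint (a j) = adjoint (a j) * Uop)
    (H : V →L[ℂ] V) (hHdef : H = HNA + HA + adjoint HA + Uop)
    (Φ : V) (hΦ : ‖Φ‖ = 1) (E : ℝ) (hE : H Φ = (E : ℂ) • Φ)
    (z : ℂ)
    (hz1 : IsUnit (z • (1 : V →L[ℂ] V) - (H - (E : ℂ) • 1)))
    (hz2 : IsUnit (z • (1 : V →L[ℂ] V) + (H - (E : ℂ) • 1)))
    (Ghp Gpp Ghh Gph : Matrix (Fin d) (Fin d) ℂ)
    (hGhp : ∀ i j : Fin d, Ghp i j =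
      ⟪Φ, ((a i * Ring.inverse (z • (1 : V →L[ℂ] V) - (H - (E : ℂ) • 1)) *
          adjoint (a j)) Φ)⟫_ℂ +
      ⟪Φ, ((adjoint (a j) * Ring.inverse (z • (1 : V →L[ℂ] V) + (H - (E : ℂ) • 1)) *
          a i) Φ)⟫_ℂ)
    (hGpp : ∀ i j : Fin d, Gpp i j =
      ⟪Φ, ((adjoint (a i) * Ring.inverse (z • (1 : V →L[ℂ] V) - (H - (E : ℂ) • 1)) *
          adjoint (a j)) Φ)⟫_ℂ +
      ⟪Φ, ((adjoint (a j) * Ring.inverse (z • (1 : V →L[ℂ] V) + (H - (E : ℂ) • 1)) *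
          adjoint (a i)) Φ)⟫_ℂ)
    (hGhh : ∀ i j : Fin d, Ghh i j =
      ⟪Φ, ((a i * Ring.inverse (z • (1 : V →L[ℂ] V) - (H - (E : ℂ) • 1)) *
          a j) Φ)⟫_ℂ +
      ⟪Φ, ((a j * Ring.inverse (z • (1 : V →L[ℂ] V) + (H - (E : ℂ) • 1)) *
          a i) Φ)⟫_ℂ)
    (hGph : ∀ i j : Fin d, Gph i j =
      ⟪Φ, ((adjoint (a i) * Ring.inverse (z • (1 : V →L[ℂ] V) - (H - (E : ℂ) • 1)) *
          a j) Φ)⟫_ℂ +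
      ⟪Φ, ((a j * Ring.inverse (z • (1 : V →L[ℂ] V) + (H - (E : ℂ) • 1)) *
          adjoint (a i)) Φ)⟫_ℂ)
    (j : Fin d) (hj : p ≤ (j : ℕ)) (i : Fin d) :
    (-(Ghp * Δ) + Ghh * (z • (1 : Matrix (Fin d) (Fin d) ℂ) + h.transpose)) i j
      = 0 := by
  classical
  set A : V →L[ℂ] V := z • (1 : V →L[ℂ] V) - (H - (E : ℂ) • 1) with hAdef
  set B : V →L[ℂ] V := z • (1 : V →L[ℂ] V) + (H - (E : ℂ) • 1) with hBdef
  set RA : V →L[ℂ] V := Ring.inverse A with hRAdef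
  set RB : V →L[ℂ] V := Ring.inverse B with hRBdef
  have hRAA : RA * A = 1 := Ring.inverse_mul_cancel A hz1
  have hBRB : B * RB = 1 := Ring.mul_inverse_cancel B hz2
  -- basic CAR consequences
  have hanti : ∀ k l : Fin d, a k * a l = -(a l * a k) := fun k l =>
    eq_neg_of_add_eq_zero_left (hcar1 k l)
  have hmix : ∀ k l : Fin d,
      a k * adjoint (a l) = (if k = l then (1 : V →L[ℂ] V) else 0) - adjoint (a l) * a k :=
    fun k l => eq_sub_of_add_eq (hcar2 k l)
  have hΔ' : ∀ k l : Fin d, Δ k l = -Δ l k := by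
    intro k l
    have := congrFun (congrFun hΔ l) k
    simpa [Matrix.transpose_apply] using this
  -- commutator of a j with elementary terms
  have keyNA : ∀ k l : Fin d, a j * (adjoint (a k) * a l) - (adjoint (a k) * a l) * a j
      = if j = k then a l else 0 := by
    intro k l
    have e1 := hmix j k
    have e2 := hanti j l
    calc a j * (adjoint (a k) * a l) - (adjoint (a k) * a l) * a j
        = ((if j = k then (1 : V →L[ℂ] V) else 0) - adjoint (a k) * a j) * a l
          - (adjoint (a k) * a l) * a j := by rw [← mul_assoc, e1]
      _ = (if j = k then (1 : V →L[ℂ] V) else 0) * a l - adjoint (a k) * (a j * a l)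
          - adjoint (a k) * (a l * a j) := by noncomm_ring
      _ = (if j = k then (1 : V →L[ℂ] V) else 0) * a l := by rw [e2]; noncomm_ring
      _ = if j = k then a l else 0 := by split_ifs <;> simp
  have keyA : ∀ k l : Fin d,
      a j * (adjoint (a k) * adjoint (a l)) - (adjoint (a k) * adjoint (a l)) * a j
      = (if j = k then adjoint (a l) else 0) - (if j = l then adjoint (a k) else 0) := by
    intro k l
    have e1 := hmix j k
    have e2 := hmix j l
    calc a j * (adjoint (a k) * adjoint (a l)) - (adjoint (a k) * adjoint (a l)) * a j
        = ((if j = k then (1 : V →L[ℂ] V) else 0) - adjoint (a k) * a j) * adjoint (a l)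
          - (adjoint (a k) * adjoint (a l)) * a j := by rw [← mul_assoc, e1]
      _ = (if j = k then (1 : V →L[ℂ] V) else 0) * adjoint (a l)
          - adjoint (a k) * (a j * adjoint (a l))
          - (adjoint (a k) * adjoint (a l)) * a j := by noncomm_ring
      _ = (if j = k then (1 : V →L[ℂ] V) else 0) * adjoint (a l)
          - adjoint (a k) * (if j = l then (1 : V →L[ℂ] V) else 0) := by rw [e2]; noncomm_ring
      _ = (if j = k then adjoint (a l) else 0) - (if j = l then adjoint (a k) else 0) := by
          split_ifs <;> simp
  have keyAd : ∀ k l : Fin d, a j * (a l * a k) - (a l * a k) * a j = 0 := by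
    intro k l
    have e1 := hanti j l
    have e2 := hanti j k
    calc a j * (a l * a k) - (a l * a k) * a j
        = (-(a l * a j)) * a k - (a l * a k) * a j := by rw [← mul_assoc, e1]
      _ = -(a l * (a j * a k)) - (a l * a k) * a j := by noncomm_ring
      _ = -(a l * (-(a k * a j))) - (a l * a k) * a j := by rw [e2]
      _ = 0 := by noncomm_ring
  -- commutators with the pieces of H
  have hcommNA : a j * HNA - HNA * a j = ∑ k, h j k • a k := by
    calc a j * HNA - HNA * a j
        = ∑ k, ∑ l, h k l • (a j * (adjoint (a k) * a l) - (adjoint (a k) * a l) * a j) := by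
          rw [hHNA]
          simp [Finset.mul_sum, Finset.sum_mul, mul_smul_comm, smul_mul_assoc, smul_sub,
            Finset.sum_sub_distrib]
      _ = ∑ k, ∑ l, h k l • (if j = k then a l else 0) := by
          simp only [keyNA]
      _ = ∑ l, h j l • a l := by
          rw [Finset.sum_eq_single j]
          · simp
          · intro k _ hk
            simp [if_neg (Ne.symm hk)]
          · simp
  have hcommA : a j * HA - HA * a j = ∑ k, Δ j k • adjoint (a k) := by
    have expand : a j * HA - HA * a j
        = (1/2 : ℂ) • ∑ k, ∑ l, Δ k l •
            (a j * (adjoint (a k) * adjoint (a l)) - (adjoint (a k) * adjoint (a l)) * a j) := by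
      rw [hHA]
      simp [Finset.mul_sum, Finset.sum_mul, mul_smul_comm, smul_mul_assoc, smul_sub,
        Finset.sum_sub_distrib, Finset.smul_sum]
    rw [expand]
    have step : ∀ k : Fin d, ∑ l, Δ k l •
        (a j * (adjoint (a k) * adjoint (a l)) - (adjoint (a k) * adjoint (a l)) * a j)
        = ∑ l, Δ k l • ((if j = k then adjoint (a l) else 0) - (if j = l then adjoint (a k) else 0)) := by
      intro k
      apply Finset.sum_congr rfl
      intro l _
      rw [keyA]
    rw [Finset.sum_congr rfl fun k _ => step k]
    have split : ∑ k, ∑ l, Δ k l •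
        ((if j = k then adjoint (a l) else 0) - (if j = l then adjoint (a k) else 0))
        = (∑ l, Δ j l • adjoint (a l)) - ∑ k, Δ k j • adjoint (a k) := by
      rw [show (∑ k, ∑ l, Δ k l •
          ((if j = k then adjoint (a l) else 0) - (if j = l then adjoint (a k) else 0)))
          = (∑ k, ∑ l, Δ k l • (if j = k then adjoint (a l) else 0))
            - ∑ k, ∑ l, Δ k l • (if j = l then adjoint (a k) else 0) by
        simp [smul_sub, Finset.sum_sub_distrib]]
      congr 1
      · rw [Finset.sum_eq_single j]
        · simp
        · intro k _ hk
          simp [if_neg (Ne.symm hk)]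
        · simp
      · apply Finset.sum_congr rfl
        intro k _
        rw [Finset.sum_eq_single j]
        · simp
        · intro l _ hl
          simp [if_neg (Ne.symm hl)]
        · simp
    rw [split]
    have : (∑ l, Δ j l • adjoint (a l)) - (∑ k, Δ k j • adjoint (a k))
        = (2 : ℂ) • ∑ k, Δ j k • adjoint (a k) := by
      rw [show (∑ k, Δ k j • adjoint (a k)) = -∑ k, Δ j k • adjoint (a k) by
        rw [← Finset.sum_neg_distrib]
        apply Finset.sum_congr rfl
        intro k _
        rw [hΔ' k j, neg_smul]
        ]
      rw [sub_neg_eq_add, two_smul]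
    rw [this, smul_smul, show (1/2 : ℂ) * 2 = 1 by norm_num, one_smul]
  have hHAadj : adjoint HA = (1/2 : ℂ) • ∑ k, ∑ l, (starRingEnd ℂ) (Δ k l) • (a l * a k) := by
    rw [hHA, LinearIsometryEquiv.map_smulₛₗ, map_sum]
    congr 1
    · simp [Complex.ext_iff]
    · apply Finset.sum_congr rfl
      intro k _
      rw [map_sum]
      apply Finset.sum_congr rfl
      intro l _
      rw [LinearIsometryEquiv.map_smulₛₗ]
      congr 1
      rw [show adjoint (a k) * adjoint (a l) = adjoint (a k) ∘L adjoint (a l) from rfl,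
        adjoint_comp, adjoint_adjoint, adjoint_adjoint]
      rfl
  have hcommAd : a j * adjoint HA - adjoint HA * a j = 0 := by
    rw [hHAadj]
    have expand : a j * ((1/2 : ℂ) • ∑ k, ∑ l, (starRingEnd ℂ) (Δ k l) • (a l * a k))
        - ((1/2 : ℂ) • ∑ k, ∑ l, (starRingEnd ℂ) (Δ k l) • (a l * a k)) * a j
        = (1/2 : ℂ) • ∑ k, ∑ l, (starRingEnd ℂ) (Δ k l) •
            (a j * (a l * a k) - (a l * a k) * a j) := by
      simp [Finset.mul_sum, Finset.sum_mul, mul_smul_comm, smul_mul_assoc, smul_sub,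
        Finset.sum_sub_distrib, Finset.smul_sum]
    rw [expand]
    simp [keyAd]
  have hcommU : a j * Uop - Uop * a j = 0 := by
    rw [(hUcomm j hj).1, sub_self]
  have hcommH : a j * H - H * a j
      = (∑ k, h j k • a k) + ∑ k, Δ j k • adjoint (a k) := by
    rw [hHdef]
    calc a j * (HNA + HA + adjoint HA + Uop) - (HNA + HA + adjoint HA + Uop) * a j
        = (a j * HNA - HNA * a j) + (a j * HA - HA * a j)
          + (a j * adjoint HA - adjoint HA * a j) + (a j * Uop - Uop * a j) := by noncomm_ring
      _ = _ := by rw [hcommNA, hcommA, hcommAd, hcommU]; abel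
  -- self-adjointness of H - E
  have hHNAsa : adjoint HNA = HNA := by
    rw [hHNA, map_sum]
    rw [show (∑ k, adjoint (∑ l, h k l • (adjoint (a k) * a l)))
        = ∑ k, ∑ l, h l k • (adjoint (a l) * a k) by
      apply Finset.sum_congr rfl
      intro k _
      rw [map_sum]
      apply Finset.sum_congr rfl
      intro l _
      rw [LinearIsometryEquiv.map_smulₛₗ]
      rw [show adjoint (adjoint (a k) * a l) = adjoint (a l) * a k by
        rw [show adjoint (a k) * a l = adjoint (a k) ∘L a l from rfl, adjoint_comp,
          adjoint_adjoint]
        rfl]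
      congr 1
      simpa using hh.apply l k]
    rw [Finset.sum_comm]
  have hHsa : adjoint H = H := by
    have hU : adjoint Uop = Uop := by
      rw [← ContinuousLinearMap.star_eq_adjoint]
      exact hUsa
    rw [hHdef]
    simp only [map_add, hHNAsa, adjoint_adjoint, hU]
    abel
  have hadj1 : adjoint (1 : V →L[ℂ] V) = 1 := by
    rw [ContinuousLinearMap.one_def, adjoint_id]
  have hNsa : adjoint (H - (E : ℂ) • 1) = H - (E : ℂ) • 1 := by
    rw [map_sub, hHsa, LinearIsometryEquiv.map_smulₛₗ, hadj1]
    simp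
  have hNΦ : (H - (E : ℂ) • 1) Φ = 0 := by
    simp [ContinuousLinearMap.sub_apply, hE]
  have hφN : ∀ T : V →L[ℂ] V, ⟪Φ, ((T * (H - (E : ℂ) • 1)) Φ)⟫_ℂ = 0 := by
    intro T
    have : (T * (H - (E : ℂ) • 1)) Φ = T ((H - (E : ℂ) • 1) Φ) := rfl
    rw [this, hNΦ, map_zero, inner_zero_right]
  have hφN' : ∀ T : V →L[ℂ] V, ⟪Φ, (((H - (E : ℂ) • 1) * T) Φ)⟫_ℂ = 0 := by
    intro T
    have e : ((H - (E : ℂ) • 1) * T) Φ = (H - (E : ℂ) • 1) (T Φ) := rfl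
    rw [e, ← hNsa, adjoint_inner_right, hNΦ, inner_zero_left]
  -- the key operator X
  set X : V →L[ℂ] V :=
    (∑ k, (-Δ k j) • adjoint (a k))
      + ∑ k, ((z • (1 : Matrix (Fin d) (Fin d) ℂ) + h.transpose) k j) • a k with hXdef
  have hXval : X = z • a j + (a j * H - H * a j) := by
    rw [hXdef, hcommH]
    have e1 : (∑ k, (-Δ k j) • adjoint (a k)) = ∑ k, Δ j k • adjoint (a k) := by
      apply Finset.sum_congr rfl
      intro k _
      rw [hΔ' k j, neg_neg]
    have e2 : (∑ k, ((z • (1 : Matrix (Fin d) (Fin d) ℂ) + h.transpose) k j) • a k)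
        = z • a j + ∑ k, h j k • a k := by
      have : ∀ k : Fin d, ((z • (1 : Matrix (Fin d) (Fin d) ℂ) + h.transpose) k j)
          = (if k = j then z else 0) + h j k := by
        intro k
        by_cases hkj : k = j <;>
          simp [Matrix.add_apply, Matrix.smul_apply, Matrix.one_apply,
            Matrix.transpose_apply, hkj]
      rw [Finset.sum_congr rfl fun k _ => by rw [this k]]
      rw [show (∑ k, ((if k = j then z else 0) + h j k) • a k)
          = (∑ k, (if k = j then z else 0) • a k) + ∑ k, h j k • a k by
        rw [← Finset.sum_add_distrib]
        apply Finset.sum_congr rfl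
        intro k _
        rw [add_smul]]
      congr 1
      rw [Finset.sum_eq_single j]
      · simp
      · intro k _ hk
        simp [if_neg hk]
      · simp
    rw [e1, e2]
    abel
  have hXA : X = A * a j + a j * (H - (E : ℂ) • 1) := by
    rw [hXval, hAdef]
    simp only [sub_mul, add_mul, mul_sub, mul_add, smul_mul_assoc, mul_smul_comm, one_mul,
      mul_one, smul_sub, smul_add]
    abel
  have hXB : X = a j * B - (H - (E : ℂ) • 1) * a j := by
    rw [hXval, hBdef]
    simp only [sub_mul, add_mul, mul_sub, mul_add, smul_mul_assoc, mul_smul_comm, one_mul,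
      mul_one, smul_sub, smul_add]
    abel
  -- expansion lemmas
  have expand1 : ∀ (c : Fin d → ℂ) (b : Fin d → (V →L[ℂ] V)),
      ⟪Φ, ((a i * RA * (∑ k, c k • b k)) Φ)⟫_ℂ
        = ∑ k, c k * ⟪Φ, ((a i * RA * b k) Φ)⟫_ℂ := by
    intro c b
    rw [Finset.mul_sum]
    simp [mul_smul_comm, ContinuousLinearMap.sum_apply, inner_sum,
      ContinuousLinearMap.smul_apply, inner_smul_right]
  have expand2 : ∀ (c : Fin d → ℂ) (b : Fin d → (V →L[ℂ] V)),
      ⟪Φ, (((∑ k, c k • b k) * RB * a i) Φ)⟫_ℂ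
        = ∑ k, c k * ⟪Φ, ((b k * RB * a i) Φ)⟫_ℂ := by
    intro c b
    rw [Finset.sum_mul, Finset.sum_mul]
    simp [smul_mul_assoc, ContinuousLinearMap.sum_apply, inner_sum,
      ContinuousLinearMap.smul_apply, inner_smul_right]
  -- value of the two X inner products
  have hval1 : ⟪Φ, ((a i * RA * X) Φ)⟫_ℂ = ⟪Φ, ((a i * a j) Φ)⟫_ℂ := by
    have e : a i * RA * X = a i * a j + (a i * RA * a j) * (H - (E : ℂ) • 1) := by
      rw [hXA]
      rw [show a i * a j = a i * (RA * A) * a j by rw [hRAA]; noncomm_ring]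
      noncomm_ring
    rw [e]
    simp only [ContinuousLinearMap.add_apply, inner_add_right, hφN]
    ring
  have hval2 : ⟪Φ, ((X * RB * a i) Φ)⟫_ℂ = ⟪Φ, ((a j * a i) Φ)⟫_ℂ := by
    have e : X * RB * a i = a j * a i - (H - (E : ℂ) • 1) * (a j * RB * a i) := by
      rw [hXB]
      rw [show a j * a i = a j * (B * RB) * a i by rw [hBRB]; noncomm_ring]
      noncomm_ring
    rw [e]
    simp only [ContinuousLinearMap.sub_apply, inner_sub_right, hφN']
    ring
  have hsum0 : ⟪Φ, ((a i * RA * X) Φ)⟫_ℂ + ⟪Φ, ((X * RB * a i) Φ)⟫_ℂ = 0 := by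
    rw [hval1, hval2, ← inner_add_right]
    rw [show (a i * a j) Φ + (a j * a i) Φ = ((a i * a j + a j * a i) : V →L[ℂ] V) Φ from rfl]
    rw [hcar1 i j]
    simp
  -- assemble
  have expandX1 : ⟪Φ, ((a i * RA * X) Φ)⟫_ℂ
      = ∑ k, (-Δ k j) * ⟪Φ, ((a i * RA * adjoint (a k)) Φ)⟫_ℂ
        + ∑ k, ((z • (1 : Matrix (Fin d) (Fin d) ℂ) + h.transpose) k j)
            * ⟪Φ, ((a i * RA * a k) Φ)⟫_ℂ := by
    rw [hXdef, mul_add]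
    simp only [ContinuousLinearMap.add_apply, inner_add_right]
    rw [expand1 (fun k => -Δ k j) (fun k => adjoint (a k)),
      expand1 (fun k => (z • (1 : Matrix (Fin d) (Fin d) ℂ) + h.transpose) k j) (fun k => a k)]
  have expandX2 : ⟪Φ, ((X * RB * a i) Φ)⟫_ℂ
      = ∑ k, (-Δ k j) * ⟪Φ, ((adjoint (a k) * RB * a i) Φ)⟫_ℂ
        + ∑ k, ((z • (1 : Matrix (Fin d) (Fin d) ℂ) + h.transpose) k j)
            * ⟪Φ, ((a k * RB * a i) Φ)⟫_ℂ := by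
    rw [hXdef, add_mul, add_mul]
    simp only [ContinuousLinearMap.add_apply, inner_add_right]
    rw [expand2 (fun k => -Δ k j) (fun k => adjoint (a k)),
      expand2 (fun k => (z • (1 : Matrix (Fin d) (Fin d) ℂ) + h.transpose) k j) (fun k => a k)]
  have lhs_eq : (-(Ghp * Δ) + Ghh * (z • (1 : Matrix (Fin d) (Fin d) ℂ) + h.transpose)) i j
      = ⟪Φ, ((a i * RA * X) Φ)⟫_ℂ + ⟪Φ, ((X * RB * a i) Φ)⟫_ℂ := by
    rw [expandX1, expandX2, Matrix.add_apply, Matrix.neg_apply, Matrix.mul_apply,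
      Matrix.mul_apply]
    rw [← Finset.sum_neg_distrib, ← Finset.sum_add_distrib, ← Finset.sum_add_distrib,
      ← Finset.sum_add_distrib, ← Finset.sum_add_distrib]
    apply Finset.sum_congr rfl
    intro k _
    rw [hGhp i k, hGhh i k]
    ring
  rw [lhs_eq, hsum0]
end

section
/- For every j > p and every admissible z ∈ ℂ, the anomalous Green's functions satisfy [G^{pp}(z)(z·I_d − h) − G^{ph}(z)Δ†]_{ij} = 0 for all i = 1,…,d. -/
set_option linter.unusedSectionVars false
set_option maxHeartbeats 1000000
set_option synthInstance.maxHeartbeats 400000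

section CARAux
variable {R : Type*} [Ring R] [Algebra ℂ R] {d : ℕ}

lemma car_term_NA (A Ad : Fin d → R)
    (hc1' : ∀ i k : Fin d, Ad i * Ad k + Ad k * Ad i = 0)
    (hc2 : ∀ i k : Fin d, A i * Ad k + Ad k * A i = if i = k then 1 else 0)
    (i k j : Fin d) :
    (Ad i * A k) * Ad j - Ad j * (Ad i * A k) = if k = j then Ad i else 0 := by
  have e1 : A k * Ad j = (if k = j then (1 : R) else 0) - Ad j * A k :=
    eq_sub_of_add_eq (hc2 k j)
  have key : (Ad i * A k) * Ad j - Ad j * (Ad i * A k)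
      = Ad i * ((if k = j then (1 : R) else 0))
        - (Ad i * Ad j + Ad j * Ad i) * A k := by
    rw [mul_assoc, e1]; noncomm_ring
  rw [key, hc1' i j, zero_mul, sub_zero, mul_ite, mul_one, mul_zero]

lemma car_term_A (Ad : Fin d → R)
    (hc1' : ∀ i k : Fin d, Ad i * Ad k + Ad k * Ad i = 0)
    (i k j : Fin d) :
    (Ad i * Ad k) * Ad j = Ad j * (Ad i * Ad k) := by
  have e1 : Ad k * Ad j = -(Ad j * Ad k) := eq_neg_of_add_eq_zero_left (hc1' k j)
  have e2 : Ad i * Ad j = -(Ad j * Ad i) := eq_neg_of_add_eq_zero_left (hc1' i j)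
  calc (Ad i * Ad k) * Ad j = Ad i * (Ad k * Ad j) := mul_assoc _ _ _
    _ = Ad i * (-(Ad j * Ad k)) := by rw [e1]
    _ = -((Ad i * Ad j) * Ad k) := by noncomm_ring
    _ = -((-(Ad j * Ad i)) * Ad k) := by rw [e2]
    _ = Ad j * (Ad i * Ad k) := by noncomm_ring

lemma car_term_Astar (A Ad : Fin d → R)
    (hc2 : ∀ i k : Fin d, A i * Ad k + Ad k * A i = if i = k then 1 else 0)
    (i k j : Fin d) :
    (A k * A i) * Ad j - Ad j * (A k * A i)
      = (if i = j then A k else 0) - (if k = j then A i else 0) := by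
  have e1 : A i * Ad j = (if i = j then (1 : R) else 0) - Ad j * A i :=
    eq_sub_of_add_eq (hc2 i j)
  have key : (A k * A i) * Ad j - Ad j * (A k * A i)
      = A k * ((if i = j then (1 : R) else 0))
        - (A k * Ad j + Ad j * A k) * A i := by
    rw [mul_assoc, e1]; noncomm_ring
  rw [key, hc2 k j, mul_ite, mul_one, mul_zero, ite_mul, one_mul, zero_mul]

lemma car_comm_NA (A Ad : Fin d → R)
    (hc1' : ∀ i k : Fin d, Ad i * Ad k + Ad k * Ad i = 0)
    (hc2 : ∀ i k : Fin d, A i * Ad k + Ad k * A i = if i = k then 1 else 0)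
    (h : Matrix (Fin d) (Fin d) ℂ) (j : Fin d) :
    (∑ i, ∑ k, h i k • (Ad i * A k)) * Ad j
      - Ad j * (∑ i, ∑ k, h i k • (Ad i * A k)) = ∑ k, h k j • Ad k := by
  rw [Finset.sum_mul, Finset.mul_sum, ← Finset.sum_sub_distrib]
  calc ∑ i, ((∑ k, h i k • (Ad i * A k)) * Ad j - Ad j * ∑ k, h i k • (Ad i * A k))
      = ∑ i, h i j • Ad i := by
        refine Finset.sum_congr rfl fun i _ => ?_
        rw [Finset.sum_mul, Finset.mul_sum, ← Finset.sum_sub_distrib]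
        calc ∑ k, ((h i k • (Ad i * A k)) * Ad j - Ad j * (h i k • (Ad i * A k)))
            = ∑ k, h i k • ((Ad i * A k) * Ad j - Ad j * (Ad i * A k)) := by
              simp only [smul_mul_assoc, mul_smul_comm, ← smul_sub]
          _ = ∑ k, h i k • (if k = j then Ad i else 0) := by
              simp only [car_term_NA A Ad hc1' hc2]
          _ = h i j • Ad i := by
              simp [smul_ite, Finset.sum_ite_eq']
    _ = ∑ k, h k j • Ad k := rfl

lemma car_comm_A (Ad : Fin d → R)
    (hc1' : ∀ i k : Fin d, Ad i * Ad k + Ad k * Ad i = 0)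
    (Δ : Matrix (Fin d) (Fin d) ℂ) (j : Fin d) :
    (∑ i, ∑ k, Δ i k • (Ad i * Ad k)) * Ad j
      = Ad j * (∑ i, ∑ k, Δ i k • (Ad i * Ad k)) := by
  rw [Finset.sum_mul, Finset.mul_sum]
  refine Finset.sum_congr rfl fun i _ => ?_
  rw [Finset.sum_mul, Finset.mul_sum]
  refine Finset.sum_congr rfl fun k _ => ?_
  rw [smul_mul_assoc, mul_smul_comm, car_term_A Ad hc1']

lemma car_comm_Astar (A Ad : Fin d → R)
    (hc2 : ∀ i k : Fin d, A i * Ad k + Ad k * A i = if i = k then 1 else 0)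
    (c : Matrix (Fin d) (Fin d) ℂ) (j : Fin d) :
    (∑ i, ∑ k, c i k • (A k * A i)) * Ad j
      - Ad j * (∑ i, ∑ k, c i k • (A k * A i))
      = (∑ k, c j k • A k) - ∑ k, c k j • A k := by
  rw [Finset.sum_mul, Finset.mul_sum, ← Finset.sum_sub_distrib]
  have step : ∀ i : Fin d,
      (∑ k, c i k • (A k * A i)) * Ad j - Ad j * ∑ k, c i k • (A k * A i)
        = (∑ k, (if i = j then c i k • A k else 0)) - c i j • A i := by
    intro i
    rw [Finset.sum_mul, Finset.mul_sum, ← Finset.sum_sub_distrib]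
    calc ∑ k, ((c i k • (A k * A i)) * Ad j - Ad j * (c i k • (A k * A i)))
        = ∑ k, (c i k • ((A k * A i) * Ad j - Ad j * (A k * A i))) := by
          simp only [smul_mul_assoc, mul_smul_comm, ← smul_sub]
      _ = ∑ k, ((if i = j then c i k • A k else 0) - (if k = j then c i k • A i else 0)) := by
          refine Finset.sum_congr rfl fun k _ => ?_
          rw [car_term_Astar A Ad hc2, smul_sub, smul_ite, smul_ite, smul_zero]
      _ = (∑ k, (if i = j then c i k • A k else 0)) - c i j • A i := by
          rw [Finset.sum_sub_distrib]
          congr 1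
          simp [Finset.sum_ite_eq']
  calc ∑ i, ((∑ k, c i k • (A k * A i)) * Ad j - Ad j * ∑ k, c i k • (A k * A i))
      = ∑ i, ((∑ k, (if i = j then c i k • A k else 0)) - c i j • A i) :=
        Finset.sum_congr rfl fun i _ => step i
    _ = (∑ i, ∑ k, (if i = j then c i k • A k else 0)) - ∑ i, c i j • A i := by
        rw [Finset.sum_sub_distrib]
    _ = (∑ k, c j k • A k) - ∑ k, c k j • A k := by
        congr 1
        rw [Finset.sum_comm]
        simp [Finset.sum_ite_eq']

end CARAux

open scoped InnerProductSpace
open ContinuousLinearMap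

/-- **Anomalous column identity (particle-particle / particle-hole).**
For an anomalous impurity Hamiltonian with fragment `{1,…,p}` and any column
index `j` outside the fragment,
`[G^{pp}(z)(z·I − h) − G^{ph}(z)Δ†]_{ij} = 0` for all `i`. -/
theorem anomalous_pp_ph_column_identity
    (d p : ℕ) (V : Type*) [NormedAddCommGroup V] [InnerProductSpace ℂ V]
    [FiniteDimensional ℂ V]
    (a : Fin d → (V →L[ℂ] V))
    (hcar1 : ∀ i j : Fin d, a i * a j + a j * a i = 0)
    (hcar2 : ∀ i j : Fin d,
      a i * adjoint (a j) + adjoint (a j) * a i = if i = j then 1 else 0)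
    (h : Matrix (Fin d) (Fin d) ℂ) (hh : h.IsHermitian)
    (Δ : Matrix (Fin d) (Fin d) ℂ) (hΔ : Δ.transpose = -Δ)
    (HNA HA : V →L[ℂ] V)
    (hHNA : HNA = ∑ i, ∑ j, h i j • (adjoint (a i) * a j))
    (hHA : HA = (1/2 : ℂ) • ∑ i, ∑ j, Δ i j • (adjoint (a i) * adjoint (a j)))
    (Uop : V →L[ℂ] V) (hUsa : IsSelfAdjoint Uop)
    (hUcomm : ∀ j : Fin d, p ≤ (j : ℕ) →
      Uop * a j = a j * Uop ∧ Uop * adjoint (a j) = adjoint (a j) * Uop)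
    (H : V →L[ℂ] V) (hHdef : H = HNA + HA + adjoint HA + Uop)
    (Φ : V) (hΦ : ‖Φ‖ = 1) (E : ℝ) (hE : H Φ = (E : ℂ) • Φ)
    (z : ℂ)
    (hz1 : IsUnit (z • (1 : V →L[ℂ] V) - (H - (E : ℂ) • 1)))
    (hz2 : IsUnit (z • (1 : V →L[ℂ] V) + (H - (E : ℂ) • 1)))
    (Ghp Gpp Ghh Gph : Matrix (Fin d) (Fin d) ℂ)
    (hGhp : ∀ i j : Fin d, Ghp i j =
      ⟪Φ, ((a i * Ring.inverse (z • (1 : V →L[ℂ] V) - (H - (E : ℂ) • 1)) *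
          adjoint (a j)) Φ)⟫_ℂ +
      ⟪Φ, ((adjoint (a j) * Ring.inverse (z • (1 : V →L[ℂ] V) + (H - (E : ℂ) • 1)) *
          a i) Φ)⟫_ℂ)
    (hGpp : ∀ i j : Fin d, Gpp i j =
      ⟪Φ, ((adjoint (a i) * Ring.inverse (z • (1 : V →L[ℂ] V) - (H - (E : ℂ) • 1)) *
          adjoint (a j)) Φ)⟫_ℂ +
      ⟪Φ, ((adjoint (a j) * Ring.inverse (z • (1 : V →L[ℂ] V) + (H - (E : ℂ) • 1)) *
          adjoint (a i)) Φ)⟫_ℂ)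
    (hGhh : ∀ i j : Fin d, Ghh i j =
      ⟪Φ, ((a i * Ring.inverse (z • (1 : V →L[ℂ] V) - (H - (E : ℂ) • 1)) *
          a j) Φ)⟫_ℂ +
      ⟪Φ, ((a j * Ring.inverse (z • (1 : V →L[ℂ] V) + (H - (E : ℂ) • 1)) *
          a i) Φ)⟫_ℂ)
    (hGph : ∀ i j : Fin d, Gph i j =
      ⟪Φ, ((adjoint (a i) * Ring.inverse (z • (1 : V →L[ℂ] V) - (H - (E : ℂ) • 1)) *
          a j) Φ)⟫_ℂ +
      ⟪Φ, ((a j * Ring.inverse (z • (1 : V →L[ℂ] V) + (H - (E : ℂ) • 1)) *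
          adjoint (a i)) Φ)⟫_ℂ)
    (j : Fin d) (hj : p ≤ (j : ℕ)) (i : Fin d) :
    (Gpp * (z • (1 : Matrix (Fin d) (Fin d) ℂ) - h) - Gph * Δ.conjTranspose) i j
      = 0 := by
  classical
  set K : V →L[ℂ] V := H - (E : ℂ) • 1 with hKdef
  set Rm : V →L[ℂ] V := Ring.inverse (z • (1 : V →L[ℂ] V) - K) with hRm
  set Rp : V →L[ℂ] V := Ring.inverse (z • (1 : V →L[ℂ] V) + K) with hRp
  -- adjoints anticommute
  have hc1' : ∀ i k : Fin d,
      adjoint (a i) * adjoint (a k) + adjoint (a k) * adjoint (a i) = 0 := by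
    intro i k
    have := congrArg star (hcar1 k i)
    simpa [star_add, star_mul, ContinuousLinearMap.star_eq_adjoint] using this
  -- star of HA
  have hHAstar : adjoint HA
      = (1/2 : ℂ) • ∑ i, ∑ k, (starRingEnd ℂ) (Δ i k) • (a k * a i) := by
    rw [← ContinuousLinearMap.star_eq_adjoint, hHA]
    simp [star_smul, star_sum, star_mul, ← ContinuousLinearMap.star_eq_adjoint,
      star_star, Complex.star_def, map_div₀]
  -- hermiticity of entries
  have hconj : ∀ i' k : Fin d, (starRingEnd ℂ) (h i' k) = h k i' := by
    intro i' k
    have := congrFun (congrFun hh k) i'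
    simpa [Matrix.conjTranspose_apply, Complex.star_def] using this
  -- star HNA = HNA
  have hHNAstar : star HNA = HNA := by
    rw [hHNA]
    have : star (∑ i', ∑ k, h i' k • (adjoint (a i') * a k))
        = ∑ i', ∑ k, h k i' • (adjoint (a k) * a i') := by
      simp [star_sum, star_smul, star_mul, ← ContinuousLinearMap.star_eq_adjoint,
        star_star, Complex.star_def, hconj]
    rw [this, Finset.sum_comm]
  -- K is self-adjoint
  have hHsa : star H = H := by
    rw [hHdef, ← ContinuousLinearMap.star_eq_adjoint]
    rw [star_add, star_add, star_add, hHNAstar, star_star, hUsa.star_eq]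
    abel
  have hKsa : star K = K := by
    rw [hKdef, star_sub, hHsa, star_smul, star_one, Complex.star_def,
      Complex.conj_ofReal]
  have hK0 : K Φ = 0 := by
    rw [hKdef]
    simp [ContinuousLinearMap.sub_apply, hE]
  have hKinner : ∀ ψ : V, ⟪Φ, (K ψ)⟫_ℂ = 0 := by
    intro ψ
    rw [← ContinuousLinearMap.adjoint_inner_left, ← ContinuousLinearMap.star_eq_adjoint,
      hKsa, hK0, inner_zero_left]
  clear_value K Rm Rp
  -- the commutator
  set B : V →L[ℂ] V :=
    (∑ k, h k j • adjoint (a k)) + ∑ k, (starRingEnd ℂ) (Δ j k) • a k with hBdef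
  have antis : ∀ k : Fin d, (starRingEnd ℂ) (Δ k j) = -((starRingEnd ℂ) (Δ j k)) := by
    intro k
    have h1 : Δ k j = -(Δ j k) := by
      have := congrFun (congrFun hΔ j) k
      simpa [Matrix.transpose_apply, Matrix.neg_apply] using this
    rw [h1, map_neg]
  have p1 : HNA * adjoint (a j) - adjoint (a j) * HNA = ∑ k, h k j • adjoint (a k) := by
    rw [hHNA]
    exact car_comm_NA a (fun i' => adjoint (a i')) hc1' hcar2 h j
  have p2 : HA * adjoint (a j) - adjoint (a j) * HA = 0 := by
    have c2 : (∑ i', ∑ k, Δ i' k • (adjoint (a i') * adjoint (a k))) * adjoint (a j)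
        = adjoint (a j) * ∑ i', ∑ k, Δ i' k • (adjoint (a i') * adjoint (a k)) :=
      car_comm_A (fun i' => adjoint (a i')) hc1' Δ j
    rw [hHA, smul_mul_assoc, mul_smul_comm, c2, sub_self]
  have p3 : adjoint HA * adjoint (a j) - adjoint (a j) * adjoint HA
      = ∑ k, (starRingEnd ℂ) (Δ j k) • a k := by
    have c3 : (∑ i', ∑ k, (starRingEnd ℂ) (Δ i' k) • (a k * a i')) * adjoint (a j)
        - adjoint (a j) * ∑ i', ∑ k, (starRingEnd ℂ) (Δ i' k) • (a k * a i')
        = (∑ k, (starRingEnd ℂ) (Δ j k) • a k) - ∑ k, (starRingEnd ℂ) (Δ k j) • a k :=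
      car_comm_Astar a (fun i' => adjoint (a i')) hcar2
        (fun i' k => (starRingEnd ℂ) (Δ i' k)) j
    have neg : (∑ k, (starRingEnd ℂ) (Δ k j) • a k)
        = -∑ k, (starRingEnd ℂ) (Δ j k) • a k := by
      rw [← Finset.sum_neg_distrib]
      refine Finset.sum_congr rfl fun k _ => ?_
      rw [antis k, neg_smul]
    rw [hHAstar, smul_mul_assoc, mul_smul_comm, ← smul_sub, c3, neg, sub_neg_eq_add,
      ← two_smul ℂ, smul_smul]
    norm_num
  have p4 : Uop * adjoint (a j) - adjoint (a j) * Uop = 0 := by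
    rw [(hUcomm j hj).2, sub_self]
  have hHcomm : H * adjoint (a j) - adjoint (a j) * H = B := by
    rw [hHdef, hBdef]
    have expand : (HNA + HA + adjoint HA + Uop) * adjoint (a j)
        - adjoint (a j) * (HNA + HA + adjoint HA + Uop)
        = (HNA * adjoint (a j) - adjoint (a j) * HNA)
          + ((HA * adjoint (a j) - adjoint (a j) * HA)
            + ((adjoint HA * adjoint (a j) - adjoint (a j) * adjoint HA)
              + (Uop * adjoint (a j) - adjoint (a j) * Uop))) := by
      noncomm_ring
    rw [expand, p1, p2, p3, p4, zero_add, add_zero]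
  have hKcomm : K * adjoint (a j) - adjoint (a j) * K = B := by
    rw [hKdef]
    have e : ((E : ℂ) • (1 : V →L[ℂ] V)) * adjoint (a j)
        = adjoint (a j) * ((E : ℂ) • (1 : V →L[ℂ] V)) := by
      rw [smul_mul_assoc, mul_smul_comm, one_mul, mul_one]
    have expand : (H - (E : ℂ) • (1 : V →L[ℂ] V)) * adjoint (a j)
        - adjoint (a j) * (H - (E : ℂ) • (1 : V →L[ℂ] V))
        = (H * adjoint (a j) - adjoint (a j) * H)
          - (((E : ℂ) • (1 : V →L[ℂ] V)) * adjoint (a j)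
            - adjoint (a j) * ((E : ℂ) • (1 : V →L[ℂ] V))) := by
      noncomm_ring
    rw [expand, e, sub_self, sub_zero, hHcomm]
  set C : V →L[ℂ] V := z • adjoint (a j) - B with hCdef
  clear_value C
  -- decompositions of C
  have hsm1 : z • adjoint (a j) = (z • (1 : V →L[ℂ] V)) * adjoint (a j) := by
    rw [smul_mul_assoc, one_mul]
  have hsm2 : z • adjoint (a j) = adjoint (a j) * (z • (1 : V →L[ℂ] V)) := by
    rw [mul_smul_comm, mul_one]
  have hC1 : C = (z • (1 : V →L[ℂ] V) - K) * adjoint (a j) + adjoint (a j) * K := by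
    rw [hCdef, ← hKcomm, sub_mul, hsm1]; abel
  have hC2 : C = adjoint (a j) * (z • (1 : V →L[ℂ] V) + K) - K * adjoint (a j) := by
    rw [hCdef, ← hKcomm, mul_add, hsm2]; abel
  -- resolvent cancellations
  have hRmK : Rm * ((z • (1 : V →L[ℂ] V) - K) * adjoint (a j)) = adjoint (a j) := by
    rw [hRm, ← mul_assoc, Ring.inverse_mul_cancel _ hz1, one_mul]
  have hRpK : (z • (1 : V →L[ℂ] V) + K) * Rp = 1 := by
    rw [hRp]; exact Ring.mul_inverse_cancel _ hz2
  -- evaluation of the two resolvent terms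
  have evalP : ⟪Φ, ((adjoint (a i) * Rm * C) Φ)⟫_ℂ
      = ⟪Φ, ((adjoint (a i) * adjoint (a j)) Φ)⟫_ℂ := by
    have opEq : adjoint (a i) * Rm * C
        = adjoint (a i) * adjoint (a j) + (adjoint (a i) * Rm * adjoint (a j)) * K := by
      rw [hC1, mul_add, mul_assoc (adjoint (a i)) Rm, hRmK]
      noncomm_ring
    rw [opEq]
    simp [ContinuousLinearMap.add_apply, ContinuousLinearMap.mul_apply, hK0]
  have evalQ : ⟪Φ, ((C * Rp * adjoint (a i)) Φ)⟫_ℂ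
      = ⟪Φ, ((adjoint (a j) * adjoint (a i)) Φ)⟫_ℂ := by
    have cancel : adjoint (a j) * (z • (1 : V →L[ℂ] V) + K) * Rp = adjoint (a j) := by
      rw [mul_assoc, hRpK, mul_one]
    have opEq : C * Rp * adjoint (a i)
        = adjoint (a j) * adjoint (a i) - K * (adjoint (a j) * Rp * adjoint (a i)) := by
      rw [hC2, sub_mul, sub_mul, cancel]
      noncomm_ring
    rw [opEq, ContinuousLinearMap.sub_apply, inner_sub_right]
    have : (K * (adjoint (a j) * Rp * adjoint (a i))) Φ
        = K ((adjoint (a j) * Rp * adjoint (a i)) Φ) := rfl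
    rw [this, hKinner, sub_zero]
  -- C as a matrix-coefficient combination
  have hCsum : C = (∑ k, ((z • (1 : Matrix (Fin d) (Fin d) ℂ) - h) k j) • adjoint (a k))
      - ∑ k, (Δ.conjTranspose k j) • a k := by
    rw [hCdef, hBdef]
    have e1 : (∑ k, ((z • (1 : Matrix (Fin d) (Fin d) ℂ) - h) k j) • adjoint (a k))
        = z • adjoint (a j) - ∑ k, h k j • adjoint (a k) := by
      simp [Matrix.sub_apply, Matrix.smul_apply, Matrix.one_apply, sub_smul,
        Finset.sum_sub_distrib, mul_ite, mul_one, mul_zero, ite_smul, zero_smul,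
        Finset.sum_ite_eq']
    have e2 : (∑ k, (Δ.conjTranspose k j) • a k)
        = ∑ k, (starRingEnd ℂ) (Δ j k) • a k := by
      simp [Matrix.conjTranspose_apply, Complex.star_def]
    rw [e1, e2, sub_sub]
  -- linear expansions
  have keyP : ⟪Φ, ((adjoint (a i) * Rm * C) Φ)⟫_ℂ
      = (∑ k, ((z • (1 : Matrix (Fin d) (Fin d) ℂ) - h) k j)
            * ⟪Φ, ((adjoint (a i) * Rm * adjoint (a k)) Φ)⟫_ℂ)
        - ∑ k, (Δ.conjTranspose k j) * ⟪Φ, ((adjoint (a i) * Rm * a k) Φ)⟫_ℂ := by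
    rw [hCsum, mul_sub]
    simp only [Finset.mul_sum, mul_smul_comm, ContinuousLinearMap.sub_apply,
      ContinuousLinearMap.sum_apply, ContinuousLinearMap.smul_apply,
      inner_sub_right, inner_sum, inner_smul_right]
  have keyQ : ⟪Φ, ((C * Rp * adjoint (a i)) Φ)⟫_ℂ
      = (∑ k, ((z • (1 : Matrix (Fin d) (Fin d) ℂ) - h) k j)
            * ⟪Φ, ((adjoint (a k) * Rp * adjoint (a i)) Φ)⟫_ℂ)
        - ∑ k, (Δ.conjTranspose k j) * ⟪Φ, ((a k * Rp * adjoint (a i)) Φ)⟫_ℂ := by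
    rw [hCsum, sub_mul, sub_mul]
    simp only [Finset.sum_mul, smul_mul_assoc, ContinuousLinearMap.sub_apply,
      ContinuousLinearMap.sum_apply, ContinuousLinearMap.smul_apply,
      inner_sub_right, inner_sum, inner_smul_right]
  -- final assembly
  rw [Matrix.sub_apply, Matrix.mul_apply, Matrix.mul_apply, ← Finset.sum_sub_distrib]
  calc ∑ k, (Gpp i k * (z • (1 : Matrix (Fin d) (Fin d) ℂ) - h) k j
        - Gph i k * Δ.conjTranspose k j)
      = ((∑ k, ((z • (1 : Matrix (Fin d) (Fin d) ℂ) - h) k j)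
            * ⟪Φ, ((adjoint (a i) * Rm * adjoint (a k)) Φ)⟫_ℂ)
          - ∑ k, (Δ.conjTranspose k j) * ⟪Φ, ((adjoint (a i) * Rm * a k) Φ)⟫_ℂ)
        + ((∑ k, ((z • (1 : Matrix (Fin d) (Fin d) ℂ) - h) k j)
            * ⟪Φ, ((adjoint (a k) * Rp * adjoint (a i)) Φ)⟫_ℂ)
          - ∑ k, (Δ.conjTranspose k j) * ⟪Φ, ((a k * Rp * adjoint (a i)) Φ)⟫_ℂ) := by
        rw [← Finset.sum_sub_distrib, ← Finset.sum_sub_distrib, ← Finset.sum_add_distrib]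
        refine Finset.sum_congr rfl fun k _ => ?_
        rw [hGpp i k, hGph i k]; ring
    _ = ⟪Φ, ((adjoint (a i) * Rm * C) Φ)⟫_ℂ + ⟪Φ, ((C * Rp * adjoint (a i)) Φ)⟫_ℂ := by
        rw [keyP, keyQ]
    _ = ⟪Φ, ((adjoint (a i) * adjoint (a j)) Φ)⟫_ℂ
          + ⟪Φ, ((adjoint (a j) * adjoint (a i)) Φ)⟫_ℂ := by rw [evalP, evalQ]
    _ = ⟪Φ, ((adjoint (a i) * adjoint (a j) + adjoint (a j) * adjoint (a i)) Φ)⟫_ℂ := by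
        rw [ContinuousLinearMap.add_apply, inner_add_right]
    _ = 0 := by rw [hc1' i j]; simp
end

section
/- Define the 2d×2d anomalous Green's function 𝐆(z) := [[G^{hp}(z), G^{hh}(z)],[G^{pp}(z), G^{ph}(z)]] and the 2d×2d Hermitian block matrix 𝐡 := [[h, Δ],[−conj(Δ), −hᵀ]]. Then for every admissible z at which 𝐆(z) is invertible, the anomalous self-energy 𝚺(z) := z·I_{2d} − 𝐡 − 𝐆(z)⁻¹ satisfies 𝚺_{ij}(z) = 0 unless both the row index i and the column index j lie in {1,…,p} ∪ {d+1,…,d+p}; i.e., 𝚺(z) vanishes outside the four p×p fragment blocks. -/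
/-!
Equation of motion. Put `K = Ĥ - E₀`, so that `K Φ₀ = 0`. Expanding `z (z ∓ K)⁻¹ = 1 ± K (z ∓ K)⁻¹`
inside `𝐆(z)` and letting `K` act on `Φ₀` turns `z 𝐆_{μν}` into the anticommutator
`⟨{e_μ, e_ν†}⟩ = δ_{μν}` plus the Green's function of `[e_μ, K]`, where `e` is the Nambu spinor.
Outside the fragment `Û` commutes with `e_μ` and the CAR give `[e_μ, Ĥ] = Σ_κ 𝐡_{μκ} e_κ`, so
row `μ` of `(z - 𝐡) 𝐆` is row `μ` of the identity; likewise, as `𝐡` is Hermitian, column `ν` of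
`𝐆 (z - 𝐡)`. Since `𝚺 = ((z - 𝐡) 𝐆 - 1) 𝐆⁻¹ = 𝐆⁻¹ (𝐆 (z - 𝐡) - 1)`, it vanishes on those rows
and columns.
-/

open scoped InnerProductSpace
open ContinuousLinearMap

attribute [local instance] LieRing.ofAssociativeRing

section CAR

variable {A : Type*} [Ring A]

theorem lie_mul_eq_anticomm (x y w : A) :
    ⁅x, y * w⁆ = (x * y + y * x) * w - y * (x * w + w * x) := by
  rw [Ring.lie_def]; noncomm_ring

theorem lie_sub_smul_one {R : Type*} [CommRing R] [Algebra R A] (x y : A) (t : R) :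
    ⁅x, y - t • 1⁆ = ⁅x, y⁆ := by
  simp only [Ring.lie_def, mul_sub, sub_mul, mul_smul_comm, smul_mul_assoc, mul_one, one_mul]
  abel

variable [StarRing A]

theorem star_lie_of_isSelfAdjoint (x : A) {K : A} (hK : IsSelfAdjoint K) :
    star ⁅x, K⁆ = ⁅K, star x⁆ := by
  simp only [Ring.lie_def, star_sub, star_mul, hK.star_eq]

variable [Algebra ℂ A] {d : ℕ} {c : Fin d → A}

noncomputable def bdgHamiltonian (c : Fin d → A) (h Δ : Matrix (Fin d) (Fin d) ℂ) (U : A) : A :=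
  ∑ k, ∑ l, h k l • (star (c k) * c l)
    + (1 / 2 : ℂ) • ∑ k, ∑ l, Δ k l • (star (c k) * star (c l))
    + star ((1 / 2 : ℂ) • ∑ k, ∑ l, Δ k l • (star (c k) * star (c l))) + U

theorem lie_sum_star_mul (hcar1 : ∀ i j, c i * c j + c j * c i = 0)
    (hcar2 : ∀ i j, c i * star (c j) + star (c j) * c i = if i = j then 1 else 0)
    (h : Matrix (Fin d) (Fin d) ℂ) (i : Fin d) :
    ⁅c i, ∑ k, ∑ l, h k l • (star (c k) * c l)⁆ = ∑ l, h i l • c l := by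
  simp only [lie_sum, lie_smul, lie_mul_eq_anticomm, hcar1, hcar2, mul_zero, sub_zero,
    ite_mul, one_mul, zero_mul, smul_ite, smul_zero]
  simp

theorem lie_sum_star_mul_star
    (hcar2 : ∀ i j, c i * star (c j) + star (c j) * c i = if i = j then 1 else 0)
    {Δ : Matrix (Fin d) (Fin d) ℂ} (hΔ : Δ.transpose = -Δ) (i : Fin d) :
    ⁅c i, (1 / 2 : ℂ) • ∑ k, ∑ l, Δ k l • (star (c k) * star (c l))⁆
      = ∑ l, Δ i l • star (c l) := by
  have hΔ' : ∀ k, Δ k i = -Δ i k := fun k => by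
    simpa using congrFun (congrFun hΔ i) k
  simp only [lie_sum, lie_smul, lie_mul_eq_anticomm, hcar2, ite_mul, one_mul, zero_mul,
    mul_ite, mul_one, mul_zero, smul_sub, smul_ite, smul_zero, Finset.sum_sub_distrib]
  simp [hΔ', ← two_smul ℂ, smul_smul]

variable [StarModule ℂ A]

theorem lie_star_sum_star_mul_star (hcar1 : ∀ i j, c i * c j + c j * c i = 0)
    (Δ : Matrix (Fin d) (Fin d) ℂ) (i : Fin d) :
    ⁅c i, star ((1 / 2 : ℂ) • ∑ k, ∑ l, Δ k l • (star (c k) * star (c l)))⁆ = 0 := by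
  simp only [star_smul, star_sum, star_mul, star_star, lie_smul, lie_sum, lie_mul_eq_anticomm,
    hcar1, zero_mul, mul_zero, sub_zero, smul_zero, Finset.sum_const_zero]

theorem lie_bdgHamiltonian (hcar1 : ∀ i j, c i * c j + c j * c i = 0)
    (hcar2 : ∀ i j, c i * star (c j) + star (c j) * c i = if i = j then 1 else 0)
    (h : Matrix (Fin d) (Fin d) ℂ) {Δ : Matrix (Fin d) (Fin d) ℂ} (hΔ : Δ.transpose = -Δ)
    {U : A} {i : Fin d} (hU : ⁅c i, U⁆ = 0) :
    ⁅c i, bdgHamiltonian c h Δ U⁆ = ∑ l, h i l • c l + ∑ l, Δ i l • star (c l) := by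
  rw [bdgHamiltonian, lie_add, lie_add, lie_add, lie_sum_star_mul hcar1 hcar2,
    lie_sum_star_mul_star hcar2 hΔ, lie_star_sum_star_mul_star hcar1, hU, add_zero, add_zero]

theorem isSelfAdjoint_bdgHamiltonian {h : Matrix (Fin d) (Fin d) ℂ} (hh : h.IsHermitian)
    (Δ : Matrix (Fin d) (Fin d) ℂ) {U : A} (hU : IsSelfAdjoint U) :
    IsSelfAdjoint (bdgHamiltonian c h Δ U) := by
  have hnumber : IsSelfAdjoint (∑ k, ∑ l, h k l • (star (c k) * c l)) := by
    simp only [IsSelfAdjoint, star_sum, star_smul, star_mul, star_star]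
    rw [Finset.sum_comm]
    simp only [hh.apply]
  rw [bdgHamiltonian, add_assoc (∑ k, _)]
  exact (hnumber.add (IsSelfAdjoint.add_star_self _)).add hU

end CAR

section Nambu

def nambu {A : Type*} [Star A] {d : ℕ} (c : Fin d → A) : Fin d ⊕ Fin d → A :=
  Sum.elim c fun i => star (c i)

/-- The Bogoliubov–de Gennes matrix, `𝐡` in the paper. -/
def bdgMatrix {d : ℕ} (h Δ : Matrix (Fin d) (Fin d) ℂ) :
    Matrix (Fin d ⊕ Fin d) (Fin d ⊕ Fin d) ℂ :=
  Matrix.fromBlocks h Δ (-(Δ.map (starRingEnd ℂ))) (-h.transpose)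

theorem bdgMatrix_isHermitian {d : ℕ} {h Δ : Matrix (Fin d) (Fin d) ℂ} (hh : h.IsHermitian)
    (hΔ : Δ.transpose = -Δ) : (bdgMatrix h Δ).IsHermitian := by
  refine hh.fromBlocks ?_ hh.transpose.neg
  rw [Matrix.conjTranspose, hΔ]
  ext
  simp

variable {A : Type*} [Ring A] [StarRing A] {d : ℕ} {c : Fin d → A}

theorem nambu_anticomm (hcar1 : ∀ i j, c i * c j + c j * c i = 0)
    (hcar2 : ∀ i j, c i * star (c j) + star (c j) * c i = if i = j then 1 else 0)
    (μ ν : Fin d ⊕ Fin d) :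
    nambu c μ * star (nambu c ν) + star (nambu c ν) * nambu c μ = if μ = ν then 1 else 0 := by
  rcases μ with i | i <;> rcases ν with j | j
  · simp [nambu, hcar2]
  · simp [nambu, hcar1]
  · simpa [nambu, add_comm] using congrArg star (hcar1 j i)
  · simpa [nambu, add_comm, eq_comm] using hcar2 j i

variable [Algebra ℂ A] [StarModule ℂ A]

theorem lie_nambu_eq_sum {H : A} (hH : IsSelfAdjoint H) {h Δ : Matrix (Fin d) (Fin d) ℂ}
    (hh : h.IsHermitian) {i : Fin d}
    (hi : ⁅c i, H⁆ = ∑ l, h i l • c l + ∑ l, Δ i l • star (c l)) :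
    ⁅nambu c (.inl i), H⁆ = ∑ κ, bdgMatrix h Δ (.inl i) κ • nambu c κ ∧
      ⁅nambu c (.inr i), H⁆ = ∑ κ, bdgMatrix h Δ (.inr i) κ • nambu c κ := by
  refine ⟨by simpa [nambu, bdgMatrix] using hi, ?_⟩
  have : ⁅star (c i), H⁆ = -star ⁅c i, H⁆ := by
    rw [star_lie_of_isSelfAdjoint _ hH, lie_skew]
  simp only [nambu, bdgMatrix, Fintype.sum_sum_type, Sum.elim_inr, Sum.elim_inl,
    Matrix.fromBlocks_apply₂₁, Matrix.fromBlocks_apply₂₂, this, hi]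
  simp [star_sum, star_smul, ← hh.apply i, add_comm]

theorem lie_nambu_bdgHamiltonian (hcar1 : ∀ i j, c i * c j + c j * c i = 0)
    (hcar2 : ∀ i j, c i * star (c j) + star (c j) * c i = if i = j then 1 else 0)
    {h Δ : Matrix (Fin d) (Fin d) ℂ} (hh : h.IsHermitian) (hΔ : Δ.transpose = -Δ)
    {U : A} (hUsa : IsSelfAdjoint U) {P : Fin d → Prop} (hU : ∀ i, ¬ P i → ⁅c i, U⁆ = 0)
    {μ : Fin d ⊕ Fin d} (hμ : ¬ Sum.elim P P μ) :
    ⁅nambu c μ, bdgHamiltonian c h Δ U⁆ = ∑ κ, bdgMatrix h Δ μ κ • nambu c κ := by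
  have hH := isSelfAdjoint_bdgHamiltonian (c := c) hh Δ hUsa
  rcases μ with i | i
  · exact (lie_nambu_eq_sum hH hh (lie_bdgHamiltonian hcar1 hcar2 h hΔ (hU i hμ))).1
  · exact (lie_nambu_eq_sum hH hh (lie_bdgHamiltonian hcar1 hcar2 h hΔ (hU i hμ))).2

end Nambu

section Resolvent

variable {R A : Type*} [CommRing R] [Ring A] [Algebra R A] {z : R} {K : A}

theorem smul_inverse_sub_eq_one_add_mul_inverse (hz : IsUnit (z • 1 - K)) :
    z • Ring.inverse (z • 1 - K) = 1 + K * Ring.inverse (z • 1 - K) := by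
  have := Ring.mul_inverse_cancel _ hz
  rw [sub_mul, smul_mul_assoc, one_mul, sub_eq_iff_eq_add] at this
  rw [this, add_comm]

theorem smul_inverse_sub_eq_one_add_inverse_mul (hz : IsUnit (z • 1 - K)) :
    z • Ring.inverse (z • 1 - K) = 1 + Ring.inverse (z • 1 - K) * K := by
  have := Ring.inverse_mul_cancel _ hz
  rw [mul_sub, mul_smul_comm, mul_one, sub_eq_iff_eq_add] at this
  rw [this, add_comm]

end Resolvent

section Green

variable {V : Type*} [NormedAddCommGroup V] [InnerProductSpace ℂ V] {Φ : V} {K : V →L[ℂ] V} {z : ℂ}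

theorem smul_inner_resolvent_eq_lie_right (hKΦ : K Φ = 0) (hz : IsUnit (z • 1 - K))
    (X Y : V →L[ℂ] V) :
    z * ⟪Φ, (X * Ring.inverse (z • 1 - K) * Y) Φ⟫_ℂ
      = ⟪Φ, (X * Y) Φ⟫_ℂ + ⟪Φ, (X * Ring.inverse (z • 1 - K) * ⁅K, Y⁆) Φ⟫_ℂ := by
  have hzR := smul_inverse_sub_eq_one_add_inverse_mul hz
  set R := Ring.inverse (z • 1 - K)
  clear_value R
  calc z * ⟪Φ, (X * R * Y) Φ⟫_ℂ = ⟪Φ, (X * (z • R) * Y) Φ⟫_ℂ := by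
        rw [mul_smul_comm, smul_mul_assoc, smul_apply, inner_smul_right]
    _ = ⟪Φ, (X * Y + X * R * ⁅K, Y⁆ + X * R * Y * K) Φ⟫_ℂ := by
        rw [hzR, Ring.lie_def]; congr 2; noncomm_ring
    _ = _ := by simp [hKΦ]

variable [CompleteSpace V]

noncomputable def green (Φ : V) (K : V →L[ℂ] V) (z : ℂ) (X Y : V →L[ℂ] V) : ℂ :=
  ⟪Φ, (X * Ring.inverse (z • 1 - K) * star Y) Φ⟫_ℂ
    + ⟪Φ, (star Y * Ring.inverse (z • 1 + K) * X) Φ⟫_ℂ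

theorem smul_inner_resolvent_eq_lie_left (hK : IsSelfAdjoint K) (hKΦ : K Φ = 0)
    (hz : IsUnit (z • 1 - K)) (X Y : V →L[ℂ] V) :
    z * ⟪Φ, (X * Ring.inverse (z • 1 - K) * Y) Φ⟫_ℂ
      = ⟪Φ, (X * Y) Φ⟫_ℂ + ⟪Φ, (⁅X, K⁆ * Ring.inverse (z • 1 - K) * Y) Φ⟫_ℂ := by
  have hzR := smul_inverse_sub_eq_one_add_mul_inverse hz
  set R := Ring.inverse (z • 1 - K)
  clear_value R
  have hKR : ⟪Φ, (K * (X * R * Y)) Φ⟫_ℂ = 0 := by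
    rw [← inner_zero_left ((X * R * Y) Φ), ← hKΦ]
    exact (hK.isSymmetric _ _).symm
  calc z * ⟪Φ, (X * R * Y) Φ⟫_ℂ = ⟪Φ, (X * (z • R) * Y) Φ⟫_ℂ := by
        rw [mul_smul_comm, smul_mul_assoc, smul_apply, inner_smul_right]
    _ = ⟪Φ, (X * Y + ⁅X, K⁆ * R * Y + K * (X * R * Y)) Φ⟫_ℂ := by
        rw [hzR, Ring.lie_def]; congr 2; noncomm_ring
    _ = _ := by rw [add_apply, add_apply, inner_add_right, inner_add_right, hKR, add_zero]

theorem green_sum_smul_left {ι : Type*} [Fintype ι] (f : ι → ℂ) (X : ι → V →L[ℂ] V)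
    (Y : V →L[ℂ] V) :
    green Φ K z (∑ κ, f κ • X κ) Y = ∑ κ, f κ * green Φ K z (X κ) Y := by
  simp only [green, Finset.mul_sum, Finset.sum_mul, mul_smul_comm, smul_mul_assoc, sum_apply,
    smul_apply, inner_sum, inner_smul_right, mul_add, Finset.sum_add_distrib]

theorem green_sum_smul_right {ι : Type*} [Fintype ι] (f : ι → ℂ) (X : V →L[ℂ] V)
    (Y : ι → V →L[ℂ] V) :
    green Φ K z X (∑ κ, f κ • Y κ) = ∑ κ, star (f κ) * green Φ K z X (Y κ) := by
  simp only [green, star_sum, star_smul, Finset.mul_sum, Finset.sum_mul, mul_smul_comm,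
    smul_mul_assoc, sum_apply, smul_apply, inner_sum, inner_smul_right, mul_add,
    Finset.sum_add_distrib]

variable (hK : IsSelfAdjoint K) (hKΦ : K Φ = 0) (hz₁ : IsUnit (z • 1 - K))
  (hz₂ : IsUnit (z • 1 + K))
include hK hKΦ hz₁ hz₂

theorem smul_green_eq_lie_left (X Y : V →L[ℂ] V) :
    z * green Φ K z X Y = ⟪Φ, (X * star Y + star Y * X) Φ⟫_ℂ + green Φ K z ⁅X, K⁆ Y := by
  -- `(z + K)⁻¹` is the resolvent of `-K`
  rw [← sub_neg_eq_add] at hz₂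
  have hminus := smul_inner_resolvent_eq_lie_right (neg_eq_zero.mpr hKΦ) hz₂ (star Y) X
  rw [sub_neg_eq_add, neg_lie, lie_skew] at hminus
  rw [green, green, mul_add, smul_inner_resolvent_eq_lie_left hK hKΦ hz₁, hminus, add_apply,
    inner_add_right]
  ring

theorem smul_green_eq_lie_right (X Y : V →L[ℂ] V) :
    z * green Φ K z X Y = ⟪Φ, (X * star Y + star Y * X) Φ⟫_ℂ + green Φ K z X ⁅Y, K⁆ := by
  rw [← sub_neg_eq_add] at hz₂
  have hminus :=
    smul_inner_resolvent_eq_lie_left hK.neg (show (-K) Φ = 0 by simp [hKΦ]) hz₂ (star Y) X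
  rw [sub_neg_eq_add, lie_neg, lie_skew] at hminus
  rw [green, green, mul_add, smul_inner_resolvent_eq_lie_right hKΦ hz₁, hminus, add_apply,
    inner_add_right, star_lie_of_isSelfAdjoint _ hK]
  ring

end Green

section GreenMatrix

variable {V : Type*} [NormedAddCommGroup V] [InnerProductSpace ℂ V] [CompleteSpace V]
  {ι : Type*} [Fintype ι] [DecidableEq ι]

/-- `greenMatrix Φ₀ (Ĥ - E₀) z (nambu a)` is the anomalous Green's function `𝐆(z)`. -/
noncomputable def greenMatrix (Φ : V) (K : V →L[ℂ] V) (z : ℂ) (e : ι → V →L[ℂ] V) :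
    Matrix ι ι ℂ :=
  Matrix.of fun μ ν => green Φ K z (e μ) (e ν)

variable {Φ : V} {K : V →L[ℂ] V} {z : ℂ} {e : ι → V →L[ℂ] V} {M : Matrix ι ι ℂ}
  (hK : IsSelfAdjoint K) (hKΦ : K Φ = 0) (hz₁ : IsUnit (z • 1 - K)) (hz₂ : IsUnit (z • 1 + K))
include hK hKΦ hz₁ hz₂

theorem smul_one_sub_mul_greenMatrix_apply {μ : ι}
    (hanti : ∀ ν, ⟪Φ, (e μ * star (e ν) + star (e ν) * e μ) Φ⟫_ℂ = (1 : Matrix ι ι ℂ) μ ν)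
    (hlie : ⁅e μ, K⁆ = ∑ κ, M μ κ • e κ) (ν : ι) :
    ((z • 1 - M) * greenMatrix Φ K z e) μ ν = (1 : Matrix ι ι ℂ) μ ν := by
  have := smul_green_eq_lie_left hK hKΦ hz₁ hz₂ (e μ) (e ν)
  rw [hlie, green_sum_smul_left, hanti] at this
  rw [Matrix.sub_mul, Matrix.smul_mul, Matrix.one_mul, Matrix.sub_apply, Matrix.smul_apply,
    Matrix.mul_apply]
  simp only [greenMatrix, Matrix.of_apply, smul_eq_mul, this, add_sub_cancel_right]

theorem greenMatrix_mul_smul_one_sub_apply (hM : M.IsHermitian) {ν : ι}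
    (hanti : ∀ μ, ⟪Φ, (e μ * star (e ν) + star (e ν) * e μ) Φ⟫_ℂ = (1 : Matrix ι ι ℂ) μ ν)
    (hlie : ⁅e ν, K⁆ = ∑ κ, M ν κ • e κ) (μ : ι) :
    (greenMatrix Φ K z e * (z • 1 - M)) μ ν = (1 : Matrix ι ι ℂ) μ ν := by
  have := smul_green_eq_lie_right hK hKΦ hz₁ hz₂ (e μ) (e ν)
  rw [hlie, green_sum_smul_right, hanti] at this
  rw [Matrix.mul_sub, Matrix.mul_smul, Matrix.mul_one, Matrix.sub_apply, Matrix.smul_apply,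
    Matrix.mul_apply]
  simp only [greenMatrix, Matrix.of_apply, smul_eq_mul, this, hM.apply, mul_comm _ (M _ ν),
    add_sub_cancel_right]

end GreenMatrix

namespace Matrix

variable {n R : Type*} [Fintype n] [DecidableEq n] [CommRing R] {A M : Matrix n n R}

theorem sub_inv_apply_eq_zero_of_mul_row_eq_one (hM : IsUnit M.det) {i : n}
    (hi : ∀ j, (A * M) i j = (1 : Matrix n n R) i j) (j : n) : (A - M⁻¹) i j = 0 := by
  have hsplit : A - M⁻¹ = (A * M - 1) * M⁻¹ := by
    rw [Matrix.sub_mul, mul_nonsing_inv_cancel_right M A hM, Matrix.one_mul]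
  rw [hsplit, mul_apply]
  exact Finset.sum_eq_zero fun k _ => by rw [sub_apply, hi k, sub_self, zero_mul]

theorem sub_inv_apply_eq_zero_of_mul_col_eq_one (hM : IsUnit M.det) {j : n}
    (hj : ∀ i, (M * A) i j = (1 : Matrix n n R) i j) (i : n) : (A - M⁻¹) i j = 0 := by
  have hsplit : A - M⁻¹ = M⁻¹ * (M * A - 1) := by
    rw [Matrix.mul_sub, nonsing_inv_mul_cancel_left M A hM, Matrix.mul_one]
  rw [hsplit, mul_apply]
  exact Finset.sum_eq_zero fun k _ => by rw [sub_apply, hj k, sub_self, mul_zero]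

end Matrix

/-- **Sparsity of the anomalous self-energy (Theorem 3.4).**
With `𝐆(z) = [[G^{hp}, G^{hh}],[G^{pp}, G^{ph}]]` and
`𝐡 = [[h, Δ],[−conj(Δ), −hᵀ]]`, for every admissible `z` at which `𝐆(z)` is
invertible, the anomalous self-energy `𝚺(z) = z·I − 𝐡 − 𝐆(z)⁻¹` vanishes in
every entry whose row or column index lies outside the fragment indices
`{1,…,p} ∪ {d+1,…,d+p}`. -/
theorem anomalous_self_energy_sparsity
    (d p : ℕ) (V : Type*) [NormedAddCommGroup V] [InnerProductSpace ℂ V]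
    [FiniteDimensional ℂ V]
    (a : Fin d → (V →L[ℂ] V))
    (hcar1 : ∀ i j : Fin d, a i * a j + a j * a i = 0)
    (hcar2 : ∀ i j : Fin d,
      a i * adjoint (a j) + adjoint (a j) * a i = if i = j then 1 else 0)
    (h : Matrix (Fin d) (Fin d) ℂ) (hh : h.IsHermitian)
    (Δ : Matrix (Fin d) (Fin d) ℂ) (hΔ : Δ.transpose = -Δ)
    (HNA HA : V →L[ℂ] V)
    (hHNA : HNA = ∑ i, ∑ j, h i j • (adjoint (a i) * a j))
    (hHA : HA = (1/2 : ℂ) • ∑ i, ∑ j, Δ i j • (adjoint (a i) * adjoint (a j)))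
    (Uop : V →L[ℂ] V) (hUsa : IsSelfAdjoint Uop)
    (hUcomm : ∀ j : Fin d, p ≤ (j : ℕ) →
      Uop * a j = a j * Uop ∧ Uop * adjoint (a j) = adjoint (a j) * Uop)
    (H : V →L[ℂ] V) (hHdef : H = HNA + HA + adjoint HA + Uop)
    (Φ : V) (hΦ : ‖Φ‖ = 1) (E : ℝ) (hE : H Φ = (E : ℂ) • Φ)
    (z : ℂ)
    (hz1 : IsUnit (z • (1 : V →L[ℂ] V) - (H - (E : ℂ) • 1)))
    (hz2 : IsUnit (z • (1 : V →L[ℂ] V) + (H - (E : ℂ) • 1)))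
    (Ghp Gpp Ghh Gph : Matrix (Fin d) (Fin d) ℂ)
    (hGhp : ∀ i j : Fin d, Ghp i j =
      ⟪Φ, ((a i * Ring.inverse (z • (1 : V →L[ℂ] V) - (H - (E : ℂ) • 1)) *
          adjoint (a j)) Φ)⟫_ℂ +
      ⟪Φ, ((adjoint (a j) * Ring.inverse (z • (1 : V →L[ℂ] V) + (H - (E : ℂ) • 1)) *
          a i) Φ)⟫_ℂ)
    (hGpp : ∀ i j : Fin d, Gpp i j =
      ⟪Φ, ((adjoint (a i) * Ring.inverse (z • (1 : V →L[ℂ] V) - (H - (E : ℂ) • 1)) *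
          adjoint (a j)) Φ)⟫_ℂ +
      ⟪Φ, ((adjoint (a j) * Ring.inverse (z • (1 : V →L[ℂ] V) + (H - (E : ℂ) • 1)) *
          adjoint (a i)) Φ)⟫_ℂ)
    (hGhh : ∀ i j : Fin d, Ghh i j =
      ⟪Φ, ((a i * Ring.inverse (z • (1 : V →L[ℂ] V) - (H - (E : ℂ) • 1)) *
          a j) Φ)⟫_ℂ +
      ⟪Φ, ((a j * Ring.inverse (z • (1 : V →L[ℂ] V) + (H - (E : ℂ) • 1)) *
          a i) Φ)⟫_ℂ)
    (hGph : ∀ i j : Fin d, Gph i j =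
      ⟪Φ, ((adjoint (a i) * Ring.inverse (z • (1 : V →L[ℂ] V) - (H - (E : ℂ) • 1)) *
          a j) Φ)⟫_ℂ +
      ⟪Φ, ((a j * Ring.inverse (z • (1 : V →L[ℂ] V) + (H - (E : ℂ) • 1)) *
          adjoint (a i)) Φ)⟫_ℂ)
    (bG bh : Matrix (Fin d ⊕ Fin d) (Fin d ⊕ Fin d) ℂ)
    (hbG : bG = Matrix.fromBlocks Ghp Ghh Gpp Gph)
    (hbh : bh = Matrix.fromBlocks h Δ (-(Δ.map (starRingEnd ℂ))) (-h.transpose))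
    (hbGinv : IsUnit bG.det) :
    ∀ i j : Fin d ⊕ Fin d,
      ¬ (Sum.elim (fun k : Fin d => (k : ℕ) < p) (fun k : Fin d => (k : ℕ) < p) i ∧
         Sum.elim (fun k : Fin d => (k : ℕ) < p) (fun k : Fin d => (k : ℕ) < p) j) →
      (z • (1 : Matrix (Fin d ⊕ Fin d) (Fin d ⊕ Fin d) ℂ) - bh - bG⁻¹) i j = 0 := by
  set K := H - (E : ℂ) • 1
  replace hbh : bh = bdgMatrix h Δ := hbh
  have hH : H = bdgHamiltonian a h Δ Uop := by rw [hHdef, hHNA, hHA]; rfl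
  have hK : IsSelfAdjoint K :=
    (hH ▸ isSelfAdjoint_bdgHamiltonian hh Δ hUsa).sub (by simp [IsSelfAdjoint, star_smul])
  have hKΦ : K Φ = 0 := by simp [K, hE]
  have hG : bG = greenMatrix Φ K z (nambu a) := by
    ext (i | i) (j | j) <;>
      simp [hbG, hGhp, hGhh, hGpp, hGph, greenMatrix, green, nambu, star_eq_adjoint, K]
  have hanti : ∀ μ ν, ⟪Φ, (nambu a μ * star (nambu a ν) + star (nambu a ν) * nambu a μ) Φ⟫_ℂ
      = (1 : Matrix (Fin d ⊕ Fin d) (Fin d ⊕ Fin d) ℂ) μ ν := fun μ ν => by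
    rw [nambu_anticomm hcar1 hcar2, Matrix.one_apply]
    split_ifs <;> simp [inner_self_eq_norm_sq_to_K, hΦ]
  have hlie : ∀ μ, ¬ Sum.elim (fun k : Fin d => (k : ℕ) < p) (fun k : Fin d => (k : ℕ) < p) μ →
      ⁅nambu a μ, K⁆ = ∑ κ, bh μ κ • nambu a κ := fun μ hμ => by
    rw [lie_sub_smul_one, hH, hbh]
    exact lie_nambu_bdgHamiltonian hcar1 hcar2 hh hΔ hUsa
      (fun i hi => commute_iff_lie_eq.mp (hUcomm i (not_lt.mp hi)).1.symm) hμ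
  intro i j hij
  rw [hG] at hbGinv ⊢
  by_cases hi : Sum.elim (fun k : Fin d => (k : ℕ) < p) (fun k : Fin d => (k : ℕ) < p) i
  · exact Matrix.sub_inv_apply_eq_zero_of_mul_col_eq_one hbGinv
      (greenMatrix_mul_smul_one_sub_apply hK hKΦ hz1 hz2 (hbh ▸ bdgMatrix_isHermitian hh hΔ)
        (hanti · j) (hlie j fun hj => hij ⟨hi, hj⟩)) i
  · exact Matrix.sub_inv_apply_eq_zero_of_mul_row_eq_one hbGinv
      (smul_one_sub_mul_greenMatrix_apply hK hKΦ hz1 hz2 (hanti i) (hlie i hi)) j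
end
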